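/- arXiv:1708.08034 — 5 statements merged into one kernel-verified Lean document; each statement's English description precedes it below -/
import Mathlib

section
/- Let (Π_i)_{i=1}^∞ be a family of finite posets, each Π_i having a least element 0̂_i. Fix s(1),…,s(k) ≥ 1 and set n = s(1)+…+s(k). Let α : Π_{s(1)} × … × Π_{s(k)} → Π_n be an order embedding (with the componentwise order on the product) such that for every τ ∈ Π_n there exists a (necessarily unique) element τ* ∈ Π_n with {σ ∈ range(α) : σ ≤ τ} = {σ ∈ Π_n : σ ≤ τ*}, and such that τ* = τ whenever τ ∈ range(α). Let A be an associative ring, let G be any function from the disjoint union of the Π_i to A, and define F(π) = Σ_{σ ∈ Π_i, σ ≥ π} G(σ) for π ∈ Π_i. If F(π₁)F(π₂)⋯F(π_k) = F(α(π₁,…,π_k)) for all π_i ∈ Π_{s(i)}, then G(0̂_{s(1)})G(0̂_{s(2)})⋯G(0̂_{s(k)}) = Σ_{τ ∈ Π_n : τ* = 0̂_n} G(τ). -/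
open Finset
open scoped Classical

/-!
On the product poset put `H y = G y₁ ⋯ G y_k` and `K y = ∑_{τ* = α y} G τ`. Expanding the
product of the upper sums `F (x i)` shows that the upper sums of `H` are `∏ F (x i) = F (α x)`;
grouping the `τ ≥ α x` by the value `τ* = α y` (which forces `y ≥ x`) shows that `K` has the
same upper sums. A function on a finite poset is determined by its upper sums, so `H = K`, and
evaluating at the least element, which `α` sends to `0̂ₙ`, gives the theorem.
-/

theorem eq_of_forall_sum_filter_le_eq {β M : Type*} [PartialOrder β] [Fintype β]
    [AddCancelCommMonoid M] {H K : β → M}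
    (h : ∀ x, ∑ y ∈ univ.filter (x ≤ ·), H y = ∑ y ∈ univ.filter (x ≤ ·), K y) : H = K := by
  funext x
  induction x using WellFoundedGT.induction with
  | _ x ih =>
    have hsplit : univ.filter (x ≤ ·) = insert x (univ.filter (x < ·)) := by
      ext y; simp [le_iff_eq_or_lt, eq_comm]
    have hx := h x
    rw [hsplit, sum_insert (by simp), sum_insert (by simp),
      sum_congr rfl fun y hy => ih y (mem_filter.mp hy).2] at hx
    exact add_right_cancel hx

theorem sum_filter_le_ofFn_prod {A : Type*} [Semiring A] {k : ℕ} {Q : Fin k → Type*}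
    [∀ i, PartialOrder (Q i)] [∀ i, Fintype (Q i)] (f : ∀ i, Q i → A) (x : ∀ i, Q i) :
    ∑ y ∈ univ.filter (x ≤ ·), (List.ofFn fun i => f i (y i)).prod
      = (List.ofFn fun i => ∑ σ ∈ univ.filter (x i ≤ ·), f i σ).prod := by
  have hpi : univ.filter (x ≤ ·) = Fintype.piFinset fun i => univ.filter (x i ≤ ·) := by
    ext y; simp [Pi.le_def]
  rw [hpi]
  exact ((MultilinearMap.mkPiAlgebraFin ℕ k A).map_sum_finset f _).symm

theorem sum_filter_le_eq_sum_fiberwise {X Y M : Type*} [Preorder X] [Preorder Y] [Fintype X]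
    [Fintype Y] [AddCommMonoid M] (α : X ↪o Y) {c : Y → Y}
    (hc : ∀ τ σ, (σ ∈ Set.range α ∧ σ ≤ τ) ↔ σ ≤ c τ) (g : Y → M) (x : X) :
    ∑ τ ∈ univ.filter (α x ≤ ·), g τ
      = ∑ y ∈ univ.filter (x ≤ ·), ∑ τ ∈ univ.filter (c · = α y), g τ := by
  have hfib : ∀ τ, c τ ∈ (univ.filter (x ≤ ·)).map α.toEmbedding ↔ α x ≤ τ := by
    intro τ
    obtain ⟨⟨y, hy⟩, -⟩ := (hc τ (c τ)).mpr le_rfl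
    calc c τ ∈ (univ.filter (x ≤ ·)).map α.toEmbedding ↔ x ≤ y := by simp [← hy]
      _ ↔ α x ≤ c τ := by rw [← hy, α.le_iff_le]
      _ ↔ α x ≤ τ := by rw [← hc]; simp
  calc ∑ τ ∈ univ.filter (α x ≤ ·), g τ
      = ∑ τ ∈ univ.filter (c · ∈ (univ.filter (x ≤ ·)).map α.toEmbedding), g τ := by
        simp only [hfib]
    _ = ∑ σ ∈ (univ.filter (x ≤ ·)).map α.toEmbedding, ∑ τ ∈ univ.filter (c · = σ), g τ :=
        (sum_fiberwise_eq_sum_filter _ _ _ _).symm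
    _ = _ := sum_map _ _ _

theorem stmt0_general {A : Type*} [Ring A] {P : ℕ → Type*} [∀ i, PartialOrder (P i)]
    [∀ i, Fintype (P i)] (z : ∀ i, P i) (hz : ∀ i, ∀ x : P i, z i ≤ x)
    {k : ℕ} (s : Fin k → ℕ) (n : ℕ)
    (alpha : (∀ i, P (s i)) → P n)
    (hemb : ∀ x y : ∀ i, P (s i), alpha x ≤ alpha y ↔ x ≤ y)
    (tstar : P n → P n)
    (htstar : ∀ τ σ : P n, (σ ∈ Set.range alpha ∧ σ ≤ τ) ↔ σ ≤ tstar τ)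
    (G : ∀ i, P i → A)
    (hmul : ∀ x : ∀ i, P (s i),
      (List.ofFn fun i =>
        ∑ σ ∈ Finset.univ.filter (fun σ : P (s i) => x i ≤ σ), G (s i) σ).prod
      = ∑ σ ∈ Finset.univ.filter (fun σ : P n => alpha x ≤ σ), G n σ) :
    (List.ofFn fun i => G (s i) (z (s i))).prod
      = ∑ τ ∈ Finset.univ.filter (fun τ : P n => tstar τ = z n), G n τ := by
  let α := OrderEmbedding.ofMapLEIff alpha hemb
  have hbot : alpha (fun i => z (s i)) = z n := by
    obtain ⟨⟨w, hw⟩, -⟩ := (htstar (z n) (z n)).mpr (hz n _)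
    refine le_antisymm ?_ (hz n _)
    exact hw ▸ (hemb _ w).mpr fun i => hz _ _
  have hHK := eq_of_forall_sum_filter_le_eq
    (H := fun y => (List.ofFn fun i => G (s i) (y i)).prod)
    (K := fun y => ∑ τ ∈ univ.filter (tstar · = alpha y), G n τ) fun x => by
      rw [sum_filter_le_ofFn_prod, hmul x]
      exact sum_filter_le_eq_sum_fiberwise α htstar (G n) x
  simpa only [hbot] using congrFun hHK fun i => z (s i)

theorem stmt0 {A : Type*} [Ring A] {P : ℕ → Type*} [∀ i, PartialOrder (P i)]
    [∀ i, Fintype (P i)] (z : ∀ i, P i) (hz : ∀ i, ∀ x : P i, z i ≤ x)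
    {k : ℕ} (s : Fin k → ℕ) (hs : ∀ i, 1 ≤ s i) (n : ℕ) (hn : n = ∑ i, s i)
    (alpha : (∀ i, P (s i)) → P n)
    (hemb : ∀ x y : ∀ i, P (s i), alpha x ≤ alpha y ↔ x ≤ y)
    (hinj : Function.Injective alpha)
    (tstar : P n → P n)
    (htstar : ∀ τ σ : P n, (σ ∈ Set.range alpha ∧ σ ≤ τ) ↔ σ ≤ tstar τ)
    (htfix : ∀ τ ∈ Set.range alpha, tstar τ = τ)
    (G : ∀ i, P i → A)
    (hmul : ∀ x : ∀ i, P (s i),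
      (List.ofFn fun i =>
        ∑ σ ∈ Finset.univ.filter (fun σ : P (s i) => x i ≤ σ), G (s i) σ).prod
      = ∑ σ ∈ Finset.univ.filter (fun σ : P n => alpha x ≤ σ), G n σ) :
    (List.ofFn fun i => G (s i) (z (s i))).prod
      = ∑ τ ∈ Finset.univ.filter (fun τ : P n => tstar τ = z n), G n τ :=
  stmt0_general z hz s n alpha hemb tstar htstar G hmul
end

section
/- For any π ≤ σ in P_{1,2}(n), the Möbius function of the poset P_{1,2}(n) satisfies μ(π,σ) = (−1)^{|Pair(σ)| − |Pair(π)|}. -/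
open Finset
open scoped Classical

/-- A partition of `Fin n`, given by its (finite) set of blocks. -/
def IsPartition {n : ℕ} (P : Finset (Finset (Fin n))) : Prop :=
  (∀ B ∈ P, B.Nonempty) ∧ ∀ i : Fin n, ∃! B : Finset (Fin n), B ∈ P ∧ i ∈ B

/-- Refinement order on partitions: every block of `P` is contained in a block of `Q`. -/
def Refines {n : ℕ} (P Q : Finset (Finset (Fin n))) : Prop :=
  ∀ B ∈ P, ∃ C ∈ Q, B ⊆ C

/-- Incomplete matchings: partitions of `{1,…,n}` into blocks of size one or two. -/
abbrev P12 (n : ℕ) :=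
  {P : Finset (Finset (Fin n)) // IsPartition P ∧ ∀ B ∈ P, B.card = 1 ∨ B.card = 2}

variable {n : ℕ}

lemma block_unique {P : Finset (Finset (Fin n))} (hP : IsPartition P)
    {B C : Finset (Fin n)} {i : Fin n} (hB : B ∈ P) (hC : C ∈ P)
    (hiB : i ∈ B) (hiC : i ∈ C) : B = C := by
  obtain ⟨D, -, hu⟩ := hP.2 i
  rw [hu B ⟨hB, hiB⟩, hu C ⟨hC, hiC⟩]

lemma refines_refl (P : Finset (Finset (Fin n))) : Refines P P :=
  fun B hB => ⟨B, hB, subset_rfl⟩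

/-- pairs of τ are pairs of σ when τ ≤ σ. -/
lemma pairs_subset {τ σ : P12 n} (h : Refines τ.1 σ.1) :
    τ.1.filter (fun B => B.card = 2) ⊆ σ.1.filter (fun B => B.card = 2) := by
  intro B hB
  rw [mem_filter] at hB ⊢
  obtain ⟨C, hC, hBC⟩ := h B hB.1
  have : B = C := by
    apply Finset.eq_of_subset_of_card_le hBC
    rcases σ.2.2 C hC with h1 | h1 <;> omega
  exact ⟨this ▸ hC, hB.2⟩

lemma eq_of_pairs_eq {τ σ : P12 n} (h : Refines τ.1 σ.1)
    (hp : σ.1.filter (fun B => B.card = 2) ⊆ τ.1.filter (fun B => B.card = 2)) :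
    τ = σ := by
  apply Subtype.ext
  apply Finset.Subset.antisymm
  · intro B hB
    obtain ⟨C, hC, hBC⟩ := h B hB
    rcases σ.2.2 C hC with h1 | h1
    · have : B = C := Finset.eq_of_subset_of_card_le hBC (by
        have := Finset.card_pos.2 (τ.2.1.1 B hB); omega)
      exact this ▸ hC
    · -- C is a pair of σ, hence a pair of τ
      have hCt : C ∈ τ.1 := (Finset.mem_filter.1 (hp (Finset.mem_filter.2 ⟨hC, h1⟩))).1
      obtain ⟨i, hi⟩ := τ.2.1.1 B hB
      have : B = C := block_unique τ.2.1 hB hCt hi (hBC hi)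
      exact this ▸ hC
  · intro C hC
    rcases σ.2.2 C hC with h1 | h1
    · -- singleton block of σ
      obtain ⟨i, hi⟩ : ∃ i, C = {i} := Finset.card_eq_one.1 h1
      subst hi
      obtain ⟨B, ⟨hB, hiB⟩, -⟩ := τ.2.1.2 i
      obtain ⟨C', hC', hBC'⟩ := h B hB
      have : C' = {i} := block_unique σ.2.1 hC' hC (hBC' hiB) (Finset.mem_singleton_self i)
      have hB1 : B = {i} := by
        apply Finset.Subset.antisymm (this ▸ hBC')
        simpa using hiB
      exact hB1 ▸ hB
    · exact (Finset.mem_filter.1 (hp (Finset.mem_filter.2 ⟨hC, h1⟩))).1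

/-- Merge the singletons `{a}`, `{b}` into a pair. -/
def mergeB (a b : Fin n) (P : Finset (Finset (Fin n))) : Finset (Finset (Fin n)) :=
  insert {a, b} ((P.erase {a}).erase {b})

/-- Split the pair `{a,b}` into singletons. -/
def splitB (a b : Fin n) (P : Finset (Finset (Fin n))) : Finset (Finset (Fin n)) :=
  insert {a} (insert {b} (P.erase {a, b}))

variable {a b : Fin n} {P : Finset (Finset (Fin n))}

lemma sne1 (hab : a ≠ b) : ({a} : Finset (Fin n)) ≠ {b} := by
  simp [hab]

lemma sne2 (hab : a ≠ b) : ({a} : Finset (Fin n)) ≠ {a, b} := by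
  intro h
  have : b ∈ ({a} : Finset (Fin n)) := h ▸ (by simp)
  simp at this; exact hab this.symm

lemma sne3 (hab : a ≠ b) : ({b} : Finset (Fin n)) ≠ {a, b} := by
  intro h
  have : a ∈ ({b} : Finset (Fin n)) := h ▸ (by simp)
  simp at this; exact hab this

lemma mem_mergeB {C : Finset (Fin n)} :
    C ∈ mergeB a b P ↔ C = {a, b} ∨ (C ∈ P ∧ C ≠ {a} ∧ C ≠ {b}) := by
  simp [mergeB, Finset.mem_insert, Finset.mem_erase]; tauto

lemma mem_splitB {C : Finset (Fin n)} :
    C ∈ splitB a b P ↔ C = {a} ∨ C = {b} ∨ (C ∈ P ∧ C ≠ {a, b}) := by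
  simp [splitB, Finset.mem_insert, Finset.mem_erase]; tauto

lemma pair_notMem (hab : a ≠ b) (hP : IsPartition P) (ha : {a} ∈ P) :
    {a, b} ∉ P := fun h =>
  sne2 hab (block_unique (i := a) hP ha h (by simp) (by simp))

lemma singl_notMem_a (hab : a ≠ b) (hP : IsPartition P) (hab' : {a, b} ∈ P) :
    {a} ∉ P := fun h =>
  sne2 hab (block_unique (i := a) hP h hab' (by simp) (by simp))

lemma singl_notMem_b (hab : a ≠ b) (hP : IsPartition P) (hab' : {a, b} ∈ P) :
    {b} ∉ P := fun h =>
  sne3 hab (block_unique (i := b) hP h hab' (by simp) (by simp))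

lemma mergeB_isPartition (hab : a ≠ b) (hP : IsPartition P)
    (ha : {a} ∈ P) (hb : {b} ∈ P) : IsPartition (mergeB a b P) := by
  constructor
  · intro B hB
    rcases mem_mergeB.1 hB with h | ⟨h, -⟩
    · exact ⟨a, h ▸ (by simp)⟩
    · exact hP.1 B h
  · intro i
    by_cases hia : i = a ∨ i = b
    · refine ⟨{a, b}, ⟨mem_mergeB.2 (Or.inl rfl), by rcases hia with h | h <;> simp [h]⟩, ?_⟩
      rintro C ⟨hC, hiC⟩
      rcases mem_mergeB.1 hC with h | ⟨h, hC1, hC2⟩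
      · exact h
      · exfalso
        rcases hia with h' | h'
        · exact hC1 (block_unique (i := a) hP h ha (h' ▸ hiC) (by simp))
        · exact hC2 (block_unique (i := b) hP h hb (h' ▸ hiC) (by simp))
    · push_neg at hia
      obtain ⟨B, ⟨hB, hiB⟩, hu⟩ := hP.2 i
      have hBa : B ≠ {a} := fun h => hia.1 (by simpa [h] using hiB)
      have hBb : B ≠ {b} := fun h => hia.2 (by simpa [h] using hiB)
      refine ⟨B, ⟨mem_mergeB.2 (Or.inr ⟨hB, hBa, hBb⟩), hiB⟩, ?_⟩
      rintro C ⟨hC, hiC⟩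
      rcases mem_mergeB.1 hC with h | ⟨h, -⟩
      · exact absurd hiC (by simp [h, hia.1, hia.2])
      · exact hu C ⟨h, hiC⟩

lemma splitB_isPartition (hab : a ≠ b) (hP : IsPartition P)
    (hm : {a, b} ∈ P) : IsPartition (splitB a b P) := by
  constructor
  · intro B hB
    rcases mem_splitB.1 hB with h | h | ⟨h, -⟩
    · exact ⟨a, h ▸ (by simp)⟩
    · exact ⟨b, h ▸ (by simp)⟩
    · exact hP.1 B h
  · intro i
    by_cases hia : i = a
    · refine ⟨{a}, ⟨mem_splitB.2 (Or.inl rfl), by simp [hia]⟩, ?_⟩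
      rintro C ⟨hC, hiC⟩
      rcases mem_splitB.1 hC with h | h | ⟨h, hC1⟩
      · exact h
      · exact absurd hiC (by simp [h, hia, hab])
      · exact absurd (block_unique (i := a) hP h hm (hia ▸ hiC) (by simp)) hC1
    · by_cases hib : i = b
      · refine ⟨{b}, ⟨mem_splitB.2 (Or.inr (Or.inl rfl)), by simp [hib]⟩, ?_⟩
        rintro C ⟨hC, hiC⟩
        rcases mem_splitB.1 hC with h | h | ⟨h, hC1⟩
        · exact absurd hiC (by simp [h, hib]; exact fun h' => hab h'.symm)
        · exact h
        · exact absurd (block_unique (i := b) hP h hm (hib ▸ hiC) (by simp)) hC1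
      · obtain ⟨B, ⟨hB, hiB⟩, hu⟩ := hP.2 i
        have hBm : B ≠ {a, b} := fun h => by
          rcases (by simpa [h] using hiB : i = a ∨ i = b) with h' | h'
          exacts [hia h', hib h']
        refine ⟨B, ⟨mem_splitB.2 (Or.inr (Or.inr ⟨hB, hBm⟩)), hiB⟩, ?_⟩
        rintro C ⟨hC, hiC⟩
        rcases mem_splitB.1 hC with h | h | ⟨h, -⟩
        · exact absurd hiC (by simp [h, hia])
        · exact absurd hiC (by simp [h, hib])
        · exact hu C ⟨h, hiC⟩

lemma mergeB_sizes (hab : a ≠ b) (hs : ∀ B ∈ P, B.card = 1 ∨ B.card = 2) :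
    ∀ B ∈ mergeB a b P, B.card = 1 ∨ B.card = 2 := by
  intro B hB
  rcases mem_mergeB.1 hB with h | ⟨h, -⟩
  · right; rw [h]; exact Finset.card_pair hab
  · exact hs B h

lemma splitB_sizes (hs : ∀ B ∈ P, B.card = 1 ∨ B.card = 2) :
    ∀ B ∈ splitB a b P, B.card = 1 ∨ B.card = 2 := by
  intro B hB
  rcases mem_splitB.1 hB with h | h | ⟨h, -⟩
  · left; simp [h]
  · left; simp [h]
  · exact hs B h

lemma splitB_mergeB (hab : a ≠ b) (hP : IsPartition P)
    (ha : {a} ∈ P) (hb : {b} ∈ P) : splitB a b (mergeB a b P) = P := by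
  unfold splitB mergeB
  rw [Finset.erase_insert (by
    simp only [Finset.mem_erase]
    exact fun h => pair_notMem hab hP ha h.2.2),
    Finset.insert_erase (Finset.mem_erase.2 ⟨(sne1 hab).symm, hb⟩),
    Finset.insert_erase ha]

lemma mergeB_splitB (hab : a ≠ b) (hP : IsPartition P)
    (hm : {a, b} ∈ P) : mergeB a b (splitB a b P) = P := by
  unfold splitB mergeB
  rw [Finset.erase_insert (by
    simp only [Finset.mem_insert, Finset.mem_erase]
    rintro (h | ⟨-, h⟩)
    exacts [sne1 hab h, singl_notMem_a hab hP hm h]),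
    Finset.erase_insert (fun h => singl_notMem_b hab hP hm (Finset.mem_erase.1 h).2),
    Finset.insert_erase hm]

lemma mergeB_pairs (hab : a ≠ b) (hP : IsPartition P)
    (ha : {a} ∈ P) :
    ((mergeB a b P).filter fun B => B.card = 2).card
      = (P.filter fun B => B.card = 2).card + 1 := by
  have h2 : ({a, b} : Finset (Fin n)).card = 2 := Finset.card_pair hab
  unfold mergeB
  rw [Finset.filter_insert, if_pos h2, Finset.filter_erase, Finset.filter_erase,
    Finset.erase_eq_of_notMem (by simp), Finset.erase_eq_of_notMem (by simp),
    Finset.card_insert_of_notMem (by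
      simp only [Finset.mem_filter]
      exact fun h => pair_notMem hab hP ha h.1)]

/-- subset of a pair containing `a` but not `b` is `{a}`. -/
lemma eq_singleton_of_subset_pair {C : Finset (Fin n)} (hsub : C ⊆ {a, b})
    (haC : a ∈ C) (hbC : b ∉ C) : C = {a} := by
  apply Finset.Subset.antisymm
  · intro x hx
    rcases Finset.mem_insert.1 (hsub hx) with h | h
    · simp [h]
    · exact absurd hx (by simp at h; simp [h, hbC])
  · simpa using haC

lemma refines_mergeB_right {Q : Finset (Finset (Fin n))} (h : Refines Q P) :
    Refines Q (mergeB a b P) := by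
  intro B hB
  obtain ⟨C, hC, hsub⟩ := h B hB
  by_cases h1 : C = {a}
  · exact ⟨{a, b}, mem_mergeB.2 (Or.inl rfl), h1 ▸ hsub |>.trans (by simp)⟩
  by_cases h2 : C = {b}
  · exact ⟨{a, b}, mem_mergeB.2 (Or.inl rfl), h2 ▸ hsub |>.trans (by simp)⟩
  · exact ⟨C, mem_mergeB.2 (Or.inr ⟨hC, h1, h2⟩), hsub⟩

lemma refines_mergeB_left {σ : Finset (Finset (Fin n))} (h : Refines P σ)
    (hm : {a, b} ∈ σ) : Refines (mergeB a b P) σ := by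
  intro B hB
  rcases mem_mergeB.1 hB with h1 | ⟨h1, -⟩
  · exact ⟨{a, b}, hm, h1 ▸ subset_rfl⟩
  · exact h B h1

lemma refines_splitB_left {σ : Finset (Finset (Fin n))} (h : Refines P σ)
    (hm : {a, b} ∈ P) : Refines (splitB a b P) σ := by
  intro B hB
  obtain ⟨C, hC, hsub⟩ := h {a, b} hm
  rcases mem_splitB.1 hB with h1 | h1 | ⟨h1, -⟩
  · exact ⟨C, hC, h1 ▸ (by simpa using hsub (by simp : a ∈ ({a, b} : Finset (Fin n))))⟩
  · exact ⟨C, hC, h1 ▸ (by simpa using hsub (by simp : b ∈ ({a, b} : Finset (Fin n))))⟩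
  · exact h B h1

lemma refines_splitB_right {Q : Finset (Finset (Fin n))} (hab : a ≠ b)
    (hQ : IsPartition Q) (h : Refines Q P) (haQ : {a} ∈ Q) (hbQ : {b} ∈ Q) :
    Refines Q (splitB a b P) := by
  intro B hB
  obtain ⟨C, hC, hsub⟩ := h B hB
  by_cases h1 : C = {a, b}
  · obtain ⟨i, hi⟩ := hQ.1 B hB
    rcases Finset.mem_insert.1 (h1 ▸ hsub hi) with h2 | h2
    · have : B = {a} := block_unique (i := a) hQ hB haQ (h2 ▸ hi) (by simp)
      exact ⟨{a}, mem_splitB.2 (Or.inl rfl), this ▸ subset_rfl⟩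
    · simp only [Finset.mem_singleton] at h2
      have : B = {b} := block_unique (i := b) hQ hB hbQ (h2 ▸ hi) (by simp)
      exact ⟨{b}, mem_splitB.2 (Or.inr (Or.inl rfl)), this ▸ subset_rfl⟩
  · exact ⟨C, mem_splitB.2 (Or.inr (Or.inr ⟨hC, h1⟩)), hsub⟩

/-- If `π < σ` in `P12`, there is a pair of `σ` split into singletons in `π`. -/
lemma exists_split_pair {π σ : P12 n} (h : Refines π.1 σ.1) (hne : π ≠ σ) :
    ∃ a b : Fin n, a ≠ b ∧ {a, b} ∈ σ.1 ∧ {a} ∈ π.1 ∧ {b} ∈ π.1 := by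
  have hss : ¬ σ.1 ⊆ π.1 := by
    intro hs
    apply hne
    apply Subtype.ext
    apply Finset.Subset.antisymm _ hs
    intro B hB
    obtain ⟨C, hC, hsub⟩ := h B hB
    obtain ⟨i, hi⟩ := π.2.1.1 B hB
    have hBC : B = C := block_unique π.2.1 hB (hs hC) hi (hsub hi)
    rw [hBC]; exact hC
  obtain ⟨C, hC, hCn⟩ := Finset.not_subset.1 hss
  -- the block of π containing an element of C is a strict subset of C
  have key : ∀ i ∈ C, {i} ∈ π.1 := by
    intro i hi
    obtain ⟨B, ⟨hB, hiB⟩, -⟩ := π.2.1.2 i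
    obtain ⟨C', hC', hsub⟩ := h B hB
    have hCC : C' = C := block_unique σ.2.1 hC' hC (hsub hiB) hi
    have hBC : B ⊆ C := hCC ▸ hsub
    have hBne : B ≠ C := fun hh => hCn (hh ▸ hB)
    have : B = {i} := by
      apply Finset.Subset.antisymm _ (by simpa using hiB)
      intro x hx
      by_contra hxB
      simp only [Finset.mem_singleton] at hxB
      have h2 : C.card = 2 := by
        rcases σ.2.2 C hC with h1 | h1
        · exact absurd (Finset.eq_of_subset_of_card_le hBC (by
            have := Finset.card_pos.2 ⟨i, hiB⟩; omega)) hBne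
        · exact h1
      have hBcard : 2 ≤ B.card := by
        have : ({x, i} : Finset (Fin n)) ⊆ B := by
          intro y hy; rcases Finset.mem_insert.1 hy with h' | h'
          · exact h' ▸ hx
          · simp only [Finset.mem_singleton] at h'; exact h' ▸ hiB
        calc 2 = ({x, i} : Finset (Fin n)).card := (Finset.card_pair hxB).symm
          _ ≤ B.card := Finset.card_le_card this
      exact hBne (Finset.eq_of_subset_of_card_le hBC (by omega))
    exact this ▸ hB
  have h2 : C.card = 2 := by
    rcases σ.2.2 C hC with h1 | h1
    · obtain ⟨i, hi⟩ := Finset.card_eq_one.1 h1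
      exact absurd (hi ▸ key i (hi ▸ Finset.mem_singleton_self i)) (hi ▸ hCn)
    · exact h1
  obtain ⟨a, b, hab, hC2⟩ := Finset.card_eq_two.1 h2
  exact ⟨a, b, hab, hC2 ▸ hC, key a (by simp [hC2]), key b (by simp [hC2])⟩

/-- In the interval, if `{a,b} ∉ τ` then both singletons belong to `τ`. -/
lemma singletons_mem {π τ σ : P12 n} (hab : a ≠ b)
    (h1 : Refines π.1 τ.1) (h2 : Refines τ.1 σ.1) (hm : {a, b} ∈ σ.1)
    (haπ : {a} ∈ π.1) (hbπ : {b} ∈ π.1) (hnot : {a, b} ∉ τ.1) :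
    {a} ∈ τ.1 ∧ {b} ∈ τ.1 := by
  have key : ∀ i ∈ ({a, b} : Finset (Fin n)), {i} ∈ π.1 → {i} ∈ τ.1 := by
    intro i hiab hiπ
    obtain ⟨C, hC, hsub⟩ := h1 {i} hiπ
    obtain ⟨C', hC', hsub'⟩ := h2 C hC
    have hiC : i ∈ C := hsub (by simp)
    have : C' = {a, b} := block_unique σ.2.1 hC' hm (hsub' hiC) hiab
    have hCab : C ⊆ {a, b} := this ▸ hsub'
    have : C = {i} := by
      apply Finset.Subset.antisymm _ (by simpa using hiC)
      intro x hx
      simp only [Finset.mem_singleton]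
      by_contra hxi
      have hCeq : C = {a, b} := by
        apply Finset.eq_of_subset_of_card_le hCab
        rw [Finset.card_pair hab]
        have hsub2 : ({x, i} : Finset (Fin n)) ⊆ C := by
          intro y hy; rcases Finset.mem_insert.1 hy with h' | h'
          · exact h' ▸ hx
          · simp only [Finset.mem_singleton] at h'; exact h' ▸ hiC
        calc 2 = ({x, i} : Finset (Fin n)).card := (Finset.card_pair hxi).symm
          _ ≤ C.card := Finset.card_le_card hsub2
      exact hnot (hCeq ▸ hC)
    exact this ▸ hC
  exact ⟨key a (by simp) haπ, key b (by simp) hbπ⟩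

noncomputable def mergeP (a b : Fin n) (τ : P12 n) : P12 n :=
  if h : a ≠ b ∧ {a} ∈ τ.1 ∧ {b} ∈ τ.1 then
    ⟨mergeB a b τ.1, mergeB_isPartition h.1 τ.2.1 h.2.1 h.2.2, mergeB_sizes h.1 τ.2.2⟩
  else τ

noncomputable def splitP (a b : Fin n) (τ : P12 n) : P12 n :=
  if h : a ≠ b ∧ {a, b} ∈ τ.1 then
    ⟨splitB a b τ.1, splitB_isPartition h.1 τ.2.1 h.2, splitB_sizes τ.2.2⟩
  else τ

lemma sum_neg_one_pow_zero {π σ : P12 n} (h : Refines π.1 σ.1) (hne : π ≠ σ) :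
    ∑ τ ∈ Finset.univ.filter (fun τ : P12 n => Refines π.1 τ.1 ∧ Refines τ.1 σ.1),
      (-1 : ℤ) ^ (τ.1.filter fun B => B.card = 2).card = 0 := by
  classical
  obtain ⟨a, b, hab, hm, haπ, hbπ⟩ := exists_split_pair h hne
  set I := Finset.univ.filter (fun τ : P12 n => Refines π.1 τ.1 ∧ Refines τ.1 σ.1) with hI
  set p : P12 n → ℕ := fun τ => (τ.1.filter fun B => B.card = 2).card with hp
  -- τ ∈ S₀ has both singletons
  have hS0 : ∀ τ ∈ I.filter (fun τ => {a, b} ∉ τ.1), {a} ∈ τ.1 ∧ {b} ∈ τ.1 := by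
    intro τ hτ
    rw [Finset.mem_filter, hI, Finset.mem_filter] at hτ
    exact singletons_mem hab hτ.1.2.1 hτ.1.2.2 hm haπ hbπ hτ.2
  have key : ∑ τ ∈ I.filter (fun τ => {a, b} ∈ τ.1), (-1 : ℤ) ^ p τ
      = ∑ τ ∈ I.filter (fun τ => {a, b} ∉ τ.1), (-1 : ℤ) ^ p (mergeP a b τ) := by
    refine (Finset.sum_nbij' (mergeP a b) (splitP a b) ?_ ?_ ?_ ?_ ?_).symm
    · -- maps S₀ to S₁
      intro τ hτ
      obtain ⟨ha', hb'⟩ := hS0 τ hτ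
      rw [Finset.mem_filter, hI, Finset.mem_filter] at hτ
      rw [mergeP, dif_pos ⟨hab, ha', hb'⟩]
      rw [Finset.mem_filter, hI, Finset.mem_filter]
      exact ⟨⟨Finset.mem_univ _, refines_mergeB_right hτ.1.2.1,
        refines_mergeB_left hτ.1.2.2 hm⟩, mem_mergeB.2 (Or.inl rfl)⟩
    · -- maps S₁ to S₀
      intro τ hτ
      rw [Finset.mem_filter, hI, Finset.mem_filter] at hτ
      rw [splitP, dif_pos ⟨hab, hτ.2⟩]
      rw [Finset.mem_filter, hI, Finset.mem_filter]
      refine ⟨⟨Finset.mem_univ _,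
        refines_splitB_right hab π.2.1 hτ.1.2.1 haπ hbπ,
        refines_splitB_left hτ.1.2.2 hτ.2⟩, ?_⟩
      rw [mem_splitB]
      push_neg
      exact ⟨fun hh => sne2 hab hh.symm, fun hh => sne3 hab hh.symm, fun _ => rfl⟩
    · -- left inverse
      intro τ hτ
      obtain ⟨ha', hb'⟩ := hS0 τ hτ
      rw [mergeP, dif_pos ⟨hab, ha', hb'⟩]
      have hmem : {a, b} ∈ mergeB a b τ.1 := mem_mergeB.2 (Or.inl rfl)
      rw [splitP, dif_pos ⟨hab, hmem⟩]
      exact Subtype.ext (splitB_mergeB hab τ.2.1 ha' hb')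
    · -- right inverse
      intro τ hτ
      rw [Finset.mem_filter] at hτ
      rw [splitP, dif_pos ⟨hab, hτ.2⟩]
      have ha' : {a} ∈ splitB a b τ.1 := mem_splitB.2 (Or.inl rfl)
      have hb' : {b} ∈ splitB a b τ.1 := mem_splitB.2 (Or.inr (Or.inl rfl))
      rw [mergeP, dif_pos ⟨hab, ha', hb'⟩]
      exact Subtype.ext (mergeB_splitB hab τ.2.1 hτ.2)
    · intro τ hτ; rfl
  have key2 : ∀ τ ∈ I.filter (fun τ => {a, b} ∉ τ.1),
      (-1 : ℤ) ^ p (mergeP a b τ) = -(-1 : ℤ) ^ p τ := by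
    intro τ hτ
    obtain ⟨ha', hb'⟩ := hS0 τ hτ
    rw [mergeP, dif_pos ⟨hab, ha', hb'⟩]
    show (-1 : ℤ) ^ ((mergeB a b τ.1).filter fun B => B.card = 2).card = _
    rw [mergeB_pairs hab τ.2.1 ha', pow_succ]
    ring
  rw [← Finset.sum_filter_add_sum_filter_not I (fun τ => {a, b} ∈ τ.1), key,
    Finset.sum_congr rfl key2, Finset.sum_neg_distrib]
  ring

lemma neg_one_pow_sub' {x y : ℕ} (h : y ≤ x) :
    (-1 : ℤ) ^ (x - y) = (-1 : ℤ) ^ x * (-1 : ℤ) ^ y := by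
  have h1 : (-1 : ℤ) ^ (x - y) * (-1 : ℤ) ^ y = (-1 : ℤ) ^ x := by
    rw [← pow_add, Nat.sub_add_cancel h]
  have h2 : (-1 : ℤ) ^ y * (-1 : ℤ) ^ y = 1 := by
    rw [← pow_add, ← two_mul, pow_mul]; norm_num
  calc (-1 : ℤ) ^ (x - y) = (-1 : ℤ) ^ (x - y) * ((-1 : ℤ) ^ y * (-1 : ℤ) ^ y) := by
        rw [h2, mul_one]
    _ = (-1 : ℤ) ^ x * (-1 : ℤ) ^ y := by rw [← mul_assoc, h1]

theorem stmt1 (n : ℕ) (μ : P12 n → P12 n → ℤ)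
    (hmu1 : ∀ x, μ x x = 1)
    (hmu2 : ∀ x y : P12 n, Refines x.1 y.1 → x ≠ y →
      ∑ τ ∈ Finset.univ.filter (fun τ : P12 n => Refines x.1 τ.1 ∧ Refines τ.1 y.1),
        μ x τ = 0)
    (π σ : P12 n) (hle : Refines π.1 σ.1) :
    μ π σ = (-1) ^ ((σ.1.filter fun B => B.card = 2).card
        - (π.1.filter fun B => B.card = 2).card) := by
  classical
  set p : P12 n → ℕ := fun τ => (τ.1.filter fun B => B.card = 2).card with hp
  have H : ∀ m : ℕ, ∀ σ : P12 n, p σ ≤ m → Refines π.1 σ.1 →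
      μ π σ = (-1) ^ (p σ - p π) := by
    intro m
    induction m with
    | zero =>
      intro σ hm hle'
      have hσπ : σ.1.filter (fun B => B.card = 2) ⊆ π.1.filter (fun B => B.card = 2) := by
        rw [show σ.1.filter (fun B => B.card = 2) = ∅ from
          Finset.card_eq_zero.1 (Nat.le_zero.1 hm)]
        exact Finset.empty_subset _
      have : π = σ := eq_of_pairs_eq hle' hσπ
      rw [← this, hmu1, this, Nat.sub_self, pow_zero]
    | succ m ih =>
      intro σ' hm hle'
      by_cases hcase : π = σ'
      · rw [← hcase, hmu1, hcase, Nat.sub_self, pow_zero]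
      · set I := Finset.univ.filter
          (fun τ : P12 n => Refines π.1 τ.1 ∧ Refines τ.1 σ'.1) with hI
        have hσmem : σ' ∈ I := by
          rw [hI, Finset.mem_filter]
          exact ⟨Finset.mem_univ _, hle', refines_refl _⟩
        have hsum0 := hmu2 π σ' hle' hcase
        rw [← Finset.add_sum_erase I _ hσmem] at hsum0
        have hIH : ∀ τ ∈ I.erase σ', μ π τ = (-1) ^ (p τ - p π) := by
          intro τ hτ
          rw [Finset.mem_erase, hI, Finset.mem_filter] at hτ
          have hsub := pairs_subset hτ.2.2.2
          have hlt : p τ < p σ' := by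
            apply lt_of_le_of_ne (Finset.card_le_card hsub)
            intro heq
            exact hτ.1 (eq_of_pairs_eq hτ.2.2.2
              (Finset.eq_of_subset_of_card_le hsub heq.ge).symm.le)
          exact ih τ (by omega) hτ.2.2.1
        have hμ : μ π σ' = -∑ τ ∈ I.erase σ', μ π τ := by linarith
        rw [Finset.sum_congr rfl hIH] at hμ
        have hzero : ∑ τ ∈ I, (-1 : ℤ) ^ (p τ) = 0 := sum_neg_one_pow_zero hle' hcase
        rw [← Finset.add_sum_erase I _ hσmem] at hzero
        have hconv : ∀ τ ∈ I.erase σ', ((-1 : ℤ)) ^ (p τ - p π)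
            = (-1 : ℤ) ^ (p τ) * (-1 : ℤ) ^ (p π) := by
          intro τ hτ
          rw [Finset.mem_erase, hI, Finset.mem_filter] at hτ
          exact neg_one_pow_sub' (Finset.card_le_card (pairs_subset hτ.2.2.1))
        rw [Finset.sum_congr rfl hconv, ← Finset.sum_mul] at hμ
        have hs : ∑ τ ∈ I.erase σ', (-1 : ℤ) ^ (p τ) = -(-1 : ℤ) ^ (p σ') := by linarith
        rw [hs] at hμ
        rw [hμ, neg_one_pow_sub' (Finset.card_le_card (pairs_subset hle'))]
        ring
  exact H (p σ) σ le_rfl hle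
end

section
/- Let π ≤ σ in INC_{1,2}(n). Then the Möbius function of the poset INC_{1,2}(n) satisfies: μ(π,σ) = (−1)^{|Pair(σ)| − |Pair(π)|} if every two-element block of σ that is not a block of π is an outer block of σ, and μ(π,σ) = 0 otherwise. -/
open Finset
open scoped Classical

/-- A partition is non-crossing if there are no two distinct blocks `U, V` and
`i, k ∈ U`, `j, l ∈ V` with `i < j < k < l`. -/
def IsNoncrossing {n : ℕ} (P : Finset (Finset (Fin n))) : Prop :=
  ¬ ∃ U ∈ P, ∃ V ∈ P, U ≠ V ∧ ∃ i ∈ U, ∃ k ∈ U, ∃ j ∈ V, ∃ l ∈ V,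
      i < j ∧ j < k ∧ k < l

/-- A block `V` of `P` is outer if there are no block `U ≠ V` of `P` and
elements `i, j ∈ U` with `i < min V` and `max V < j`. -/
def IsOuter {n : ℕ} (P : Finset (Finset (Fin n))) (V : Finset (Fin n)) : Prop :=
  ¬ ∃ U ∈ P, U ≠ V ∧ ∃ i ∈ U, ∃ j ∈ U, ∀ x ∈ V, i < x ∧ x < j

/-- Incomplete non-crossing matchings: non-crossing partitions into blocks of size one
or two, all of whose singleton blocks are outer. -/
abbrev INC12 (n : ℕ) :=
  {P : Finset (Finset (Fin n)) // IsPartition P ∧ IsNoncrossing P ∧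
    (∀ B ∈ P, B.card = 1 ∨ B.card = 2) ∧ ∀ B ∈ P, B.card = 1 → IsOuter P B}

namespace INCAux

variable {n : ℕ}

/-- `W` is nested (strictly) inside `U`. -/
def Nes (W U : Finset (Fin n)) : Prop := ∃ i ∈ U, ∃ j ∈ U, ∀ x ∈ W, i < x ∧ x < j

lemma nes_mono {W W' U : Finset (Fin n)} (h : W' ⊆ W) (hn : Nes W U) : Nes W' U := by
  obtain ⟨i, hi, j, hj, hx⟩ := hn
  exact ⟨i, hi, j, hj, fun x hx' => hx x (h hx')⟩

lemma not_nes_self {W : Finset (Fin n)} : ¬ Nes W W := by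
  rintro ⟨i, hi, j, hj, hx⟩
  exact lt_irrefl i (hx i hi).1

lemma isOuter_iff {P : Finset (Finset (Fin n))} {V : Finset (Fin n)} :
    IsOuter P V ↔ ∀ U ∈ P, ¬ Nes V U := by
  constructor
  · intro h U hU hn
    rcases hn with ⟨i, hi, j, hj, hx⟩
    apply h
    refine ⟨U, hU, ?_, i, hi, j, hj, hx⟩
    rintro rfl
    exact lt_irrefl i (hx i hi).1
  · rintro h ⟨U, hU, _, i, hi, j, hj, hx⟩
    exact h U hU ⟨i, hi, j, hj, hx⟩

lemma not_nes_singleton_target {W : Finset (Fin n)} {q : Fin n} (hW : W.Nonempty) :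
    ¬ Nes W ({q} : Finset (Fin n)) := by
  rintro ⟨i, hi, j, hj, hx⟩
  obtain ⟨x, hx'⟩ := hW
  simp only [mem_singleton] at hi hj
  subst hi; subst hj
  exact lt_asymm (hx x hx').1 (hx x hx').2

lemma not_nes_of_mem {U : Finset (Fin n)} {p : Fin n} (hcard : U.card ≤ 2) (hp : p ∈ U) :
    ¬ Nes ({p} : Finset (Fin n)) U := by
  rintro ⟨i, hi, j, hj, hx⟩
  have h1 : i < p := (hx p (mem_singleton_self p)).1
  have h2 : p < j := (hx p (mem_singleton_self p)).2
  have : 3 ≤ U.card := by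
    have : ({i, p, j} : Finset (Fin n)) ⊆ U := by
      intro x hx'
      simp only [mem_insert, mem_singleton] at hx'
      rcases hx' with rfl | rfl | rfl <;> assumption
    calc 3 = ({i, p, j} : Finset (Fin n)).card := by
            rw [card_insert_of_notMem, card_insert_of_notMem, card_singleton]
            · simp only [mem_singleton]; exact ne_of_lt h2
            · simp only [mem_insert, mem_singleton]
              push_neg
              exact ⟨ne_of_lt h1, ne_of_lt (h1.trans h2)⟩
      _ ≤ U.card := card_le_card this
  omega

lemma block_disjoint {P : Finset (Finset (Fin n))} (hP : IsPartition P)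
    {B C : Finset (Fin n)} (hB : B ∈ P) (hC : C ∈ P) (hne : B ≠ C) : Disjoint B C := by
  rw [disjoint_left]
  intro p hpB hpC
  exact hne ((hP.2 p).unique ⟨hB, hpB⟩ ⟨hC, hpC⟩)

/-- The set of two-element blocks. -/
def prs (P : Finset (Finset (Fin n))) : Finset (Finset (Fin n)) :=
  P.filter fun B => B.card = 2

lemma mem_prs {P : Finset (Finset (Fin n))} {B : Finset (Fin n)} :
    B ∈ prs P ↔ B ∈ P ∧ B.card = 2 := mem_filter

lemma prs_subset {P : Finset (Finset (Fin n))} : prs P ⊆ P := filter_subset _ _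

lemma prs_mono {P Q : Finset (Finset (Fin n))} (hQ : ∀ B ∈ Q, B.card = 1 ∨ B.card = 2)
    (h : Refines P Q) : prs P ⊆ prs Q := by
  intro B hB
  rw [mem_prs] at hB ⊢
  obtain ⟨C, hC, hBC⟩ := h B hB.1
  have hcC : C.card ≤ 2 := by rcases hQ C hC with h1 | h1 <;> omega
  have : B = C := eq_of_subset_of_card_le hBC (by omega)
  subst this
  exact ⟨hC, hB.2⟩

lemma mem_of_prs_eq (τ ρ : INC12 n) (h : prs τ.1 = prs ρ.1) {B : Finset (Fin n)}
    (hB : B ∈ τ.1) : B ∈ ρ.1 := by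
  rcases τ.2.2.2.1 B hB with h1 | h2
  · -- B is a singleton {p}
    obtain ⟨p, rfl⟩ := Finset.card_eq_one.1 h1
    obtain ⟨C, ⟨hC, hpC⟩, _⟩ := ρ.2.1.2 p
    rcases ρ.2.2.2.1 C hC with hc1 | hc2
    · obtain ⟨q, rfl⟩ := Finset.card_eq_one.1 hc1
      simp only [mem_singleton] at hpC
      subst hpC
      exact hC
    · exfalso
      have hCτ : C ∈ τ.1 := prs_subset (h ▸ mem_prs.2 ⟨hC, hc2⟩)
      have : C = {p} := (τ.2.1.2 p).unique ⟨hCτ, hpC⟩ ⟨hB, mem_singleton_self p⟩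
      rw [this, card_singleton] at hc2
      omega
  · exact prs_subset (h ▸ mem_prs.2 ⟨hB, h2⟩)

lemma eq_of_prs_eq (τ ρ : INC12 n) (h : prs τ.1 = prs ρ.1) : τ = ρ := by
  apply Subtype.ext
  apply Finset.Subset.antisymm
  · exact fun B hB => mem_of_prs_eq τ ρ h hB
  · exact fun B hB => mem_of_prs_eq ρ τ h.symm hB

/-- Complete a set of pairs to a partition by adding singletons. -/
def part (S : Finset (Finset (Fin n))) : Finset (Finset (Fin n)) :=
  S ∪ (Finset.univ.filter fun i : Fin n => ∀ U ∈ S, i ∉ U).image fun i => ({i} : Finset (Fin n))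

lemma mem_part {S : Finset (Finset (Fin n))} {B : Finset (Fin n)} :
    B ∈ part S ↔ B ∈ S ∨ ∃ i : Fin n, (∀ U ∈ S, i ∉ U) ∧ B = ({i} : Finset (Fin n)) := by
  simp only [part, mem_union, mem_image, mem_filter, mem_univ, true_and]
  constructor
  · rintro (h | ⟨i, hi, rfl⟩)
    · exact Or.inl h
    · exact Or.inr ⟨i, hi, rfl⟩
  · rintro (h | ⟨i, hi, rfl⟩)
    · exact Or.inl h
    · exact Or.inr ⟨i, hi, rfl⟩

/-- If `W` is a block of a noncrossing partition into blocks of size ≤ 2, `U ≠ W` a block,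
`p ∈ W` and `{p}` is nested in `U`, then `W` is nested in `U`. -/
lemma nes_transfer (σ : INC12 n) {U W : Finset (Fin n)} (hU : U ∈ σ.1) (hW : W ∈ σ.1)
    (hne : U ≠ W) {p : Fin n} (hp : p ∈ W) (h : Nes ({p} : Finset (Fin n)) U) : Nes W U := by
  obtain ⟨i, hi, j, hj, hx⟩ := h
  have hip : i < p := (hx p (mem_singleton_self p)).1
  have hpj : p < j := (hx p (mem_singleton_self p)).2
  rcases σ.2.2.2.1 W hW with h1 | h2
  · obtain ⟨q, rfl⟩ := Finset.card_eq_one.1 h1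
    simp only [mem_singleton] at hp
    subst hp
    exact ⟨i, hi, j, hj, fun x hx' => by
      simp only [mem_singleton] at hx'; subst hx'; exact ⟨hip, hpj⟩⟩
  · obtain ⟨a, b, hab, hWab⟩ := Finset.card_eq_two.1 h2
    -- let w be the element of W other than p
    have hpW : p = a ∨ p = b := by
      rw [hWab] at hp; simpa using hp
    obtain ⟨w, hww, hWpw⟩ : ∃ w, w ≠ p ∧ W = {p, w} := by
      rcases hpW with rfl | rfl
      · exact ⟨b, fun hb => hab hb.symm, hWab⟩
      · exact ⟨a, fun ha => hab ha, by rw [hWab]; exact Finset.pair_comm a p⟩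
    have hdisj : Disjoint U W := block_disjoint σ.2.1 hU hW hne
    have hwW : w ∈ W := by rw [hWpw]; simp
    have hwU : w ∉ U := (disjoint_right.1 hdisj) hwW
    by_cases hcase : i < w ∧ w < j
    · refine ⟨i, hi, j, hj, fun x hx' => ?_⟩
      rw [hWpw] at hx'
      simp only [mem_insert, mem_singleton] at hx'
      rcases hx' with rfl | rfl
      · exact ⟨hip, hpj⟩
      · exact hcase
    · exfalso
      push_neg at hcase
      rcases lt_or_ge i w with hiw | hwi
      · -- j ≤ w, and w ≠ j so j < w : pattern i < p < j < w with U, W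
        have hjw : j < w := lt_of_le_of_ne (hcase hiw) (fun hj' => hwU (hj' ▸ hj))
        exact σ.2.2.1 ⟨U, hU, W, hW, hne, i, hi, j, hj, p, hp, w, hwW, hip, hpj, hjw⟩
      · -- w ≤ i, and w ≠ i so w < i : pattern w < i < p < j with W, U
        have hwi' : w < i := lt_of_le_of_ne hwi (fun hw' => hwU (hw' ▸ hi))
        exact σ.2.2.1 ⟨W, hW, U, hU, (Ne.symm hne), w, hwW, p, hp, i, hi, j, hj, hwi', hip, hpj⟩

/-- If `W` is a pair of `σ` but not of `τ ≤ σ`, then each element of `W` is a singleton of `τ`. -/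
lemma singleton_block (τ σ : INC12 n) (hle : Refines τ.1 σ.1) {W : Finset (Fin n)}
    (hW : W ∈ prs σ.1) (hWn : W ∉ prs τ.1) {p : Fin n} (hp : p ∈ W) :
    ({p} : Finset (Fin n)) ∈ τ.1 := by
  obtain ⟨C, ⟨hC, hpC⟩, _⟩ := τ.2.1.2 p
  obtain ⟨D, hD, hCD⟩ := hle C hC
  have hDW : D = W := (σ.2.1.2 p).unique ⟨hD, hCD hpC⟩ ⟨(mem_prs.1 hW).1, hp⟩
  rw [hDW] at hCD
  rcases τ.2.2.2.1 C hC with h1 | h2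
  · obtain ⟨q, rfl⟩ := Finset.card_eq_one.1 h1
    simp only [mem_singleton] at hpC
    subst hpC
    exact hC
  · exfalso
    have : C = W := eq_of_subset_of_card_le hCD (by rw [(mem_prs.1 hW).2, h2])
    exact hWn (this ▸ mem_prs.2 ⟨hC, h2⟩)

/-- The key admissibility/goodness condition on a set of pairs. -/
def Cond (π σ : INC12 n) (S : Finset (Finset (Fin n))) : Prop :=
  ∀ U ∈ S, ∀ W ∈ prs σ.1, W ∉ prs π.1 → ¬ Nes W U

lemma cond_of_good (π σ τ : INC12 n) (hle2 : Refines τ.1 σ.1)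
    (hg : ∀ B ∈ τ.1, B.card = 2 → B ∉ π.1 → IsOuter τ.1 B) :
    Cond π σ (prs τ.1) := by
  intro U hU W hW hWA hnes
  by_cases hWτ : W ∈ prs τ.1
  · -- W is a pair of τ not of π: goodness applies
    have hWπ : W ∉ π.1 := fun h => hWA (mem_prs.2 ⟨h, (mem_prs.1 hW).2⟩)
    have := hg W (prs_subset hWτ) (mem_prs.1 hW).2 hWπ
    exact (isOuter_iff.1 this) U (prs_subset hU) hnes
  · -- elements of W are singletons of τ, which are outer
    have hWcard : W.card = 2 := (mem_prs.1 hW).2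
    have hWne : W.Nonempty := card_pos.1 (by omega)
    obtain ⟨p, hp⟩ := hWne
    have hsing : ({p} : Finset (Fin n)) ∈ τ.1 := singleton_block τ σ hle2 hW hWτ hp
    have houter := τ.2.2.2.2 ({p} : Finset (Fin n)) hsing (card_singleton p)
    exact (isOuter_iff.1 houter) U (prs_subset hU) (nes_mono (singleton_subset_iff.2 hp) hnes)

section Construction

variable (π σ : INC12 n) (S : Finset (Finset (Fin n)))
variable (hle : Refines π.1 σ.1)
variable (hAS : prs π.1 ⊆ S) (hSB : S ⊆ prs σ.1) (hc : Cond π σ S)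

include hSB in
lemma part_sizes : ∀ B ∈ part S, B.card = 1 ∨ B.card = 2 := by
  intro B hB
  rcases mem_part.1 hB with h | ⟨i, _, rfl⟩
  · exact Or.inr (mem_prs.1 (hSB h)).2
  · exact Or.inl (card_singleton i)

include hSB in
lemma part_isPartition : IsPartition (part S) := by
  constructor
  · intro B hB
    rcases mem_part.1 hB with h | ⟨i, _, rfl⟩
    · exact card_pos.1 (by rw [(mem_prs.1 (hSB h)).2]; omega)
    · exact singleton_nonempty i
  · intro i
    by_cases h : ∃ U ∈ S, i ∈ U
    · obtain ⟨U, hU, hiU⟩ := h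
      refine ⟨U, ⟨mem_part.2 (Or.inl hU), hiU⟩, ?_⟩
      rintro C ⟨hC, hiC⟩
      rcases mem_part.1 hC with h' | ⟨j, hj, rfl⟩
      · exact (σ.2.1.2 i).unique ⟨prs_subset (hSB h'), hiC⟩ ⟨prs_subset (hSB hU), hiU⟩
      · simp only [mem_singleton] at hiC
        exact absurd hiU (hiC ▸ hj U hU)
    · push_neg at h
      refine ⟨({i} : Finset (Fin n)), ⟨mem_part.2 (Or.inr ⟨i, h, rfl⟩), mem_singleton_self i⟩, ?_⟩
      rintro C ⟨hC, hiC⟩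
      rcases mem_part.1 hC with h' | ⟨j, hj, rfl⟩
      · exact absurd hiC (h C h')
      · simp only [mem_singleton] at hiC
        subst hiC; rfl

include hSB in
lemma part_noncrossing : IsNoncrossing (part S) := by
  rintro ⟨U, hU, V, hV, hne, i, hi, k, hk, j, hj, l, hl, h1, h2, h3⟩
  have hU2 : U ∈ S := by
    rcases mem_part.1 hU with h | ⟨a, _, rfl⟩
    · exact h
    · simp only [mem_singleton] at hi hk
      exact absurd (hi.trans hk.symm) (ne_of_lt (h1.trans h2))
  have hV2 : V ∈ S := by
    rcases mem_part.1 hV with h | ⟨a, _, rfl⟩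
    · exact h
    · simp only [mem_singleton] at hj hl
      exact absurd (hj.trans hl.symm) (ne_of_lt (h2.trans h3))
  exact σ.2.2.1 ⟨U, prs_subset (hSB hU2), V, prs_subset (hSB hV2), hne,
    i, hi, k, hk, j, hj, l, hl, h1, h2, h3⟩

include hAS hSB hc in
lemma part_singleton_outer : ∀ B ∈ part S, B.card = 1 → IsOuter (part S) B := by
  intro B hB hB1
  have hBs : ∃ p : Fin n, (∀ U ∈ S, p ∉ U) ∧ B = ({p} : Finset (Fin n)) := by
    rcases mem_part.1 hB with h | h
    · rw [(mem_prs.1 (hSB h)).2] at hB1; omega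
    · exact h
  obtain ⟨p, hpun, rfl⟩ := hBs
  rw [isOuter_iff]
  intro U hU hnes
  rcases mem_part.1 hU with hUS | ⟨q, _, rfl⟩
  · -- U is a pair of S
    have hUσ : U ∈ σ.1 := prs_subset (hSB hUS)
    obtain ⟨W, ⟨hW, hpW⟩, _⟩ := σ.2.1.2 p
    by_cases hWU : W = U
    · subst hWU
      exact not_nes_of_mem (by rw [(mem_prs.1 (hSB hUS)).2]) hpW hnes
    · rcases σ.2.2.2.1 W hW with h1 | h2
      · obtain ⟨q, rfl⟩ := Finset.card_eq_one.1 h1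
        simp only [mem_singleton] at hpW
        subst hpW
        exact (isOuter_iff.1 (σ.2.2.2.2 _ hW (card_singleton _))) U hUσ hnes
      · have hnesW : Nes W U := nes_transfer σ hUσ hW (fun h => hWU h.symm) hpW hnes
        have hWpr : W ∈ prs σ.1 := mem_prs.2 ⟨hW, h2⟩
        have hWA : W ∉ prs π.1 := fun h => hpun W (hAS h) hpW
        exact hc U hUS W hWpr hWA hnesW
  · exact not_nes_singleton_target (singleton_nonempty p) hnes

include hSB in
lemma prs_part : prs (part S) = S := by
  ext B
  rw [mem_prs, mem_part]
  constructor
  · rintro ⟨h | ⟨i, _, rfl⟩, h2⟩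
    · exact h
    · rw [card_singleton] at h2; omega
  · intro h
    exact ⟨Or.inl h, (mem_prs.1 (hSB h)).2⟩

include hAS in
lemma refines_part : Refines π.1 (part S) := by
  intro B hB
  rcases π.2.2.2.1 B hB with h1 | h2
  · obtain ⟨p, rfl⟩ := Finset.card_eq_one.1 h1
    by_cases h : ∃ U ∈ S, p ∈ U
    · obtain ⟨U, hU, hpU⟩ := h
      exact ⟨U, mem_part.2 (Or.inl hU), singleton_subset_iff.2 hpU⟩
    · push_neg at h
      exact ⟨{p}, mem_part.2 (Or.inr ⟨p, h, rfl⟩), Finset.Subset.refl _⟩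
  · exact ⟨B, mem_part.2 (Or.inl (hAS (mem_prs.2 ⟨hB, h2⟩))), Finset.Subset.refl _⟩

include hSB in
lemma part_refines : Refines (part S) σ.1 := by
  intro B hB
  rcases mem_part.1 hB with h | ⟨p, _, rfl⟩
  · exact ⟨B, prs_subset (hSB h), Finset.Subset.refl _⟩
  · obtain ⟨D, ⟨hD, hpD⟩, _⟩ := σ.2.1.2 p
    exact ⟨D, hD, singleton_subset_iff.2 hpD⟩

include hSB hc in
lemma part_good : ∀ B ∈ part S, B.card = 2 → B ∉ π.1 → IsOuter (part S) B := by
  intro B hB h2 hBπ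
  have hBS : B ∈ S := by
    rcases mem_part.1 hB with h | ⟨i, _, rfl⟩
    · exact h
    · rw [card_singleton] at h2; omega
  have hBpr : B ∈ prs σ.1 := hSB hBS
  have hBA : B ∉ prs π.1 := fun h => hBπ (prs_subset h)
  rw [isOuter_iff]
  intro U hU hnes
  rcases mem_part.1 hU with hUS | ⟨q, _, rfl⟩
  · exact hc U hUS B hBpr hBA hnes
  · exact not_nes_singleton_target (card_pos.1 (by omega)) hnes

end Construction

/-- Package `part S` as an element of `INC12 n` (junk value `π` if invalid). -/
noncomputable def mk (π : INC12 n) (S : Finset (Finset (Fin n))) : INC12 n :=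
  if h : IsPartition (part S) ∧ IsNoncrossing (part S) ∧
      (∀ B ∈ part S, B.card = 1 ∨ B.card = 2) ∧
      ∀ B ∈ part S, B.card = 1 → IsOuter (part S) B
  then ⟨part S, h⟩ else π

lemma mk_val (π σ : INC12 n) (S : Finset (Finset (Fin n)))
    (hAS : prs π.1 ⊆ S) (hSB : S ⊆ prs σ.1) (hc : Cond π σ S) :
    (mk π S).1 = part S := by
  rw [mk, dif_pos ⟨part_isPartition σ S hSB, part_noncrossing σ S hSB,
    part_sizes σ S hSB, part_singleton_outer π σ S hAS hSB hc⟩]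

/-- The value the Möbius function is claimed to take. -/
noncomputable def fval (π τ : INC12 n) : ℤ :=
  if ∀ B ∈ τ.1, B.card = 2 → B ∉ π.1 → IsOuter τ.1 B
  then (-1) ^ ((prs τ.1).card - (prs π.1).card) else 0

/-- The core identity: the claimed values sum to zero over a nontrivial interval. -/
lemma core (π σ : INC12 n) (hle : Refines π.1 σ.1) (hne : π ≠ σ) :
    ∑ τ ∈ Finset.univ.filter (fun τ : INC12 n => Refines π.1 τ.1 ∧ Refines τ.1 σ.1),
      fval π τ = 0 := by
  classical
  have hprsπσ : prs π.1 ⊆ prs σ.1 := prs_mono σ.2.2.2.1 hle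
  simp only [fval]
  rw [← Finset.sum_filter, Finset.filter_filter]
  set D : Finset (Finset (Fin n)) := (prs σ.1).filter
    (fun U => U ∉ prs π.1 ∧ ∀ W ∈ prs σ.1, W ∉ prs π.1 → ¬ Nes W U) with hD
  have hDsub : D ⊆ prs σ.1 := filter_subset _ _
  -- facts about elements of the source
  have hsrc : ∀ τ : INC12 n,
      τ ∈ Finset.univ.filter (fun τ : INC12 n => (Refines π.1 τ.1 ∧ Refines τ.1 σ.1) ∧
        ∀ B ∈ τ.1, B.card = 2 → B ∉ π.1 → IsOuter τ.1 B) ↔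
      (Refines π.1 τ.1 ∧ Refines τ.1 σ.1) ∧
        ∀ B ∈ τ.1, B.card = 2 → B ∉ π.1 → IsOuter τ.1 B := by
    intro τ; simp [Finset.mem_filter]
  have condπ : Cond π σ (prs π.1) := by
    refine cond_of_good π σ π hle ?_
    intro B hB _ hBπ
    exact absurd hB hBπ
  -- S-facts for T ⊆ D
  have hfacts : ∀ T ∈ D.powerset, prs π.1 ⊆ prs π.1 ∪ T ∧ (prs π.1 ∪ T ⊆ prs σ.1) ∧
      Cond π σ (prs π.1 ∪ T) := by
    intro T hT
    rw [mem_powerset] at hT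
    refine ⟨subset_union_left, ?_, ?_⟩
    · intro U hU
      rcases mem_union.1 hU with h | h
      · exact hprsπσ h
      · exact hDsub (hT h)
    · intro U hU W hW hWA hnes
      rcases mem_union.1 hU with h | h
      · exact condπ U h W hW hWA hnes
      · exact (mem_filter.1 (hT h)).2.2 W hW hWA hnes
  rw [Finset.sum_nbij' (i := fun τ : INC12 n => prs τ.1 \ prs π.1)
    (j := fun T => mk π (prs π.1 ∪ T)) (t := D.powerset)
    (g := fun T => (-1 : ℤ) ^ T.card) ?hi ?hj ?hji ?hij ?hv]
  case hi =>
    intro τ hτ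
    obtain ⟨⟨h1, h2⟩, hg⟩ := (hsrc τ).1 hτ
    rw [mem_powerset]
    intro U hU
    rw [mem_sdiff] at hU
    rw [hD, mem_filter]
    exact ⟨prs_mono σ.2.2.2.1 h2 hU.1, hU.2,
      fun W hW hWA => cond_of_good π σ τ h2 hg U hU.1 W hW hWA⟩
  case hj =>
    intro T hT
    obtain ⟨hAS, hSB, hc⟩ := hfacts T hT
    rw [hsrc]
    have hval := mk_val π σ _ hAS hSB hc
    rw [hval]
    exact ⟨⟨refines_part π _ hAS, part_refines σ _ hSB⟩, part_good π σ _ hSB hc⟩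
  case hji =>
    intro τ hτ
    show mk π (prs π.1 ∪ (prs τ.1 \ prs π.1)) = τ
    obtain ⟨⟨h1, h2⟩, hg⟩ := (hsrc τ).1 hτ
    have hsub : prs π.1 ⊆ prs τ.1 := prs_mono τ.2.2.2.1 h1
    rw [Finset.union_sdiff_of_subset hsub]
    have hSB : prs τ.1 ⊆ prs σ.1 := prs_mono σ.2.2.2.1 h2
    have hc : Cond π σ (prs τ.1) := cond_of_good π σ τ h2 hg
    apply eq_of_prs_eq
    rw [mk_val π σ _ hsub hSB hc, prs_part σ _ hSB]
  case hij =>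
    intro T hT
    show prs (mk π (prs π.1 ∪ T)).1 \ prs π.1 = T
    obtain ⟨hAS, hSB, hc⟩ := hfacts T hT
    rw [mk_val π σ _ hAS hSB hc, prs_part σ _ hSB]
    rw [mem_powerset] at hT
    have hdisj : Disjoint (prs π.1) T := by
      rw [disjoint_left]
      intro x hx hxT
      exact (mem_filter.1 (hT hxT)).2.1 hx
    exact Finset.union_sdiff_cancel_left hdisj
  case hv =>
    intro τ hτ
    obtain ⟨⟨h1, h2⟩, hg⟩ := (hsrc τ).1 hτ
    show ((-1 : ℤ)) ^ ((prs τ.1).card - (prs π.1).card) = (-1 : ℤ) ^ (prs τ.1 \ prs π.1).card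
    rw [card_sdiff_of_subset (prs_mono τ.2.2.2.1 h1)]
  -- the powerset sum vanishes since D is nonempty
  rw [Finset.sum_powerset_neg_one_pow_card, if_neg]
  intro hDempty
  -- find a minimal new pair: it lies in D
  have hEne : (prs σ.1 \ prs π.1).Nonempty := by
    rw [Finset.sdiff_nonempty]
    intro hsub
    exact hne (eq_of_prs_eq π σ (Finset.Subset.antisymm hprsπσ hsub))
  obtain ⟨W, hWE, hmin⟩ := Finset.exists_min_image (prs σ.1 \ prs π.1)
    (fun W => W.sup (fun x : Fin n => (x : ℕ))) hEne
  rw [mem_sdiff] at hWE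
  have hWD : W ∈ D := by
    rw [hD, mem_filter]
    refine ⟨hWE.1, hWE.2, ?_⟩
    intro W' hW' hW'A hnes
    obtain ⟨i, hi, j, hj, hx⟩ := hnes
    have hW'E : W' ∈ prs σ.1 \ prs π.1 := mem_sdiff.2 ⟨hW', hW'A⟩
    have hW'ne : W'.Nonempty := card_pos.1 (by rw [(mem_prs.1 hW').2]; omega)
    obtain ⟨x0, hx0⟩ := hW'ne
    have hj0 : (0 : ℕ) < (j : ℕ) := lt_of_le_of_lt (Nat.zero_le _) (hx x0 hx0).2
    have h1 : W'.sup (fun x : Fin n => (x : ℕ)) < (j : ℕ) := by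
      rw [Finset.sup_lt_iff hj0]
      intro b hb
      exact (hx b hb).2
    have h2 : (j : ℕ) ≤ W.sup (fun x : Fin n => (x : ℕ)) := Finset.le_sup hj
    have := hmin W' hW'E
    omega
  rw [hDempty] at hWD
  exact absurd hWD (Finset.notMem_empty W)

end INCAux

theorem stmt2 (n : ℕ) (μ : INC12 n → INC12 n → ℤ)
    (hmu1 : ∀ x, μ x x = 1)
    (hmu2 : ∀ x y : INC12 n, Refines x.1 y.1 → x ≠ y →
      ∑ τ ∈ Finset.univ.filter (fun τ : INC12 n => Refines x.1 τ.1 ∧ Refines τ.1 y.1),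
        μ x τ = 0)
    (π σ : INC12 n) (hle : Refines π.1 σ.1) :
    μ π σ = if ∀ B ∈ σ.1, B.card = 2 → B ∉ π.1 → IsOuter σ.1 B
      then (-1) ^ ((σ.1.filter fun B => B.card = 2).card
        - (π.1.filter fun B => B.card = 2).card)
      else 0 := by
  classical
  open INCAux in
  have main : ∀ k : ℕ, ∀ π σ : INC12 n, Refines π.1 σ.1 →
      (prs σ.1 \ prs π.1).card = k → μ π σ = fval π σ := by
    intro k
    induction k using Nat.strong_induction_on with
    | _ k ih =>
      intro π σ hle hcard
      by_cases hps : π = σ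
      · subst hps
        rw [fval, if_pos, Nat.sub_self, pow_zero, hmu1]
        intro B hB h2 hn
        exact absurd hB hn
      · have hsum := hmu2 π σ hle hps
        have hcore := core π σ hle hps
        have hσI : σ ∈ Finset.univ.filter
            (fun τ : INC12 n => Refines π.1 τ.1 ∧ Refines τ.1 σ.1) :=
          Finset.mem_filter.2 ⟨Finset.mem_univ _, hle, fun B hB => ⟨B, hB, Finset.Subset.refl _⟩⟩
        have key : ∀ τ ∈ (Finset.univ.filter
            (fun τ : INC12 n => Refines π.1 τ.1 ∧ Refines τ.1 σ.1)).erase σ,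
            μ π τ = fval π τ := by
          intro τ hτ
          have hτne := Finset.ne_of_mem_erase hτ
          obtain ⟨-, h1, h2⟩ := Finset.mem_filter.1 (Finset.mem_of_mem_erase hτ)
          have hsub : prs τ.1 \ prs π.1 ⊂ prs σ.1 \ prs π.1 := by
            constructor
            · intro U hU
              rw [Finset.mem_sdiff] at hU ⊢
              exact ⟨prs_mono σ.2.2.2.1 h2 hU.1, hU.2⟩
            · intro hcon
              apply hτne
              apply eq_of_prs_eq
              have hπτ : prs π.1 ⊆ prs τ.1 := prs_mono τ.2.2.2.1 h1
              have hπσ : prs π.1 ⊆ prs σ.1 := prs_mono σ.2.2.2.1 hle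
              have := Finset.union_subset_union (Finset.Subset.refl (prs π.1)) hcon
              rw [Finset.union_sdiff_of_subset hπτ, Finset.union_sdiff_of_subset hπσ] at this
              exact Finset.Subset.antisymm (prs_mono σ.2.2.2.1 h2) this
          have hlt : (prs τ.1 \ prs π.1).card < k := by
            rw [← hcard]
            exact Finset.card_lt_card hsub
          exact ih _ hlt π τ h1 rfl
        rw [← Finset.add_sum_erase _ _ hσI] at hsum hcore
        rw [Finset.sum_congr rfl key] at hsum
        exact add_right_cancel (hsum.trans hcore.symm)
  have h := main _ π σ hle rfl
  rw [h, INCAux.fval]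
  rfl
end

section
/- Let 0̂ denote the least element of IP(n) (the partition into singletons with every block open). For any (π,S) ∈ IP(n), the Möbius function of IP(n) satisfies: μ(0̂,(π,S)) = (−1)^{n−|S|} · Π_{V ∈ S} (|V|−1)! if every closed block of π is a singleton, and μ(0̂,(π,S)) = 0 otherwise. Here |S| denotes the number of open blocks. -/
/-!
The claimed value `f` satisfies the recursion that defines `μ(0̂, ·)`, and on a finite poset the
sums `∑_{τ ≤ p} f τ` determine `f`; so it suffices to show that these sums vanish for `p ≠ 0̂`.

The `τ ≤ (π, S)` with `f τ ≠ 0` are encoded by pairs `(w, M)`: `w` is a permutation mapping every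
block of `π` into itself whose cycles are the blocks of `τ`, and `M` is the set of closed blocks
of `τ`, all of them closed singletons of `π`. Since `sign w = (-1) ^ (n - #cycles)` and exactly
`∏ (|V| - 1)!` permutations have the cycles `V`, the sum becomes
`(∑_w sign w) * (∑_{M} (-1) ^ |M|)`. Left multiplication by the transposition of two points of a
block of `π` reverses signs, so the first factor vanishes unless `π` is discrete; the second
vanishes as soon as `π` has a closed singleton; and a discrete `π` without closed blocks is `0̂`.
-/

open Finset
open scoped Classical

/-- The order on incomplete partitions `(π, S)` (where `S ⊆ π` is the set of open
blocks): `(π,S) ≤ (σ,T)` iff every closed block of `π` is a closed block of `σ`, and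
the restriction of `π` to the union of its open blocks refines the corresponding
restriction of `σ` (equivalently, every open block of `π` is contained in a block
of `σ`). -/
def IPle {n : ℕ} (p q : Finset (Finset (Fin n)) × Finset (Finset (Fin n))) : Prop :=
  (∀ U ∈ p.1, U ∉ p.2 → U ∈ q.1 ∧ U ∉ q.2) ∧ ∀ B ∈ p.2, ∃ C ∈ q.1, B ⊆ C

/-- Incomplete partitions: pairs `(π, S)` with `π` a partition of `Fin n` and `S ⊆ π`
the set of open blocks. -/
abbrev IP (n : ℕ) :=
  {p : Finset (Finset (Fin n)) × Finset (Finset (Fin n)) // IsPartition p.1 ∧ p.2 ⊆ p.1}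

namespace Equiv.Perm

variable {α : Type*}

lemma IsCycleOn.congr {f g : Perm α} {s : Finset α} (hf : f.IsCycleOn s)
    (h : ∀ x ∈ s, f x = g x) : g.IsCycleOn s := by
  have hpow : ∀ k : ℕ, ∀ x ∈ s, (f ^ k) x = (g ^ k) x := by
    intro k
    induction k with
    | zero => simp
    | succ k ih =>
      intro x hx
      rw [pow_succ, pow_succ, mul_apply, mul_apply, ← h x hx, ih _ (hf.apply_mem_iff.2 hx)]
  refine ⟨hf.1.congr fun x hx => h x hx, fun x hx y hy => ?_⟩
  obtain ⟨k, -, hk⟩ := hf.exists_pow_eq hx hy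
  exact ⟨k, by rw [zpow_natCast, ← hpow k x hx, hk]⟩

variable [Fintype α] [DecidableEq α]

def orbitFinset (w : Perm α) (i : α) : Finset α := {j | w.SameCycle i j}

def orbitPartition (w : Perm α) : Finset (Finset α) := univ.image w.orbitFinset

variable {w : Perm α} {i j : α}

@[simp]
lemma mem_orbitFinset : j ∈ w.orbitFinset i ↔ w.SameCycle i j := by
  simp [orbitFinset]

lemma mem_orbitFinset_self (w : Perm α) (i : α) : i ∈ w.orbitFinset i :=
  mem_orbitFinset.2 SameCycle.rfl

lemma apply_mem_orbitFinset (w : Perm α) (i : α) : w i ∈ w.orbitFinset i :=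
  mem_orbitFinset.2 (sameCycle_apply_right.2 SameCycle.rfl)

lemma orbitFinset_mem_orbitPartition (w : Perm α) (i : α) :
    w.orbitFinset i ∈ w.orbitPartition :=
  mem_image_of_mem _ (mem_univ i)

lemma orbitFinset_eq_iff : w.orbitFinset i = w.orbitFinset j ↔ w.SameCycle i j := by
  refine ⟨fun h => mem_orbitFinset.1 (h ▸ mem_orbitFinset_self w j), fun h => ?_⟩
  ext k
  simp only [mem_orbitFinset]
  exact ⟨h.symm.trans, h.trans⟩

lemma orbitFinset_eq_singleton (h : w i = i) : w.orbitFinset i = {i} := by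
  ext j
  simp only [mem_orbitFinset, mem_singleton]
  exact ⟨fun hj => (hj.eq_of_left h).symm, fun hj => hj ▸ SameCycle.rfl⟩

lemma support_cycleOf_eq_orbitFinset (h : w i ≠ i) : (w.cycleOf i).support = w.orbitFinset i := by
  ext j
  simp [mem_support_cycleOf_iff' h]

lemma isCycleOn_orbitFinset (w : Perm α) (i : α) : w.IsCycleOn (w.orbitFinset i) := by
  by_cases h : w i = i
  · simpa [orbitFinset_eq_singleton h] using h
  · simpa [← support_cycleOf_eq_orbitFinset h] using isCycleOn_support_cycleOf w i

lemma orbitFinset_subset {s : Finset α} (hs : ∀ j ∈ s, w j ∈ s) (hi : i ∈ s) :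
    w.orbitFinset i ⊆ s := by
  intro j hj
  obtain ⟨k, rfl⟩ := (mem_orbitFinset.1 hj).exists_nat_pow_eq
  rw [coe_pow]
  exact Set.MapsTo.iterate (f := w) (s := (s : Set α)) hs k hi

lemma orbitFinset_eq_of_isCycleOn {s : Finset α} (h : w.IsCycleOn s) (hi : i ∈ s) :
    w.orbitFinset i = s :=
  (w.orbitFinset_subset (fun _ hj => h.apply_mem_iff.2 hj) hi).antisymm fun _ hj =>
    mem_orbitFinset.2 (h.2 hi hj)

lemma sum_card_orbitPartition (w : Perm α) :
    ∑ B ∈ w.orbitPartition, #B = Fintype.card α := by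
  rw [← card_univ, card_eq_sum_card_image w.orbitFinset univ]
  refine sum_congr rfl fun B hB => ?_
  obtain ⟨i, -, rfl⟩ := mem_image.1 hB
  congr 1
  ext j
  simp [orbitFinset_eq_iff, sameCycle_comm]

lemma image_support_cycleFactorsFinset (w : Perm α) :
    w.cycleFactorsFinset.image support = {B ∈ w.orbitPartition | 2 ≤ #B} := by
  ext B
  simp only [mem_image, mem_filter, orbitPartition, mem_univ, true_and]
  constructor
  · rintro ⟨c, hc, rfl⟩
    have hcycle := (mem_cycleFactorsFinset_iff.1 hc).1
    obtain ⟨a, ha⟩ := hcycle.nonempty_support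
    refine ⟨⟨a, ?_⟩, hcycle.two_le_card_support⟩
    rw [cycle_is_cycleOf ha hc, support_cycleOf_eq_orbitFinset
      (mem_support.1 (mem_cycleFactorsFinset_support_le hc ha))]
  · rintro ⟨⟨i, rfl⟩, hB⟩
    have hi : w i ≠ i := fun h => by simp [orbitFinset_eq_singleton h] at hB
    exact ⟨w.cycleOf i, cycleOf_mem_cycleFactorsFinset_iff.2 (mem_support.2 hi),
      support_cycleOf_eq_orbitFinset hi⟩

lemma one_le_card_of_mem_orbitPartition {B : Finset α} (hB : B ∈ w.orbitPartition) :
    1 ≤ #B := by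
  obtain ⟨i, -, rfl⟩ := mem_image.1 hB
  exact card_pos.2 ⟨i, mem_orbitFinset_self w i⟩

theorem sign_eq_neg_one_pow_card_orbitPartition (w : Perm α) :
    sign w = (-1) ^ (Fintype.card α - #w.orbitPartition) := by
  have hinj : Set.InjOn support (w.cycleFactorsFinset : Set (Perm α)) := by
    intro c hc d hd h
    obtain ⟨a, ha⟩ := (mem_cycleFactorsFinset_iff.1 hc).1.nonempty_support
    rw [cycle_is_cycleOf ha hc, cycle_is_cycleOf (h ▸ ha) hd]
  calc sign w = ∏ c ∈ w.cycleFactorsFinset, (-1 : ℤˣ) ^ (#c.support - 1) := by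
        rw [sign_of_cycleType', cycleType_def, Multiset.map_map, prod_eq_multiset_prod]
        congr 1
        refine Multiset.map_congr rfl fun c hc => ?_
        obtain ⟨k, hk⟩ :=
          Nat.exists_eq_add_of_le' (mem_cycleFactorsFinset_iff.1 hc).1.two_le_card_support
        simp [hk, pow_succ]
    _ = ∏ B ∈ w.orbitPartition with 2 ≤ #B, (-1) ^ (#B - 1) := by
        rw [← image_support_cycleFactorsFinset, prod_image hinj]
    _ = ∏ B ∈ w.orbitPartition, (-1) ^ (#B - 1) :=
        prod_filter_of_ne fun B _ hB => by
          by_contra h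
          exact hB (by rw [Nat.sub_eq_zero_of_le (by omega), pow_zero])
    _ = (-1) ^ (Fintype.card α - #w.orbitPartition) := by
        rw [prod_pow_eq_pow_sum,
          sum_tsub_distrib _ fun B hB => one_le_card_of_mem_orbitPartition hB,
          sum_card_orbitPartition, ← card_eq_sum_ones]

theorem sum_sign_eq_zero_of_swap_mul_mem {s : Finset (Perm α)} {a b : α} (hab : a ≠ b)
    (hs : ∀ w ∈ s, swap a b * w ∈ s) : ∑ w ∈ s, (sign w : ℤ) = 0 :=
  sum_involution (fun w _ => swap a b * w) (fun w _ => by simp [sign_mul, sign_swap hab])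
    (fun w _ _ h => hab (swap_eq_one_iff.1 (mul_eq_right.1 h))) hs
    (fun w _ => swap_mul_self_mul a b w)

lemma isCycleOn_iff_cycleType_eq {s : Finset α} (hs : 2 ≤ #s) (hw : w.support ⊆ s) :
    w.IsCycleOn s ↔ w.cycleType = {#s} := by
  constructor
  · intro h
    have hnt : (s : Set α).Nontrivial := one_lt_card_iff_nontrivial.1 hs
    have hsupp : w.support = s :=
      hw.antisymm fun x hx => mem_support.2 (h.apply_ne hnt hx)
    have hcyc : w.IsCycle :=
      isCycle_iff_exists_isCycleOn.2 ⟨s, hnt, h, fun x hx => hw (mem_support.2 hx)⟩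
    rw [hcyc.cycleType, hsupp]
  · intro h
    have hcyc : w.IsCycle := card_cycleType_eq_one.1 (by simp [h])
    have hsupp : w.support = s :=
      eq_of_subset_of_card_le hw (by rw [← sum_cycleType, h, Multiset.sum_singleton])
    simpa [← coe_support_eq_set_support, hsupp] using hcyc.isCycleOn

noncomputable def permsWithCycles (F : Finset (Finset α)) : Finset (Perm α) :=
  {w | (∀ V ∈ F, w.IsCycleOn V) ∧ w.support ⊆ F.biUnion id}

variable {F : Finset (Finset α)} {V : Finset α} {c : Perm α}

lemma mem_permsWithCycles :
    w ∈ permsWithCycles F ↔ (∀ V ∈ F, w.IsCycleOn V) ∧ w.support ⊆ F.biUnion id := by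
  simp [permsWithCycles]

lemma mem_permsWithCycles_singleton :
    c ∈ permsWithCycles {V} ↔ c.IsCycleOn V ∧ c.support ⊆ V := by
  simp [permsWithCycles]

theorem card_permsWithCycles_singleton (s : Finset α) :
    #(permsWithCycles {s}) = (#s - 1).factorial := by
  rcases lt_or_ge #s 2 with hs | hs
  · have hone : permsWithCycles {s} = {1} := by
      ext w
      rw [mem_permsWithCycles_singleton, mem_singleton]
      constructor
      · rintro ⟨-, hw⟩
        have := card_le_card hw
        have := w.card_support_ne_one
        exact support_eq_empty_iff.1 (card_eq_zero.1 (by omega))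
      · rintro rfl
        exact ⟨isCycleOn_one.2 fun x hx y hy => card_le_one.1 (by omega) x hx y hy, by simp⟩
    rw [hone, card_singleton, Nat.sub_eq_zero_of_le (by omega), Nat.factorial_zero]
  · have hmap : permsWithCycles {s} = ({g | g.cycleType = {#s}} : Finset (Perm s)).map
        ⟨ofSubtype, ofSubtype_injective⟩ := by
      ext w
      simp only [mem_permsWithCycles_singleton, mem_filter, mem_univ, true_and, mem_map,
        Function.Embedding.coeFn_mk]
      constructor
      · rintro ⟨hc, hw⟩
        obtain ⟨g, rfl⟩ := (mem_range_ofSubtype_iff (p := (· ∈ s))).2 (by exact_mod_cast hw)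
        exact ⟨g, by rwa [← cycleType_ofSubtype, ← isCycleOn_iff_cycleType_eq hs hw], rfl⟩
      · rintro ⟨g, hg, rfl⟩
        have hw : (ofSubtype g).support ⊆ s := fun x hx => ((mem_support_ofSubtype x g).1 hx).1
        exact ⟨(isCycleOn_iff_cycleType_eq hs hw).2 (by rwa [cycleType_ofSubtype]), hw⟩
    rw [hmap, card_map, card_of_cycleType_singleton hs (by simp), Fintype.card_coe,
      Nat.choose_self, mul_one]

lemma mul_apply_of_mem_of_disjoint (h : _root_.Disjoint V w.support) {x : α} (hx : x ∈ V) :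
    (c * w) x = c x := by
  rw [mul_apply, notMem_support.1 (disjoint_left.1 h hx)]

lemma mul_mem_permsWithCycles_insert (hVF : _root_.Disjoint V (F.biUnion id))
    (hc : c ∈ permsWithCycles {V}) (hw : w ∈ permsWithCycles F) :
    c * w ∈ permsWithCycles (insert V F) := by
  rw [mem_permsWithCycles_singleton] at hc
  rw [mem_permsWithCycles] at hw ⊢
  have hd : c.Disjoint w := disjoint_iff_disjoint_support.2 <|
    (hVF.mono_left hc.2).mono_right hw.2
  refine ⟨fun V' hV' => ?_, (support_mul_le c w).trans ?_⟩
  · rcases mem_insert.1 hV' with rfl | hV'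
    · exact hc.1.congr fun x hx => (mul_apply_of_mem_of_disjoint (hVF.mono_right hw.2) hx).symm
    · refine (hw.1 V' hV').congr fun x hx => ?_
      rw [hd.commute.eq]
      refine (mul_apply_of_mem_of_disjoint (V := V') ?_ hx).symm
      exact disjoint_left.2 fun y hy hyc =>
        disjoint_left.1 hVF (hc.2 hyc) (mem_biUnion.2 ⟨V', hV', hy⟩)
  · rw [biUnion_insert]
    exact union_subset_union hc.2 hw.2

lemma exists_inv_mul_mem_permsWithCycles (hVF : _root_.Disjoint V (F.biUnion id))
    (hw : w ∈ permsWithCycles (insert V F)) :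
    ∃ c ∈ permsWithCycles {V}, c⁻¹ * w ∈ permsWithCycles F := by
  rw [mem_permsWithCycles] at hw
  have hwV := hw.1 V (mem_insert_self V F)
  let c : Perm α := ofSubtype (w.subtypePerm fun x => hwV.apply_mem_iff (x := x) :
    Perm {x // x ∈ V})
  have hcw : ∀ x ∈ V, c x = w x := fun x hx => by simp [c, ofSubtype_apply_of_mem _ hx]
  have hcV : c.support ⊆ V := fun x hx => ((mem_support_ofSubtype x _).1 hx).1
  have hfixV : ∀ x ∈ V, (c⁻¹ * w) x = x := fun x hx => by
    rw [mul_apply, inv_eq_iff_eq, hcw x hx]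
  have heq : ∀ x ∉ V, (c⁻¹ * w) x = w x := fun x hx => by
    rw [mul_apply, inv_eq_iff_eq, eq_comm, ← notMem_support]
    exact fun h => hx (hwV.apply_mem_iff.1 (hcV h))
  refine ⟨c, mem_permsWithCycles_singleton.2 ⟨hwV.congr fun x hx => (hcw x hx).symm, hcV⟩,
    mem_permsWithCycles.2 ⟨fun V' hV' => ?_, fun x hx => ?_⟩⟩
  · exact (hw.1 V' (mem_insert_of_mem hV')).congr fun x hx =>
      (heq x fun h => disjoint_left.1 hVF h (mem_biUnion.2 ⟨V', hV', hx⟩)).symm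
  · have hxV : x ∉ V := fun h => mem_support.1 hx (hfixV x h)
    have := hw.2 (mem_support.2 (heq x hxV ▸ mem_support.1 hx))
    rw [biUnion_insert, mem_union] at this
    exact this.resolve_left hxV

theorem card_permsWithCycles (F : Finset (Finset α))
    (hF : (F : Set (Finset α)).PairwiseDisjoint id) :
    #(permsWithCycles F) = ∏ V ∈ F, (#V - 1).factorial := by
  induction F using Finset.induction_on with
  | empty =>
    rw [prod_empty, card_eq_one]
    exact ⟨1, eq_singleton_iff_unique_mem.2 ⟨by simp [mem_permsWithCycles],
      fun w hw => by simpa [mem_permsWithCycles, subset_empty] using hw⟩⟩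
  | @insert V F hVF ih =>
    have hdisj : _root_.Disjoint V (F.biUnion id) := disjoint_biUnion_right _ _ _ |>.2 fun V' hV' =>
      hF (mem_insert_self V F) (mem_insert_of_mem hV') (ne_of_mem_of_not_mem hV' hVF).symm
    rw [prod_insert hVF, ← card_permsWithCycles_singleton V,
      ← ih (hF.subset fun _ => mem_insert_of_mem), ← card_product]
    symm
    refine card_bij (fun q _ => q.1 * q.2) (fun q hq => ?_) (fun q hq r hr h => ?_) (fun w hw => ?_)
    · exact mul_mem_permsWithCycles_insert hdisj (mem_product.1 hq).1 (mem_product.1 hq).2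
    · obtain ⟨hq1, hq2⟩ := mem_product.1 hq
      obtain ⟨hr1, hr2⟩ := mem_product.1 hr
      rw [mem_permsWithCycles_singleton] at hq1 hr1
      have h1 : q.1 = r.1 := by
        ext x
        by_cases hx : x ∈ V
        · rw [← mul_apply_of_mem_of_disjoint (hdisj.mono_right (mem_permsWithCycles.1 hq2).2) hx,
            h, mul_apply_of_mem_of_disjoint (hdisj.mono_right (mem_permsWithCycles.1 hr2).2) hx]
        · rw [notMem_support.1 fun h => hx (hq1.2 h), notMem_support.1 fun h => hx (hr1.2 h)]
      rw [h1] at h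
      exact Prod.ext h1 (mul_left_cancel h)
    · obtain ⟨c, hc, hw'⟩ := exists_inv_mul_mem_permsWithCycles hdisj hw
      exact ⟨(c, c⁻¹ * w), mem_product.2 ⟨hc, hw'⟩, mul_inv_cancel_left c w⟩

end Equiv.Perm

open Equiv Equiv.Perm

theorem eq_of_forall_sum_filter_rel_eq {β M : Type*} [Fintype β] [AddCommGroup M]
    {r : β → β → Prop} (hrefl : ∀ a, r a a) (htrans : ∀ {a b c}, r a b → r b c → r a c)
    (hantisymm : ∀ {a b}, r a b → r b a → a = b) {f g : β → M}
    (h : ∀ p, ∑ τ with r τ p, f τ = ∑ τ with r τ p, g τ) (p : β) : f p = g p := by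
  induction hk : #{τ | r τ p} using Nat.strong_induction_on generalizing p with
  | _ k ih =>
    have hp : p ∈ ({τ | r τ p} : Finset β) := by simpa using hrefl p
    have hbelow : ∀ τ ∈ ({τ | r τ p} : Finset β).erase p, f τ = g τ := by
      intro τ hτ
      obtain ⟨hne, hτp⟩ := mem_erase.1 hτ
      simp only [mem_filter, mem_univ, true_and] at hτp
      refine ih _ (hk ▸ card_lt_card ⟨fun σ hσ => ?_, fun hsub => hne ?_⟩) τ rfl
      · simp only [mem_filter, mem_univ, true_and] at hσ ⊢
        exact htrans hσ hτp
      · simpa using hantisymm hτp (by simpa using hsub hp)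
    have := h p
    rwa [← add_sum_erase _ _ hp, ← add_sum_erase _ _ hp, sum_congr rfl hbelow,
      add_left_inj] at this

section Partition

variable {n : ℕ} {P : Finset (Finset (Fin n))}

lemma IsPartition.eq_of_mem_of_mem (hP : IsPartition P) {B C : Finset (Fin n)} {i : Fin n}
    (hB : B ∈ P) (hC : C ∈ P) (hiB : i ∈ B) (hiC : i ∈ C) : B = C :=
  (hP.2 i).unique ⟨hB, hiB⟩ ⟨hC, hiC⟩

lemma IsPartition.pairwiseDisjoint (hP : IsPartition P) :
    (P : Set (Finset (Fin n))).PairwiseDisjoint id :=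
  fun _ hB _ hC hne => disjoint_left.2 fun _ hiB hiC => hne (hP.eq_of_mem_of_mem hB hC hiB hiC)

lemma IsPartition.biUnion_eq_univ (hP : IsPartition P) : P.biUnion id = univ :=
  eq_univ_of_forall fun i => by
    obtain ⟨B, ⟨hB, hi⟩, -⟩ := hP.2 i
    exact mem_biUnion.2 ⟨B, hB, hi⟩

lemma IsPartition.eq_image_singleton (hP : IsPartition P) (h : ∀ B ∈ P, #B ≤ 1) :
    P = univ.image fun i => {i} := by
  ext B
  simp only [mem_image, mem_univ, true_and]
  constructor
  · intro hB
    obtain ⟨b, hb⟩ := hP.1 B hB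
    exact ⟨b, (eq_singleton_iff_unique_mem.2
      ⟨hb, fun c hc => card_le_one.1 (h B hB) c hc b hb⟩).symm⟩
  · rintro ⟨i, rfl⟩
    obtain ⟨C, ⟨hC, hiC⟩, -⟩ := hP.2 i
    rwa [← eq_singleton_iff_unique_mem.2 ⟨hiC, fun j hj => card_le_one.1 (h C hC) j hj i hiC⟩]

lemma IsPartition.card_le (hP : IsPartition P) : #P ≤ n :=
  calc #P = ∑ _B ∈ P, 1 := card_eq_sum_ones P
    _ ≤ ∑ B ∈ P, #B := sum_le_sum fun B hB => card_pos.2 (hP.1 B hB)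
    _ = #(P.biUnion id) := (card_biUnion hP.pairwiseDisjoint).symm
    _ ≤ n := by simpa using card_le_univ (P.biUnion id)

lemma isPartition_orbitPartition (w : Perm (Fin n)) : IsPartition w.orbitPartition := by
  refine ⟨fun B hB => ?_, fun i => ⟨w.orbitFinset i,
    ⟨w.orbitFinset_mem_orbitPartition i, w.mem_orbitFinset_self i⟩, ?_⟩⟩
  · obtain ⟨i, -, rfl⟩ := mem_image.1 hB
    exact ⟨i, w.mem_orbitFinset_self i⟩
  · rintro B ⟨hB, hiB⟩
    obtain ⟨j, -, rfl⟩ := mem_image.1 hB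
    exact orbitFinset_eq_iff.2 (mem_orbitFinset.1 hiB)

lemma orbitPartition_eq_iff (hP : IsPartition P) {w : Perm (Fin n)} :
    w.orbitPartition = P ↔ ∀ V ∈ P, w.IsCycleOn V := by
  refine ⟨fun h V hV => ?_, fun h => ?_⟩
  · obtain ⟨i, -, rfl⟩ := mem_image.1 (h ▸ hV)
    exact w.isCycleOn_orbitFinset i
  · have horbit : ∀ i, ∀ V ∈ P, i ∈ V → w.orbitFinset i = V :=
      fun i V hV hi => orbitFinset_eq_of_isCycleOn (h V hV) hi
    ext B
    refine ⟨fun hB => ?_, fun hB => ?_⟩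
    · obtain ⟨i, -, rfl⟩ := mem_image.1 hB
      obtain ⟨V, ⟨hV, hi⟩, -⟩ := hP.2 i
      rwa [horbit i V hV hi]
    · obtain ⟨i, hi⟩ := hP.1 B hB
      rw [← horbit i B hB hi]
      exact w.orbitFinset_mem_orbitPartition i

theorem sum_sign_of_orbitPartition_eq (hP : IsPartition P) :
    ∑ w with w.orbitPartition = P, (sign w : ℤ)
      = (-1) ^ (n - #P) * ∏ V ∈ P, ((#V - 1).factorial : ℤ) := by
  have hsign : ∀ w ∈ ({w | w.orbitPartition = P} : Finset (Perm (Fin n))),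
      (sign w : ℤ) = (-1) ^ (n - #P) := fun w hw => by
    rw [sign_eq_neg_one_pow_card_orbitPartition, (mem_filter.1 hw).2, Fintype.card_fin]
    simp
  have hcard : #{w : Perm (Fin n) | w.orbitPartition = P} = ∏ V ∈ P, (#V - 1).factorial := by
    rw [← card_permsWithCycles P hP.pairwiseDisjoint]
    congr 1
    ext w
    simp [mem_permsWithCycles, orbitPartition_eq_iff hP, hP.biUnion_eq_univ]
  rw [sum_congr rfl hsign, sum_const, hcard, nsmul_eq_mul, mul_comm, Nat.cast_prod]

end Partition

namespace IPle

variable {n : ℕ}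

lemma refl (p : IP n) : IPle p.1 p.1 :=
  ⟨fun _ hU hU2 => ⟨hU, hU2⟩, fun B hB => ⟨B, p.2.2 hB, subset_rfl⟩⟩

lemma exists_superset {p q : Finset (Finset (Fin n)) × Finset (Finset (Fin n))}
    (hpq : IPle p q) {B : Finset (Fin n)} (hB : B ∈ p.1) : ∃ C ∈ q.1, B ⊆ C := by
  by_cases hB2 : B ∈ p.2
  · exact hpq.2 B hB2
  · exact ⟨B, (hpq.1 B hB hB2).1, subset_rfl⟩

lemma trans {p q r : Finset (Finset (Fin n)) × Finset (Finset (Fin n))}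
    (hpq : IPle p q) (hqr : IPle q r) : IPle p r := by
  refine ⟨fun U hU hU2 => hqr.1 U (hpq.1 U hU hU2).1 (hpq.1 U hU hU2).2, fun B hB => ?_⟩
  obtain ⟨C, hC, hBC⟩ := hpq.2 B hB
  obtain ⟨D, hD, hCD⟩ := hqr.exists_superset hC
  exact ⟨D, hD, hBC.trans hCD⟩

lemma open_subset {p q : IP n} (hpq : IPle p.1 q.1) (hqp : IPle q.1 p.1) : p.1.2 ⊆ q.1.2 := by
  intro B hB
  have hBp := p.2.2 hB
  obtain ⟨i, hiB⟩ := p.2.1.1 B hBp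
  obtain ⟨C, hC, hBC⟩ := hpq.2 B hB
  obtain ⟨D, hD, hCD⟩ := hqp.exists_superset hC
  have hBD : B = D := p.2.1.eq_of_mem_of_mem hBp hD hiB (hCD (hBC hiB))
  have hBC : B = C := hBC.antisymm (hBD ▸ hCD)
  by_contra hB2
  exact (hqp.1 C hC (hBC ▸ hB2)).2 (hBC ▸ hB)

lemma antisymm {p q : IP n} (hpq : IPle p.1 q.1) (hqp : IPle q.1 p.1) : p = q := by
  have h2 : p.1.2 = q.1.2 := (open_subset hpq hqp).antisymm (open_subset hqp hpq)
  have hsub : ∀ {a b : IP n}, IPle a.1 b.1 → a.1.2 = b.1.2 → a.1.1 ⊆ b.1.1 := by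
    intro a b hab h U hU
    by_cases hU2 : U ∈ a.1.2
    · exact b.2.2 (h ▸ hU2)
    · exact (hab.1 U hU hU2).1
  exact Subtype.ext (Prod.ext (hsub hpq h2 |>.antisymm (hsub hqp h2.symm)) h2)

end IPle

namespace IP

variable {n : ℕ}

def mobiusFormula (τ : IP n) : ℤ :=
  if ∀ U ∈ τ.1.1, U ∉ τ.1.2 → U.card = 1
    then (-1) ^ (n - τ.1.2.card) * ∏ V ∈ τ.1.2, ((V.card - 1).factorial : ℤ)
    else 0

def closedSingletons (p : Finset (Finset (Fin n)) × Finset (Finset (Fin n))) : Finset (Fin n) :=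
  {i | {i} ∈ p.1 ∧ {i} ∉ p.2}

def blockPerms (P : Finset (Finset (Fin n))) : Finset (Perm (Fin n)) :=
  {w | ∀ B ∈ P, ∀ i ∈ B, w i ∈ B}

def ofPerm (w : Perm (Fin n)) (M : Finset (Fin n)) : IP n :=
  ⟨(w.orbitPartition, w.orbitPartition \ M.image fun i => {i}),
    isPartition_orbitPartition w, sdiff_subset⟩

lemma sdiff_eq_image_closedSingletons (p : Finset (Finset (Fin n)) × Finset (Finset (Fin n)))
    (hp : ∀ U ∈ p.1, U ∉ p.2 → #U = 1) :
    p.1 \ p.2 = (closedSingletons p).image fun i => {i} := by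
  ext B
  simp only [mem_sdiff, mem_image, closedSingletons, mem_filter, mem_univ, true_and]
  constructor
  · rintro ⟨hB, hB2⟩
    obtain ⟨b, rfl⟩ := card_eq_one.1 (hp B hB hB2)
    exact ⟨b, ⟨hB, hB2⟩, rfl⟩
  · rintro ⟨i, hi, rfl⟩
    exact hi

lemma card_eq_one_of_closed_ofPerm (w : Perm (Fin n)) (M : Finset (Fin n)) :
    ∀ U ∈ (ofPerm w M).1.1, U ∉ (ofPerm w M).1.2 → #U = 1 := by
  intro U hU hU2
  simp only [ofPerm, mem_sdiff, not_and, not_not] at hU hU2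
  obtain ⟨i, -, rfl⟩ := mem_image.1 (hU2 hU)
  exact card_singleton i

lemma image_singleton_subset_orbitPartition
    {p : Finset (Finset (Fin n)) × Finset (Finset (Fin n))} {w : Perm (Fin n)}
    (hw : w ∈ blockPerms p.1) {M : Finset (Fin n)} (hM : M ⊆ closedSingletons p) :
    (M.image fun i => {i}) ⊆ w.orbitPartition := by
  intro B hB
  obtain ⟨i, hi, rfl⟩ := mem_image.1 hB
  have hfix : w i = i := by
    simpa using (mem_filter.1 hw).2 {i} (mem_filter.1 (hM hi)).2.1 i (mem_singleton_self i)
  rw [← orbitFinset_eq_singleton hfix]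
  exact w.orbitFinset_mem_orbitPartition i

lemma ofPerm_le (p : IP n) {w : Perm (Fin n)} {M : Finset (Fin n)} (hw : w ∈ blockPerms p.1.1)
    (hM : M ⊆ closedSingletons p.1) : IPle (ofPerm w M).1 p.1 := by
  constructor
  · intro U hU hU2
    simp only [ofPerm, mem_sdiff, not_and, not_not] at hU hU2
    obtain ⟨i, hi, rfl⟩ := mem_image.1 (hU2 hU)
    exact (mem_filter.1 (hM hi)).2
  · intro B hB
    obtain ⟨i, -, rfl⟩ := mem_image.1 (mem_sdiff.1 hB).1
    obtain ⟨C, ⟨hC, hiC⟩, -⟩ := p.2.1.2 i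
    exact ⟨C, hC, w.orbitFinset_subset ((mem_filter.1 hw).2 C hC) hiC⟩

lemma filter_ofPerm_eq_product (p τ : IP n) (hτp : IPle τ.1 p.1)
    (hτ : ∀ U ∈ τ.1.1, U ∉ τ.1.2 → #U = 1) :
    {q ∈ blockPerms p.1.1 ×ˢ (closedSingletons p.1).powerset | ofPerm q.1 q.2 = τ}
      = ({w | w.orbitPartition = τ.1.1} : Finset (Perm (Fin n))) ×ˢ {closedSingletons τ.1} := by
  have hsdiff := sdiff_eq_image_closedSingletons τ.1 hτ
  ext ⟨w, M⟩
  simp only [mem_filter, mem_product, mem_powerset, mem_univ, true_and, mem_singleton]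
  constructor
  · rintro ⟨⟨hw, hM⟩, rfl⟩
    refine ⟨rfl, image_injective singleton_injective ?_⟩
    rw [← hsdiff]
    exact (Finset.sdiff_sdiff_eq_self (image_singleton_subset_orbitPartition hw hM)).symm
  · rintro ⟨hσ, rfl⟩
    refine ⟨⟨?_, fun i hi => ?_⟩, Subtype.ext (Prod.ext hσ ?_)⟩
    · simp only [blockPerms, mem_filter, mem_univ, true_and]
      intro B hB i hi
      obtain ⟨C, hC, hsub⟩ := hτp.exists_superset (hσ ▸ w.orbitFinset_mem_orbitPartition i)
      rw [← p.2.1.eq_of_mem_of_mem hC hB (hsub (w.mem_orbitFinset_self i)) hi]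
      exact hsub (w.apply_mem_orbitFinset i)
    · simp only [closedSingletons, mem_filter, mem_univ, true_and] at hi ⊢
      exact hτp.1 _ hi.1 hi.2
    · change w.orbitPartition \ _ = τ.1.2
      rw [hσ, ← hsdiff, Finset.sdiff_sdiff_eq_self τ.2.2]

lemma sum_filter_ofPerm_eq_mobiusFormula (p τ : IP n) (hτp : IPle τ.1 p.1) :
    ∑ q ∈ blockPerms p.1.1 ×ˢ (closedSingletons p.1).powerset with ofPerm q.1 q.2 = τ,
      (sign q.1 : ℤ) * (-1) ^ #q.2 = mobiusFormula τ := by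
  unfold mobiusFormula
  split_ifs with hτ
  · have hcard : #(closedSingletons τ.1) = #τ.1.1 - #τ.1.2 := by
      rw [← card_image_of_injective _ singleton_injective,
        ← sdiff_eq_image_closedSingletons τ.1 hτ, card_sdiff_of_subset τ.2.2]
    have hprod : ∏ V ∈ τ.1.1, ((#V - 1).factorial : ℤ)
        = ∏ V ∈ τ.1.2, ((#V - 1).factorial : ℤ) :=
      (prod_subset τ.2.2 fun V hV hVT => by simp [hτ V hV hVT]).symm
    have hT := card_le_card τ.2.2
    have hσ := τ.2.1.card_le
    rw [filter_ofPerm_eq_product p τ hτp hτ, sum_product]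
    simp only [sum_singleton]
    rw [← sum_mul, sum_sign_of_orbitPartition_eq τ.2.1, hprod, hcard, mul_right_comm,
      ← pow_add]
    congr 2
    omega
  · refine sum_eq_zero fun q hq => absurd ?_ hτ
    rw [← (mem_filter.1 hq).2]
    exact card_eq_one_of_closed_ofPerm q.1 q.2

theorem sum_mobiusFormula_le_eq_mul (p : IP n) :
    ∑ τ with IPle τ.1 p.1, mobiusFormula τ
      = (∑ w ∈ blockPerms p.1.1, (sign w : ℤ))
        * ∑ M ∈ (closedSingletons p.1).powerset, (-1) ^ #M := by
  rw [sum_mul_sum, ← sum_product' (f := fun w M => (sign w : ℤ) * (-1) ^ #M),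
    ← sum_fiberwise_of_maps_to (t := {τ | IPle τ.1 p.1})
      (g := fun q : Perm (Fin n) × Finset (Fin n) => ofPerm q.1 q.2)]
  · exact sum_congr rfl fun τ hτ =>
      (sum_filter_ofPerm_eq_mobiusFormula p τ (mem_filter.1 hτ).2).symm
  · rintro ⟨w, M⟩ hq
    rw [mem_product, mem_powerset] at hq
    simpa using ofPerm_le p hq.1 hq.2

lemma sum_sign_blockPerms_eq_zero {P : Finset (Finset (Fin n))} (hP : IsPartition P)
    {B : Finset (Fin n)} (hB : B ∈ P) (h : 1 < #B) :
    ∑ w ∈ blockPerms P, (sign w : ℤ) = 0 := by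
  obtain ⟨a, ha, b, hb, hab⟩ := one_lt_card.1 h
  have hswap : ∀ C ∈ P, ∀ x ∈ C, swap a b x ∈ C := by
    intro C hC x hx
    rw [swap_apply_def]
    split_ifs with hxa hxb
    · rwa [hP.eq_of_mem_of_mem hC hB (hxa ▸ hx) ha]
    · rwa [hP.eq_of_mem_of_mem hC hB (hxb ▸ hx) hb]
    · exact hx
  refine sum_sign_eq_zero_of_swap_mul_mem hab fun w hw => ?_
  simp only [blockPerms, mem_filter, mem_univ, true_and] at hw ⊢
  exact fun C hC i hi => hswap C hC _ (hw C hC i hi)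

theorem sum_mobiusFormula_le_eq_zero (p : IP n) (h : ∃ B ∈ p.1.1, B ∉ p.1.2 ∨ 1 < #B) :
    ∑ τ with IPle τ.1 p.1, mobiusFormula τ = 0 := by
  obtain ⟨B, hB, hB'⟩ := h
  rw [sum_mobiusFormula_le_eq_mul]
  by_cases hcard : 1 < #B
  · rw [sum_sign_blockPerms_eq_zero p.2.1 hB hcard, zero_mul]
  · have hB1 : #B = 1 := by
      have := card_pos.2 (p.2.1.1 B hB)
      omega
    obtain ⟨i, rfl⟩ := card_eq_one.1 hB1
    have hi : i ∈ closedSingletons p.1 := by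
      simp [closedSingletons, hB, hB'.resolve_right hcard]
    rw [sum_powerset_neg_one_pow_card_of_nonempty ⟨i, hi⟩, mul_zero]

lemma bot_le (z : IP n) (hz1 : z.1.1 = univ.image fun i => {i})
    (hz2 : z.1.2 = univ.image fun i => {i}) (τ : IP n) : IPle z.1 τ.1 := by
  refine ⟨fun U hU hU2 => absurd (hz2 ▸ hz1 ▸ hU) hU2, fun B hB => ?_⟩
  obtain ⟨i, -, rfl⟩ := mem_image.1 (hz2 ▸ hB)
  obtain ⟨C, ⟨hC, hiC⟩, -⟩ := τ.2.1.2 i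
  exact ⟨C, hC, singleton_subset_iff.2 hiC⟩

lemma mobiusFormula_eq_one (z : IP n) (hz1 : z.1.1 = univ.image fun i => {i})
    (hz2 : z.1.2 = univ.image fun i => {i}) : mobiusFormula z = 1 := by
  rw [mobiusFormula, if_pos fun U hU hU2 => absurd (hz2 ▸ hz1 ▸ hU) hU2, hz2,
    card_image_of_injective _ singleton_injective, card_univ, Fintype.card_fin, Nat.sub_self,
    prod_image fun i _ j _ h => singleton_injective h]
  simp

lemma exists_closed_or_nontrivial_of_ne (p z : IP n) (hz1 : z.1.1 = univ.image fun i => {i})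
    (hz2 : z.1.2 = univ.image fun i => {i}) (hpz : p ≠ z) :
    ∃ B ∈ p.1.1, B ∉ p.1.2 ∨ 1 < #B := by
  by_contra! h
  have hP := p.2.1.eq_image_singleton fun B hB => (h B hB).2
  refine hpz (Subtype.ext (Prod.ext (hP.trans hz1.symm) ?_))
  rw [hz2, ← hP]
  exact p.2.2.antisymm fun B hB => (h B hB).1

end IP

theorem stmt3 (n : ℕ) (μ : IP n → IP n → ℤ)
    (hmu1 : ∀ x, μ x x = 1)
    (hmu2 : ∀ x y : IP n, IPle x.1 y.1 → x ≠ y →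
      ∑ τ ∈ Finset.univ.filter (fun τ : IP n => IPle x.1 τ.1 ∧ IPle τ.1 y.1),
        μ x τ = 0)
    (z : IP n)
    (hz1 : z.1.1 = Finset.univ.image fun i : Fin n => ({i} : Finset (Fin n)))
    (hz2 : z.1.2 = Finset.univ.image fun i : Fin n => ({i} : Finset (Fin n)))
    (p : IP n) :
    μ z p = if ∀ U ∈ p.1.1, U ∉ p.1.2 → U.card = 1
      then (-1) ^ (n - p.1.2.card) * ∏ V ∈ p.1.2, ((V.card - 1).factorial : ℤ)
      else 0 := by
  show μ z p = IP.mobiusFormula p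
  have hbot := IP.bot_le z hz1 hz2
  have hsum_bot : ∀ f : IP n → ℤ, ∑ τ with IPle τ.1 z.1, f τ = f z := fun f =>
    sum_eq_single_of_mem z (by simpa using IPle.refl z) fun τ hτ hne =>
      absurd (IPle.antisymm (mem_filter.1 hτ).2 (hbot τ)) hne
  have hlower : ∀ q : IP n,
      ∑ τ with IPle τ.1 q.1, μ z τ = ∑ τ with IPle τ.1 q.1, IP.mobiusFormula τ := by
    intro q
    rcases eq_or_ne q z with rfl | hqz
    · rw [hsum_bot, hsum_bot, hmu1, IP.mobiusFormula_eq_one q hz1 hz2]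
    · rw [IP.sum_mobiusFormula_le_eq_zero q
          (IP.exists_closed_or_nontrivial_of_ne q z hz1 hz2 hqz), ← hmu2 z q (hbot q) hqz.symm]
      exact sum_congr (filter_congr fun τ _ => by simp [hbot τ]) fun _ _ => rfl
  exact eq_of_forall_sum_filter_rel_eq (r := fun a b : IP n => IPle a.1 b.1) IPle.refl IPle.trans
    IPle.antisymm hlower p
end

section
/- Identify {1,…,2n} with the ordered set {1 < 1' < 2 < 2' < … < n < n'} (via i ↦ 2i−1, i' ↦ 2i). Define Φ : INC(n) → INC_{1,2}(2n) blockwise as follows: each closed block {i_1<…<i_k} of (π,S) is replaced by the pairs {i_1, i_k'}, {i_1', i_2}, …, {i_{k−1}', i_k}; each open block {i_1<…<i_k} is replaced by the singletons {i_1}, {i_k'} together with the pairs {i_1', i_2}, …, {i_{k−1}', i_k}. Then Φ is a well-defined poset isomorphism from INC(n) onto INC_{1,2}(2n), and it maps each (π,S) with exactly ℓ open blocks to a partition with exactly 2ℓ singleton blocks. -/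
open Finset
open scoped Classical

/-- Incomplete non-crossing partitions. -/
abbrev INC (n : ℕ) :=
  {p : Finset (Finset (Fin n)) × Finset (Finset (Fin n)) //
    IsPartition p.1 ∧ IsNoncrossing p.1 ∧ p.2 ⊆ p.1 ∧ ∀ B ∈ p.2, IsOuter p.1 B}

/-- In the identification of `{1,…,2n}` with `{1 < 1' < 2 < 2' < … < n < n'}`,
the position of `i`. -/
def lo {n : ℕ} (i : Fin n) : Fin (2 * n) := ⟨2 * i.val, by have := i.isLt; omega⟩

/-- In the identification of `{1,…,2n}` with `{1 < 1' < 2 < 2' < … < n < n'}`,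
the position of `i'`. -/
def hi {n : ℕ} (i : Fin n) : Fin (2 * n) := ⟨2 * i.val + 1, by have := i.isLt; omega⟩


section Basics
variable {n : ℕ}

lemma lo_val (a : Fin n) : (lo a).val = 2 * a.val := rfl
lemma hi_val (a : Fin n) : (hi a).val = 2 * a.val + 1 := rfl

lemma lo_lt_lo {a b : Fin n} : lo a < lo b ↔ a < b := by
  simp only [Fin.lt_def, lo_val]; omega
lemma hi_lt_hi {a b : Fin n} : hi a < hi b ↔ a < b := by
  simp only [Fin.lt_def, hi_val]; omega
lemma lo_lt_hi {a b : Fin n} : lo a < hi b ↔ a ≤ b := by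
  simp only [Fin.lt_def, Fin.le_def, lo_val, hi_val]; omega
lemma hi_lt_lo {a b : Fin n} : hi a < lo b ↔ a < b := by
  simp only [Fin.lt_def, lo_val, hi_val]; omega
lemma lo_ne_hi {a b : Fin n} : lo a ≠ hi b := by
  simp only [ne_eq, Fin.ext_iff, lo_val, hi_val]; omega
lemma hi_ne_lo {a b : Fin n} : hi a ≠ lo b := by
  simp only [ne_eq, Fin.ext_iff, lo_val, hi_val]; omega
lemma lo_inj {a b : Fin n} : lo a = lo b ↔ a = b := by
  simp only [Fin.ext_iff, lo_val]; omega
lemma hi_inj {a b : Fin n} : hi a = hi b ↔ a = b := by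
  simp only [Fin.ext_iff, hi_val]; omega
lemma lo_le_lo {a b : Fin n} : lo a ≤ lo b ↔ a ≤ b := by
  simp only [Fin.le_def, lo_val]; omega
lemma hi_le_hi {a b : Fin n} : hi a ≤ hi b ↔ a ≤ b := by
  simp only [Fin.le_def, hi_val]; omega

lemma fine_cases (y : Fin (2*n)) : ∃ x : Fin n, y = lo x ∨ y = hi x := by
  refine ⟨⟨y.val / 2, by have := y.isLt; omega⟩, ?_⟩
  rcases Nat.even_or_odd y.val with h | h
  · left; rw [Fin.ext_iff]; rcases h with ⟨c, hc⟩; simp only [lo_val]; omega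
  · right; rw [Fin.ext_iff]; rcases h with ⟨c, hc⟩; simp only [hi_val]; omega

lemma part_disj {m : ℕ} {P : Finset (Finset (Fin m))} (h : IsPartition P) {B C : Finset (Fin m)}
    (hB : B ∈ P) (hC : C ∈ P) {x : Fin m} (hxB : x ∈ B) (hxC : x ∈ C) : B = C := by
  obtain ⟨D, -, hD⟩ := h.2 x
  rw [hD B ⟨hB, hxB⟩, hD C ⟨hC, hxC⟩]

lemma pair_eq_of_subset {α : Type*} [DecidableEq α] {a b : α} {C : Finset α}
    (hab : a ≠ b) (hsub : ({a, b} : Finset α) ⊆ C) (hcard : C.card ≤ 2) : C = ({a, b} : Finset α) :=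
  (Finset.eq_of_subset_of_card_le hsub (by rw [Finset.card_pair hab]; exact hcard)).symm

end Basics

section Phi
variable {n : ℕ}

/-- The defining predicate for blocks of `Φ p`. -/
def phiPred (p : INC n) (C : Finset (Fin (2 * n))) : Prop :=
  ∃ B ∈ p.1.1,
    ((∃ i ∈ B, ∃ j ∈ B, i < j ∧ (∀ k ∈ B, ¬(i < k ∧ k < j)) ∧ C = {hi i, lo j})
      ∨ (B ∉ p.1.2 ∧ ∃ m ∈ B, ∃ M ∈ B, (∀ x ∈ B, m ≤ x ∧ x ≤ M) ∧ C = {lo m, hi M})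
      ∨ (B ∈ p.1.2 ∧ ∃ m ∈ B, (∀ x ∈ B, m ≤ x) ∧ C = {lo m})
      ∨ (B ∈ p.1.2 ∧ ∃ M ∈ B, (∀ x ∈ B, x ≤ M) ∧ C = {hi M}))

noncomputable def phiSet (p : INC n) : Finset (Finset (Fin (2 * n))) :=
  Finset.univ.powerset.filter (phiPred p)

lemma mem_phiSet {p : INC n} {C : Finset (Fin (2 * n))} : C ∈ phiSet p ↔ phiPred p C := by
  simp [phiSet, Finset.mem_filter, Finset.subset_univ]

lemma phi_card {p : INC n} {C : Finset (Fin (2 * n))} (h : phiPred p C) :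
    C.card = 1 ∨ C.card = 2 := by
  obtain ⟨B, hB, h | h | h | h⟩ := h
  · obtain ⟨i, hi', j, hj, hij, hcon, rfl⟩ := h
    exact Or.inr (Finset.card_pair hi_ne_lo)
  · obtain ⟨hS, m, hm, M, hM, hmm, rfl⟩ := h
    exact Or.inr (Finset.card_pair lo_ne_hi)
  · obtain ⟨hS, m, hm, hmm, rfl⟩ := h
    exact Or.inl (Finset.card_singleton _)
  · obtain ⟨hS, m, hm, hmm, rfl⟩ := h
    exact Or.inl (Finset.card_singleton _)

lemma lo_char {p : INC n} {C : Finset (Fin (2 * n))} {x : Fin n}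
    (h : phiPred p C) (hx : lo x ∈ C) :
    ∃ B ∈ p.1.1, x ∈ B ∧
      ((∃ i ∈ B, i < x ∧ (∀ k ∈ B, ¬(i < k ∧ k < x)) ∧ C = {hi i, lo x})
        ∨ ((∀ z ∈ B, x ≤ z) ∧ B ∉ p.1.2 ∧ ∃ M ∈ B, (∀ z ∈ B, z ≤ M) ∧ C = {lo x, hi M})
        ∨ ((∀ z ∈ B, x ≤ z) ∧ B ∈ p.1.2 ∧ C = {lo x})) := by
  obtain ⟨B, hB, h | h | h | h⟩ := h
  · obtain ⟨i, hiB, j, hjB, hij, hcon, rfl⟩ := h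
    simp only [Finset.mem_insert, Finset.mem_singleton] at hx
    rcases hx with hx | hx
    · exact absurd hx.symm hi_ne_lo
    · obtain rfl := lo_inj.1 hx.symm
      exact ⟨B, hB, hjB, Or.inl ⟨i, hiB, hij, hcon, rfl⟩⟩
  · obtain ⟨hS, m, hm, M, hM, hmm, rfl⟩ := h
    simp only [Finset.mem_insert, Finset.mem_singleton] at hx
    rcases hx with hx | hx
    · obtain rfl := lo_inj.1 hx.symm
      exact ⟨B, hB, hm, Or.inr (Or.inl ⟨fun z hz => (hmm z hz).1, hS,
        M, hM, fun z hz => (hmm z hz).2, rfl⟩)⟩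
    · exact absurd hx lo_ne_hi
  · obtain ⟨hS, m, hm, hmm, rfl⟩ := h
    simp only [Finset.mem_singleton] at hx
    obtain rfl := lo_inj.1 hx.symm
    exact ⟨B, hB, hm, Or.inr (Or.inr ⟨hmm, hS, rfl⟩)⟩
  · obtain ⟨hS, M, hM, hMM, rfl⟩ := h
    simp only [Finset.mem_singleton] at hx
    exact absurd hx lo_ne_hi

lemma hi_char {p : INC n} {C : Finset (Fin (2 * n))} {x : Fin n}
    (h : phiPred p C) (hx : hi x ∈ C) :
    ∃ B ∈ p.1.1, x ∈ B ∧
      ((∃ j ∈ B, x < j ∧ (∀ k ∈ B, ¬(x < k ∧ k < j)) ∧ C = {hi x, lo j})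
        ∨ ((∀ z ∈ B, z ≤ x) ∧ B ∉ p.1.2 ∧ ∃ m ∈ B, (∀ z ∈ B, m ≤ z) ∧ C = {lo m, hi x})
        ∨ ((∀ z ∈ B, z ≤ x) ∧ B ∈ p.1.2 ∧ C = {hi x})) := by
  obtain ⟨B, hB, h | h | h | h⟩ := h
  · obtain ⟨i, hiB, j, hjB, hij, hcon, rfl⟩ := h
    simp only [Finset.mem_insert, Finset.mem_singleton] at hx
    rcases hx with hx | hx
    · obtain rfl := hi_inj.1 hx.symm
      exact ⟨B, hB, hiB, Or.inl ⟨j, hjB, hij, hcon, rfl⟩⟩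
    · exact absurd hx.symm lo_ne_hi
  · obtain ⟨hS, m, hm, M, hM, hmm, rfl⟩ := h
    simp only [Finset.mem_insert, Finset.mem_singleton] at hx
    rcases hx with hx | hx
    · exact absurd hx hi_ne_lo
    · obtain rfl := hi_inj.1 hx.symm
      exact ⟨B, hB, hM, Or.inr (Or.inl ⟨fun z hz => (hmm z hz).2, hS,
        m, hm, fun z hz => (hmm z hz).1, rfl⟩)⟩
  · obtain ⟨hS, m, hm, hmm, rfl⟩ := h
    simp only [Finset.mem_singleton] at hx
    exact absurd hx hi_ne_lo
  · obtain ⟨hS, M, hM, hMM, rfl⟩ := h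
    simp only [Finset.mem_singleton] at hx
    obtain rfl := hi_inj.1 hx.symm
    exact ⟨B, hB, hM, Or.inr (Or.inr ⟨hMM, hS, rfl⟩)⟩

end Phi

section PhiPart
variable {n : ℕ}

lemma lo_exists (p : INC n) (x : Fin n) : ∃ C, phiPred p C ∧ lo x ∈ C := by
  obtain ⟨B, ⟨hB, hxB⟩, -⟩ := p.2.1.2 x
  by_cases hmin : ∀ z ∈ B, x ≤ z
  · by_cases hS : B ∈ p.1.2
    · exact ⟨{lo x}, ⟨B, hB, Or.inr (Or.inr (Or.inl ⟨hS, x, hxB, hmin, rfl⟩))⟩,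
        Finset.mem_singleton_self _⟩
    · exact ⟨{lo x, hi (B.max' ⟨x, hxB⟩)}, ⟨B, hB, Or.inr (Or.inl ⟨hS, x, hxB, B.max' _,
        B.max'_mem _, fun z hz => ⟨hmin z hz, B.le_max' z hz⟩, rfl⟩)⟩,
        Finset.mem_insert_self _ _⟩
  · push_neg at hmin
    obtain ⟨z, hzB, hzx⟩ := hmin
    have hTne : (B.filter (fun t => t < x)).Nonempty := ⟨z, Finset.mem_filter.2 ⟨hzB, hzx⟩⟩
    set i := (B.filter (fun t => t < x)).max' hTne with hidef
    have hiT : i ∈ B.filter (fun t => t < x) := Finset.max'_mem _ hTne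
    have hiB : i ∈ B := (Finset.mem_filter.1 hiT).1
    have hix : i < x := (Finset.mem_filter.1 hiT).2
    refine ⟨{hi i, lo x}, ⟨B, hB, Or.inl ⟨i, hiB, x, hxB, hix, fun k hk h2 => ?_, rfl⟩⟩, by simp⟩
    have hkT : k ∈ B.filter (fun t => t < x) := Finset.mem_filter.2 ⟨hk, h2.2⟩
    exact absurd (Finset.le_max' (B.filter (fun t => t < x)) k hkT) (not_le.2 h2.1)

lemma hi_exists (p : INC n) (x : Fin n) : ∃ C, phiPred p C ∧ hi x ∈ C := by
  obtain ⟨B, ⟨hB, hxB⟩, -⟩ := p.2.1.2 x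
  by_cases hmax : ∀ z ∈ B, z ≤ x
  · by_cases hS : B ∈ p.1.2
    · exact ⟨{hi x}, ⟨B, hB, Or.inr (Or.inr (Or.inr ⟨hS, x, hxB, hmax, rfl⟩))⟩,
        Finset.mem_singleton_self _⟩
    · exact ⟨{lo (B.min' ⟨x, hxB⟩), hi x}, ⟨B, hB, Or.inr (Or.inl ⟨hS, B.min' _,
        B.min'_mem _, x, hxB, fun z hz => ⟨B.min'_le z hz, hmax z hz⟩, rfl⟩)⟩, by simp⟩
  · push_neg at hmax
    obtain ⟨z, hzB, hzx⟩ := hmax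
    have hTne : (B.filter (fun t => x < t)).Nonempty := ⟨z, Finset.mem_filter.2 ⟨hzB, hzx⟩⟩
    set j := (B.filter (fun t => x < t)).min' hTne with hjdef
    have hjT : j ∈ B.filter (fun t => x < t) := Finset.min'_mem _ hTne
    have hjB : j ∈ B := (Finset.mem_filter.1 hjT).1
    have hxj : x < j := (Finset.mem_filter.1 hjT).2
    refine ⟨{hi x, lo j}, ⟨B, hB, Or.inl ⟨x, hxB, j, hjB, hxj, fun k hk h2 => ?_, rfl⟩⟩, by simp⟩
    have hkT : k ∈ B.filter (fun t => x < t) := Finset.mem_filter.2 ⟨hk, h2.1⟩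
    exact absurd (Finset.min'_le (B.filter (fun t => x < t)) k hkT) (not_le.2 h2.2)

lemma lo_uniq {p : INC n} {C C' : Finset (Fin (2 * n))} {x : Fin n}
    (h : phiPred p C) (h' : phiPred p C') (hx : lo x ∈ C) (hx' : lo x ∈ C') : C = C' := by
  obtain ⟨B, hB, hxB, hc⟩ := lo_char h hx
  obtain ⟨B', hB', hxB', hc'⟩ := lo_char h' hx'
  obtain rfl := part_disj p.2.1 hB hB' hxB hxB'
  rcases hc with ⟨i, hiB, hix, hcon, rfl⟩ | ⟨hmin, hS, M, hM, hMM, rfl⟩ | ⟨hmin, hS, rfl⟩ <;>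
    rcases hc' with ⟨i', hiB', hix', hcon', rfl⟩ | ⟨hmin', hS', M', hM', hMM', rfl⟩ |
      ⟨hmin', hS', rfl⟩
  · obtain rfl : i = i' := by
      rcases lt_trichotomy i i' with h1 | h1 | h1
      · exact absurd ⟨h1, hix'⟩ (hcon i' hiB')
      · exact h1
      · exact absurd ⟨h1, hix⟩ (hcon' i hiB)
    rfl
  · exact absurd hix (not_lt.2 (hmin' i hiB))
  · exact absurd hix (not_lt.2 (hmin' i hiB))
  · exact absurd hix' (not_lt.2 (hmin i' hiB'))
  · obtain rfl : M = M' := le_antisymm (hMM' M hM) (hMM M' hM')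
    rfl
  · exact absurd hS' hS
  · exact absurd hix' (not_lt.2 (hmin i' hiB'))
  · exact absurd hS hS'
  · rfl

lemma hi_uniq {p : INC n} {C C' : Finset (Fin (2 * n))} {x : Fin n}
    (h : phiPred p C) (h' : phiPred p C') (hx : hi x ∈ C) (hx' : hi x ∈ C') : C = C' := by
  obtain ⟨B, hB, hxB, hc⟩ := hi_char h hx
  obtain ⟨B', hB', hxB', hc'⟩ := hi_char h' hx'
  obtain rfl := part_disj p.2.1 hB hB' hxB hxB'
  rcases hc with ⟨j, hjB, hxj, hcon, rfl⟩ | ⟨hmax, hS, m, hm, hmm, rfl⟩ | ⟨hmax, hS, rfl⟩ <;>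
    rcases hc' with ⟨j', hjB', hxj', hcon', rfl⟩ | ⟨hmax', hS', m', hm', hmm', rfl⟩ |
      ⟨hmax', hS', rfl⟩
  · obtain rfl : j = j' := by
      rcases lt_trichotomy j j' with h1 | h1 | h1
      · exact absurd ⟨hxj, h1⟩ (hcon' j hjB)
      · exact h1
      · exact absurd ⟨hxj', h1⟩ (hcon j' hjB')
    rfl
  · exact absurd hxj (not_lt.2 (hmax' j hjB))
  · exact absurd hxj (not_lt.2 (hmax' j hjB))
  · exact absurd hxj' (not_lt.2 (hmax j' hjB'))
  · obtain rfl : m = m' := le_antisymm (hmm m' hm') (hmm' m hm)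
    rfl
  · exact absurd hS' hS
  · exact absurd hxj' (not_lt.2 (hmax j' hjB'))
  · exact absurd hS hS'
  · rfl

lemma phi_partition (p : INC n) : IsPartition (phiSet p) := by
  constructor
  · intro C hC
    rcases phi_card (mem_phiSet.1 hC) with h | h <;> exact Finset.card_pos.1 (by omega)
  · intro y
    obtain ⟨x, rfl | rfl⟩ := fine_cases y
    · obtain ⟨C, hC, hxC⟩ := lo_exists p x
      exact ⟨C, ⟨mem_phiSet.2 hC, hxC⟩,
        fun D hD => lo_uniq (mem_phiSet.1 hD.1) hC hD.2 hxC⟩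
    · obtain ⟨C, hC, hxC⟩ := hi_exists p x
      exact ⟨C, ⟨mem_phiSet.2 hC, hxC⟩,
        fun D hD => hi_uniq (mem_phiSet.1 hD.1) hC hD.2 hxC⟩

end PhiPart

section PhiNC
variable {n : ℕ}

lemma pair_inj {m : ℕ} {u v s t : Fin m} (huv : u < v) (hst : s < t)
    (h : ({u, v} : Finset (Fin m)) = {s, t}) : u = s ∧ v = t := by
  have hu : u = s ∨ u = t := by
    have := (Finset.ext_iff.1 h u).1 (by simp)
    simpa using this
  have hv : v = s ∨ v = t := by
    have := (Finset.ext_iff.1 h v).1 (by simp)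
    simpa using this
  have hs : s = u ∨ s = v := by
    have := (Finset.ext_iff.1 h s).2 (by simp)
    simpa using this
  rcases hu with rfl | rfl
  · rcases hv with rfl | rfl
    · exact absurd rfl (ne_of_lt huv)
    · exact ⟨rfl, rfl⟩
  · rcases hs with rfl | rfl
    · exact absurd rfl (ne_of_lt hst)
    · exact absurd (lt_trans huv hst) (lt_irrefl _)

lemma pair_inv {p : INC n} {u v : Fin (2 * n)} (h : phiPred p ({u, v} : Finset (Fin (2 * n))))
    (huv : u < v) :
    ∃ B ∈ p.1.1,
      ((∃ a ∈ B, ∃ b ∈ B, a < b ∧ (∀ k ∈ B, ¬(a < k ∧ k < b)) ∧ u = hi a ∧ v = lo b)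
        ∨ (B ∉ p.1.2 ∧ ∃ m ∈ B, ∃ M ∈ B, (∀ x ∈ B, m ≤ x ∧ x ≤ M) ∧ u = lo m ∧ v = hi M)) := by
  obtain ⟨B, hB, h | h | h | h⟩ := h
  · obtain ⟨a, haB, b, hbB, hab, hcon, heq⟩ := h
    obtain ⟨h1, h2⟩ := pair_inj huv (hi_lt_lo.2 hab) heq
    exact ⟨B, hB, Or.inl ⟨a, haB, b, hbB, hab, hcon, h1, h2⟩⟩
  · obtain ⟨hS, m, hm, M, hM, hmm, heq⟩ := h
    obtain ⟨h1, h2⟩ := pair_inj huv (lo_lt_hi.2 (hmm M hM).1) heq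
    exact ⟨B, hB, Or.inr ⟨hS, m, hm, M, hM, hmm, h1, h2⟩⟩
  · obtain ⟨hS, m, hm, hmm, heq⟩ := h
    have : u = lo m ∧ v = lo m := by
      constructor <;> [have := (Finset.ext_iff.1 heq u).1 (by simp);
        have := (Finset.ext_iff.1 heq v).1 (by simp)] <;> simpa using this
    exact absurd (this.1.trans this.2.symm) (ne_of_lt huv)
  · obtain ⟨hS, M, hM, hMM, heq⟩ := h
    have : u = hi M ∧ v = hi M := by
      constructor <;> [have := (Finset.ext_iff.1 heq u).1 (by simp);
        have := (Finset.ext_iff.1 heq v).1 (by simp)] <;> simpa using this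
    exact absurd (this.1.trans this.2.symm) (ne_of_lt huv)

lemma two_mem_pair {p : INC n} {U : Finset (Fin (2 * n))} (hU : phiPred p U) {i k : Fin (2 * n)}
    (hiU : i ∈ U) (hkU : k ∈ U) (hik : i < k) : U = ({i, k} : Finset (Fin (2 * n))) := by
  rcases phi_card hU with h | h
  · exact absurd (Finset.card_le_one.1 (le_of_eq h) _ hiU _ hkU) (ne_of_lt hik)
  · exact pair_eq_of_subset (ne_of_lt hik)
      (Finset.insert_subset_iff.2 ⟨hiU, Finset.singleton_subset_iff.2 hkU⟩) (le_of_eq h)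

lemma phi_nc (p : INC n) : IsNoncrossing (phiSet p) := by
  rintro ⟨U, hU, V, hV, hUV, i, hiU, k, hkU, j, hjV, l, hlV, hij, hjk, hkl⟩
  rw [mem_phiSet] at hU hV
  have hUik : U = {i, k} := two_mem_pair hU hiU hkU (lt_trans hij hjk)
  have hVjl : V = {j, l} := two_mem_pair hV hjV hlV (lt_trans hjk hkl)
  subst hUik; subst hVjl
  obtain ⟨BU, hBU, hu⟩ := pair_inv hU (lt_trans hij hjk)
  obtain ⟨BV, hBV, hv⟩ := pair_inv hV (lt_trans hjk hkl)
  have hnc := p.2.2.1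
  rcases hu with ⟨a, haB, b, hbB, hab, hcon, rfl, rfl⟩ | ⟨hSU, m, hm, M, hM, hmm, rfl, rfl⟩ <;>
    rcases hv with ⟨c, hcB, d, hdB, hcd, hcon', rfl, rfl⟩ |
      ⟨hSV, m', hm', M', hM', hmm', rfl, rfl⟩
  · -- link vs link
    have hac : a < c := hi_lt_hi.1 hij
    have hcb : c < b := hi_lt_lo.1 hjk
    have hbd : b < d := lo_lt_lo.1 hkl
    by_cases hBB : BU = BV
    · exact hcon c (hBB ▸ hcB) ⟨hac, hcb⟩
    · exact hnc ⟨BU, hBU, BV, hBV, hBB, a, haB, b, hbB, c, hcB, d, hdB, hac, hcb, hbd⟩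
  · -- link vs wrap
    have ham : a < m' := hi_lt_lo.1 hij
    have hmb : m' < b := lo_lt_lo.1 hjk
    have hbM : b ≤ M' := lo_lt_hi.1 hkl
    by_cases hBB : BU = BV
    · exact absurd ham (not_lt.2 ((hmm' a (hBB ▸ haB)).1))
    · have hbM' : b < M' := lt_of_le_of_ne hbM (fun h => hBB (part_disj p.2.1 hBU hBV hbB (h ▸ hM')))
      exact hnc ⟨BU, hBU, BV, hBV, hBB, a, haB, b, hbB, m', hm', M', hM', ham, hmb, hbM'⟩
  · -- wrap vs link
    have hmc : m ≤ c := lo_lt_hi.1 hij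
    have hcM : c < M := hi_lt_hi.1 hjk
    have hMd : M < d := hi_lt_lo.1 hkl
    by_cases hBB : BU = BV
    · exact absurd hMd (not_lt.2 ((hmm d (hBB ▸ hdB)).2))
    · have hmc' : m < c := lt_of_le_of_ne hmc (fun h => hBB (part_disj p.2.1 hBU hBV hm (h ▸ hcB)))
      exact hnc ⟨BU, hBU, BV, hBV, hBB, m, hm, M, hM, c, hcB, d, hdB, hmc', hcM, hMd⟩
  · -- wrap vs wrap
    have hmm'' : m < m' := lo_lt_lo.1 hij
    have hm'M : m' ≤ M := lo_lt_hi.1 hjk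
    have hMM' : M < M' := hi_lt_hi.1 hkl
    by_cases hBB : BU = BV
    · exact absurd hMM' (not_lt.2 ((hmm M' (hBB ▸ hM')).2))
    · have h2 : m' < M := lt_of_le_of_ne hm'M
        (fun h => hBB (part_disj p.2.1 hBU hBV hM (h ▸ hm')))
      exact hnc ⟨BU, hBU, BV, hBV, hBB, m, hm, M, hM, m', hm', M', hM', hmm'', h2, hMM'⟩

end PhiNC

section PhiOuter
variable {n : ℕ}

lemma phi_outer (p : INC n) : ∀ C ∈ phiSet p, C.card = 1 → IsOuter (phiSet p) C := by
  intro C hCmem hcard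
  have hC := mem_phiSet.1 hCmem
  rintro ⟨U, hUmem, hUne, i0, hi0, j0, hj0, hstrad⟩
  have hU := mem_phiSet.1 hUmem
  have hnc := p.2.2.1
  obtain ⟨B, hB, hform⟩ := hC
  rcases hform with ⟨i, hiB, j, hjB, hij, hcon, rfl⟩ | ⟨hS, m, hm, M, hM, hmm, rfl⟩ |
      ⟨hS, m, hm, hmin, rfl⟩ | ⟨hS, M, hM, hmax, rfl⟩
  · rw [Finset.card_pair hi_ne_lo] at hcard; exact absurd hcard (by norm_num)
  · rw [Finset.card_pair lo_ne_hi] at hcard; exact absurd hcard (by norm_num)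
  · -- C = {lo m}, B open, m = min B
    obtain ⟨h1, h2⟩ := hstrad (lo m) (Finset.mem_singleton_self _)
    have hU2 : U = {i0, j0} := two_mem_pair hU hi0 hj0 (lt_trans h1 h2)
    subst hU2
    obtain ⟨B', hB', hul | huw⟩ := pair_inv hU (lt_trans h1 h2)
    · obtain ⟨a, haB, b, hbB, hab, hcon', rfl, rfl⟩ := hul
      have ham : a < m := hi_lt_lo.1 h1
      have hmb : m < b := lo_lt_lo.1 h2
      by_cases hBB : B' = B
      · exact absurd ham (not_lt.2 (hmin a (hBB ▸ haB)))
      · have hMbB : B.max' ⟨m, hm⟩ ∈ B := B.max'_mem _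
        have hbMb : b ≠ B.max' ⟨m, hm⟩ := fun h => hBB (part_disj p.2.1 hB' hB hbB (h ▸ hMbB))
        rcases lt_or_gt_of_ne hbMb with hlt | hgt
        · exact hnc ⟨B', hB', B, hB, hBB, a, haB, b, hbB, m, hm, B.max' ⟨m, hm⟩, hMbB,
            ham, hmb, hlt⟩
        · exact p.2.2.2.2 B hS ⟨B', hB', hBB, a, haB, b, hbB, fun x hx =>
            ⟨lt_of_lt_of_le ham (hmin x hx), lt_of_le_of_lt (B.le_max' x hx) hgt⟩⟩
    · obtain ⟨hSU, m', hm', M', hM', hmm', rfl, rfl⟩ := huw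
      have hBB : B' ≠ B := fun h => hSU (h ▸ hS)
      have hm'm : m' < m := lo_lt_lo.1 h1
      have hMbB : B.max' ⟨m, hm⟩ ∈ B := B.max'_mem _
      have hM'Mb : M' ≠ B.max' ⟨m, hm⟩ := fun h => hBB (part_disj p.2.1 hB' hB hM' (h ▸ hMbB))
      have hmM' : m < M' := lt_of_le_of_ne (lo_lt_hi.1 h2)
        (fun h => hBB (part_disj p.2.1 hB' hB hM' (h ▸ hm)))
      rcases lt_or_gt_of_ne hM'Mb with hlt | hgt
      · exact hnc ⟨B', hB', B, hB, hBB, m', hm', M', hM', m, hm, B.max' ⟨m, hm⟩, hMbB,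
          hm'm, hmM', hlt⟩
      · exact p.2.2.2.2 B hS ⟨B', hB', hBB, m', hm', M', hM', fun x hx =>
          ⟨lt_of_lt_of_le hm'm (hmin x hx), lt_of_le_of_lt (B.le_max' x hx) hgt⟩⟩
  · -- C = {hi M}, B open, M = max B
    obtain ⟨h1, h2⟩ := hstrad (hi M) (Finset.mem_singleton_self _)
    have hU2 : U = {i0, j0} := two_mem_pair hU hi0 hj0 (lt_trans h1 h2)
    subst hU2
    obtain ⟨B', hB', hul | huw⟩ := pair_inv hU (lt_trans h1 h2)
    · obtain ⟨a, haB, b, hbB, hab, hcon', rfl, rfl⟩ := hul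
      have haM : a < M := hi_lt_hi.1 h1
      have hMb : M < b := hi_lt_lo.1 h2
      by_cases hBB : B' = B
      · exact absurd hMb (not_lt.2 (hmax b (hBB ▸ hbB)))
      · have hmBB : B.min' ⟨M, hM⟩ ∈ B := B.min'_mem _
        have hamB : a ≠ B.min' ⟨M, hM⟩ := fun h => hBB (part_disj p.2.1 hB' hB haB (h ▸ hmBB))
        rcases lt_or_gt_of_ne hamB with hlt | hgt
        · exact p.2.2.2.2 B hS ⟨B', hB', hBB, a, haB, b, hbB, fun x hx =>
            ⟨lt_of_lt_of_le hlt (B.min'_le x hx), lt_of_le_of_lt (hmax x hx) hMb⟩⟩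
        · exact hnc ⟨B, hB, B', hB', fun h => hBB h.symm, B.min' ⟨M, hM⟩, hmBB, M, hM,
            a, haB, b, hbB, hgt, haM, hMb⟩
    · obtain ⟨hSU, m', hm', M', hM', hmm', rfl, rfl⟩ := huw
      have hBB : B' ≠ B := fun h => hSU (h ▸ hS)
      have hMM' : M < M' := hi_lt_hi.1 h2
      have hmBB : B.min' ⟨M, hM⟩ ∈ B := B.min'_mem _
      have hm'M : m' < M := lt_of_le_of_ne (lo_lt_hi.1 h1)
        (fun h => hBB (part_disj p.2.1 hB' hB hm' (h ▸ hM)))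
      have hm'mB : m' ≠ B.min' ⟨M, hM⟩ := fun h => hBB (part_disj p.2.1 hB' hB hm' (h ▸ hmBB))
      rcases lt_or_gt_of_ne hm'mB with hlt | hgt
      · exact p.2.2.2.2 B hS ⟨B', hB', hBB, m', hm', M', hM', fun x hx =>
          ⟨lt_of_lt_of_le hlt (B.min'_le x hx), lt_of_le_of_lt (hmax x hx) hMM'⟩⟩
      · exact hnc ⟨B, hB, B', hB', fun h => hBB h.symm, B.min' ⟨M, hM⟩, hmBB, M, hM,
          m', hm', M', hM', hgt, hm'M, hMM'⟩

noncomputable def PhiFun (p : INC n) : INC12 (2 * n) :=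
  ⟨phiSet p, phi_partition p, phi_nc p, fun B hB => phi_card (mem_phiSet.1 hB), phi_outer p⟩

end PhiOuter

section PhiCount
variable {n : ℕ}

noncomputable def fLo (B : Finset (Fin n)) : Finset (Fin (2 * n)) :=
  (B.filter (fun z => ∀ w ∈ B, z ≤ w)).image lo

noncomputable def fHi (B : Finset (Fin n)) : Finset (Fin (2 * n)) :=
  (B.filter (fun z => ∀ w ∈ B, w ≤ z)).image hi

lemma fLo_eq {B : Finset (Fin n)} {m : Fin n} (hm : m ∈ B) (hmin : ∀ w ∈ B, m ≤ w) :
    fLo B = {lo m} := by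
  have h1 : B.filter (fun z => ∀ w ∈ B, z ≤ w) = {m} := by
    ext z
    simp only [Finset.mem_filter, Finset.mem_singleton]
    constructor
    · rintro ⟨hz, hlb⟩; exact le_antisymm (hlb m hm) (hmin z hz)
    · rintro rfl; exact ⟨hm, hmin⟩
  rw [fLo, h1, Finset.image_singleton]

lemma fHi_eq {B : Finset (Fin n)} {M : Fin n} (hM : M ∈ B) (hmax : ∀ w ∈ B, w ≤ M) :
    fHi B = {hi M} := by
  have h1 : B.filter (fun z => ∀ w ∈ B, w ≤ z) = {M} := by
    ext z
    simp only [Finset.mem_filter, Finset.mem_singleton]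
    constructor
    · rintro ⟨hz, hub⟩; exact le_antisymm (hmax z hz) (hub M hM)
    · rintro rfl; exact ⟨hM, hmax⟩
  rw [fHi, h1, Finset.image_singleton]

lemma phi_count (p : INC n) :
    ((phiSet p).filter fun B => B.card = 1).card = 2 * p.1.2.card := by
  have hSπ : ∀ B ∈ p.1.2, B ∈ p.1.1 := fun B hB => p.2.2.2.1 hB
  have hSne : ∀ B ∈ p.1.2, B.Nonempty := fun B hB => p.2.1.1 B (hSπ B hB)
  have hmain : (phiSet p).filter (fun B => B.card = 1) =
      p.1.2.image fLo ∪ p.1.2.image fHi := by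
    ext C
    simp only [Finset.mem_filter, Finset.mem_union, Finset.mem_image]
    constructor
    · rintro ⟨hC, hcard⟩
      obtain ⟨B, hB, hf⟩ := mem_phiSet.1 hC
      rcases hf with ⟨i, hiB, j, hjB, hij, hcon, rfl⟩ | ⟨hS, m, hm, M, hM, hmm, rfl⟩ |
          ⟨hS, m, hm, hmin, rfl⟩ | ⟨hS, M, hM, hmax, rfl⟩
      · rw [Finset.card_pair hi_ne_lo] at hcard; exact absurd hcard (by norm_num)
      · rw [Finset.card_pair lo_ne_hi] at hcard; exact absurd hcard (by norm_num)
      · exact Or.inl ⟨B, hS, (fLo_eq hm hmin).symm ▸ rfl⟩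
      · exact Or.inr ⟨B, hS, (fHi_eq hM hmax).symm ▸ rfl⟩
    · rintro (⟨B, hS, rfl⟩ | ⟨B, hS, rfl⟩)
      · obtain ⟨m, hm, hmin⟩ := Finset.exists_min_image B id (hSne B hS)
        rw [fLo_eq hm (fun w hw => hmin w hw)]
        refine ⟨mem_phiSet.2 ⟨B, hSπ B hS, Or.inr (Or.inr (Or.inl ⟨hS, m, hm,
          fun w hw => hmin w hw, rfl⟩))⟩, Finset.card_singleton _⟩
      · obtain ⟨M, hM, hmax⟩ := Finset.exists_max_image B id (hSne B hS)
        rw [fHi_eq hM (fun w hw => hmax w hw)]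
        refine ⟨mem_phiSet.2 ⟨B, hSπ B hS, Or.inr (Or.inr (Or.inr ⟨hS, M, hM,
          fun w hw => hmax w hw, rfl⟩))⟩, Finset.card_singleton _⟩
  rw [hmain]
  have hinjLo : Set.InjOn fLo ((p.1.2 : Finset (Finset (Fin n))) : Set (Finset (Fin n))) := by
    intro B hB B' hB' heq
    obtain ⟨m, hm, hmin⟩ := Finset.exists_min_image B id (hSne B hB)
    obtain ⟨m', hm', hmin'⟩ := Finset.exists_min_image B' id (hSne B' hB')
    rw [fLo_eq hm hmin, fLo_eq hm' hmin'] at heq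
    have : lo m = lo m' := Finset.singleton_injective heq
    obtain rfl := lo_inj.1 this
    exact part_disj p.2.1 (hSπ B hB) (hSπ B' hB') hm hm'
  have hinjHi : Set.InjOn fHi ((p.1.2 : Finset (Finset (Fin n))) : Set (Finset (Fin n))) := by
    intro B hB B' hB' heq
    obtain ⟨M, hM, hmax⟩ := Finset.exists_max_image B id (hSne B hB)
    obtain ⟨M', hM', hmax'⟩ := Finset.exists_max_image B' id (hSne B' hB')
    rw [fHi_eq hM hmax, fHi_eq hM' hmax'] at heq
    have : hi M = hi M' := Finset.singleton_injective heq
    obtain rfl := hi_inj.1 this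
    exact part_disj p.2.1 (hSπ B hB) (hSπ B' hB') hM hM'
  have hdisj : Disjoint (p.1.2.image fLo) (p.1.2.image fHi) := by
    rw [Finset.disjoint_left]
    rintro C hC1 hC2
    obtain ⟨B, hB, rfl⟩ := Finset.mem_image.1 hC1
    obtain ⟨B', hB', heq⟩ := Finset.mem_image.1 hC2
    obtain ⟨m, hm, hmin⟩ := Finset.exists_min_image B id (hSne B hB)
    obtain ⟨M', hM', hmax'⟩ := Finset.exists_max_image B' id (hSne B' hB')
    rw [fLo_eq hm hmin] at *
    rw [fHi_eq hM' hmax'] at heq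
    exact hi_ne_lo (Finset.singleton_injective heq)
  rw [Finset.card_union_of_disjoint hdisj, Finset.card_image_of_injOn hinjLo,
    Finset.card_image_of_injOn hinjHi]
  omega

end PhiCount

section Order
variable {n : ℕ}

lemma ord_fwd (p q : INC n) (h : IPle p.1 q.1) : Refines (phiSet p) (phiSet q) := by
  intro C hC
  obtain ⟨B, hB, hf⟩ := mem_phiSet.1 hC
  have hncp := p.2.2.1
  rcases hf with ⟨i, hiB, j, hjB, hij, hcon, rfl⟩ | ⟨hS, m, hm, M, hM, hmm, rfl⟩ |
      ⟨hS, m, hm, hmin, rfl⟩ | ⟨hS, M, hM, hmax, rfl⟩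
  · by_cases hS : B ∈ p.1.2
    · obtain ⟨B'', hB'', hsub⟩ := h.2 B hS
      refine ⟨{hi i, lo j}, mem_phiSet.2 ⟨B'', hB'', Or.inl ⟨i, hsub hiB, j, hsub hjB, hij,
        ?_, rfl⟩⟩, subset_rfl⟩
      intro x hx hbet
      by_cases hxB : x ∈ B
      · exact hcon x hxB hbet
      · obtain ⟨Bx, ⟨hBx, hxBx⟩, -⟩ := p.2.1.2 x
        have hne : B ≠ Bx := fun he => hxB (he ▸ hxBx)
        by_cases hSx : Bx ∈ p.1.2
        · by_cases hall : ∀ y ∈ Bx, i < y ∧ y < j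
          · exact p.2.2.2.2 Bx hSx ⟨B, hB, hne, i, hiB, j, hjB, hall⟩
          · push_neg at hall
            obtain ⟨y, hyBx, hy⟩ := hall
            have hyi : y ≠ i := fun he => hne (part_disj p.2.1 hB hBx hiB (he ▸ hyBx))
            have hyj : y ≠ j := fun he => hne (part_disj p.2.1 hB hBx hjB (he ▸ hyBx))
            rcases le_or_gt y i with h1 | h1
            · have hylt : y < i := lt_of_le_of_ne h1 hyi
              exact hncp ⟨Bx, hBx, B, hB, fun he => hne he.symm, y, hyBx, x, hxBx,
                i, hiB, j, hjB, hylt, hbet.1, hbet.2⟩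
            · have hygt : j < y := lt_of_le_of_ne (hy h1) (Ne.symm hyj)
              exact hncp ⟨B, hB, Bx, hBx, hne, i, hiB, j, hjB, x, hxBx, y, hyBx,
                hbet.1, hbet.2, hygt⟩
        · obtain ⟨hBxq, -⟩ := h.1 Bx hBx hSx
          have hBxB'' : Bx = B'' := part_disj q.2.1 hBxq hB'' hxBx hx
          have hiBx : i ∈ Bx := hBxB'' ▸ hsub hiB
          exact hne (part_disj p.2.1 hB hBx hiB hiBx)
    · obtain ⟨hq1, hq2⟩ := h.1 B hB hS
      exact ⟨{hi i, lo j}, mem_phiSet.2 ⟨B, hq1, Or.inl ⟨i, hiB, j, hjB, hij, hcon, rfl⟩⟩,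
        subset_rfl⟩
  · obtain ⟨hq1, hq2⟩ := h.1 B hB hS
    exact ⟨{lo m, hi M}, mem_phiSet.2 ⟨B, hq1, Or.inr (Or.inl ⟨hq2, m, hm, M, hM, hmm, rfl⟩)⟩,
      subset_rfl⟩
  · obtain ⟨C', hC', hmem⟩ := lo_exists q m
    exact ⟨C', mem_phiSet.2 hC', Finset.singleton_subset_iff.2 hmem⟩
  · obtain ⟨C', hC', hmem⟩ := hi_exists q M
    exact ⟨C', mem_phiSet.2 hC', Finset.singleton_subset_iff.2 hmem⟩

lemma step_link {p q : INC n} (h : Refines (phiSet p) (phiSet q)) {B : Finset (Fin n)}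
    (hB : B ∈ p.1.1) {u v : Fin n} (hu : u ∈ B) (hv : v ∈ B) (huv : u < v)
    (hcon : ∀ k ∈ B, ¬(u < k ∧ k < v)) :
    ∃ D ∈ q.1.1, u ∈ D ∧ v ∈ D ∧ (∀ k ∈ D, ¬(u < k ∧ k < v)) := by
  have hC0 : ({hi u, lo v} : Finset (Fin (2 * n))) ∈ phiSet p :=
    mem_phiSet.2 ⟨B, hB, Or.inl ⟨u, hu, v, hv, huv, hcon, rfl⟩⟩
  obtain ⟨C', hC', hsub⟩ := h _ hC0
  have hC'eq : C' = ({hi u, lo v} : Finset (Fin (2 * n))) := by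
    rcases phi_card (mem_phiSet.1 hC') with hc | hc
    · have hm1 : hi u ∈ C' := hsub (Finset.mem_insert_self _ _)
      have hm2 : lo v ∈ C' := hsub (by simp)
      exact absurd (Finset.card_le_one.1 (le_of_eq hc) _ hm1 _ hm2) hi_ne_lo
    · exact pair_eq_of_subset hi_ne_lo hsub (le_of_eq hc)
  rw [hC'eq] at hC'
  obtain ⟨D, hD, hl | hw⟩ := pair_inv (mem_phiSet.1 hC') (hi_lt_lo.2 huv)
  · obtain ⟨a, haD, b, hbD, hab, hcon', h1, h2⟩ := hl
    obtain rfl := hi_inj.1 h1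
    obtain rfl := lo_inj.1 h2
    exact ⟨D, hD, haD, hbD, hcon'⟩
  · obtain ⟨-, m', hm', M', hM', hmm', h1, -⟩ := hw
    exact absurd h1 hi_ne_lo

lemma chain_in {p q : INC n} (h : Refines (phiSet p) (phiSet q)) {B : Finset (Fin n)}
    (hB : B ∈ p.1.1) {D : Finset (Fin n)} (hD : D ∈ q.1.1) {u : Fin n} (hu : u ∈ B)
    (huD : u ∈ D) : ∀ v ∈ B, u ≤ v → v ∈ D := by
  suffices hk : ∀ (k : ℕ) (v : Fin n), v.val ≤ k → v ∈ B → u ≤ v → v ∈ D by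
    exact fun v hv huv => hk v.val v le_rfl hv huv
  intro k
  induction k with
  | zero =>
    intro v hvk hvB huv
    have : u = v := le_antisymm huv (by omega)
    exact this ▸ huD
  | succ k ih =>
    intro v hvk hvB huv
    rcases eq_or_lt_of_le huv with rfl | huv'
    · exact huD
    · have hTne : (B.filter (fun t => t < v)).Nonempty := ⟨u, Finset.mem_filter.2 ⟨hu, huv'⟩⟩
      set w := (B.filter (fun t => t < v)).max' hTne with hwdef
      have hwT : w ∈ B.filter (fun t => t < v) := Finset.max'_mem _ hTne
      have hwB : w ∈ B := (Finset.mem_filter.1 hwT).1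
      have hwv : w < v := (Finset.mem_filter.1 hwT).2
      have huw : u ≤ w := Finset.le_max' (B.filter (fun t => t < v)) u (Finset.mem_filter.2 ⟨hu, huv'⟩)
      have hwD : w ∈ D := ih w (by omega) hwB huw
      have hconwv : ∀ t ∈ B, ¬(w < t ∧ t < v) := by
        intro t ht hbet
        exact absurd (Finset.le_max' (B.filter (fun t => t < v)) t (Finset.mem_filter.2 ⟨ht, hbet.2⟩)) (not_le.2 hbet.1)
      obtain ⟨D', hD', hwD', hvD', -⟩ := step_link h hB hwB hvB hwv hconwv
      have : D' = D := part_disj q.2.1 hD' hD hwD' hwD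
      exact this ▸ hvD'

lemma ord_bwd (p q : INC n) (h : Refines (phiSet p) (phiSet q)) : IPle p.1 q.1 := by
  constructor
  · -- closed blocks
    intro B hB hS
    have hBne : B.Nonempty := p.2.1.1 B hB
    set m := B.min' hBne with hmdef
    set M := B.max' hBne with hMdef
    have hmB : m ∈ B := B.min'_mem hBne
    have hMB : M ∈ B := B.max'_mem hBne
    have hwrap : ({lo m, hi M} : Finset (Fin (2 * n))) ∈ phiSet p :=
      mem_phiSet.2 ⟨B, hB, Or.inr (Or.inl ⟨hS, m, hmB, M, hMB,
        fun x hx => ⟨B.min'_le x hx, B.le_max' x hx⟩, rfl⟩)⟩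
    obtain ⟨C', hC', hsub⟩ := h _ hwrap
    have hC'eq : C' = ({lo m, hi M} : Finset (Fin (2 * n))) := by
      rcases phi_card (mem_phiSet.1 hC') with hc | hc
      · have hm1 : lo m ∈ C' := hsub (Finset.mem_insert_self _ _)
        have hm2 : hi M ∈ C' := hsub (by simp)
        exact absurd (Finset.card_le_one.1 (le_of_eq hc) _ hm1 _ hm2) lo_ne_hi
      · exact pair_eq_of_subset lo_ne_hi hsub (le_of_eq hc)
    rw [hC'eq] at hC'
    obtain ⟨D, hD, hl | hw⟩ := pair_inv (mem_phiSet.1 hC')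
      (lo_lt_hi.2 (B.min'_le M hMB))
    · obtain ⟨a, haD, b, hbD, hab, hcon', h1, -⟩ := hl
      exact absurd h1.symm hi_ne_lo
    · obtain ⟨hDq2, m', hm', M', hM', hmm', h1, h2⟩ := hw
      obtain rfl := lo_inj.1 h1
      obtain rfl := hi_inj.1 h2
      have hBD : B ⊆ D := fun v hv => chain_in h hB hD hmB hm' v hv (B.min'_le v hv)
      have hDB : D ⊆ B := by
        intro x hxD
        by_contra hxB
        have hxm : m ≤ x := (hmm' x hxD).1
        have hxM : x ≤ M := (hmm' x hxD).2
        have hxm' : m < x := lt_of_le_of_ne hxm (fun he => hxB (he ▸ hmB))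
        have hxM' : x < M := lt_of_le_of_ne hxM (fun he => hxB (he.symm ▸ hMB))
        have hT1 : (B.filter (fun t => t < x)).Nonempty := ⟨m, Finset.mem_filter.2 ⟨hmB, hxm'⟩⟩
        have hT2 : (B.filter (fun t => x < t)).Nonempty := ⟨M, Finset.mem_filter.2 ⟨hMB, hxM'⟩⟩
        set w := (B.filter (fun t => t < x)).max' hT1
        set w' := (B.filter (fun t => x < t)).min' hT2
        have hwB : w ∈ B := (Finset.mem_filter.1 (Finset.max'_mem _ hT1)).1
        have hwx : w < x := (Finset.mem_filter.1 (Finset.max'_mem _ hT1)).2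
        have hw'B : w' ∈ B := (Finset.mem_filter.1 (Finset.min'_mem _ hT2)).1
        have hxw' : x < w' := (Finset.mem_filter.1 (Finset.min'_mem _ hT2)).2
        have hcon : ∀ t ∈ B, ¬(w < t ∧ t < w') := by
          intro t ht hbet
          rcases lt_trichotomy t x with h1 | rfl | h1
          · exact absurd (Finset.le_max' (B.filter (fun t => t < x)) t (Finset.mem_filter.2 ⟨ht, h1⟩)) (not_le.2 hbet.1)
          · exact hxB ht
          · exact absurd (Finset.min'_le (B.filter (fun t => x < t)) t (Finset.mem_filter.2 ⟨ht, h1⟩)) (not_le.2 hbet.2)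
        obtain ⟨D', hD', hwD', hw'D', hcon'⟩ := step_link h hB hwB hw'B (lt_trans hwx hxw') hcon
        have hDD : D' = D := part_disj q.2.1 hD' hD hwD' (hBD hwB)
        exact hcon' x (hDD.symm ▸ hxD) ⟨hwx, hxw'⟩
      exact (Finset.Subset.antisymm hBD hDB) ▸ ⟨hD, hDq2⟩
  · -- open blocks
    intro B hS
    have hB : B ∈ p.1.1 := p.2.2.2.1 hS
    have hBne : B.Nonempty := p.2.1.1 B hB
    have hmB : B.min' hBne ∈ B := B.min'_mem hBne
    obtain ⟨D, ⟨hD, hmD⟩, -⟩ := q.2.1.2 (B.min' hBne)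
    exact ⟨D, hD, fun v hv => chain_in h hB hD hmB hmD v hv (B.min'_le v hv)⟩

end Order

section Antisymm
variable {n : ℕ}

lemma sub_block_eq {m : ℕ} {P : Finset (Finset (Fin m))} (h : IsPartition P)
    {B C : Finset (Fin m)} (hB : B ∈ P) (hC : C ∈ P) (hBC : B ⊆ C) (hne : B.Nonempty) :
    B = C := by
  obtain ⟨x, hx⟩ := hne
  exact part_disj h hB hC hx (hBC hx)

lemma iple_blocks_subset {p q : INC n} (hpq : IPle p.1 q.1) (hqp : IPle q.1 p.1) :
    p.1.1 ⊆ q.1.1 := by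
  intro B hB
  by_cases hS : B ∈ p.1.2
  · obtain ⟨C, hC, hsub⟩ := hpq.2 B hS
    have hBne : B.Nonempty := p.2.1.1 B hB
    by_cases hCS : C ∈ q.1.2
    · obtain ⟨D, hD, hsub'⟩ := hqp.2 C hCS
      have hBD : B = D := sub_block_eq p.2.1 hB hD (hsub.trans hsub') hBne
      have hCB : C = B := Finset.Subset.antisymm (hBD ▸ hsub') hsub
      exact hCB ▸ hC
    · obtain ⟨hCp, -⟩ := hqp.1 C hC hCS
      have hBC : B = C := sub_block_eq p.2.1 hB hCp hsub hBne
      exact hBC ▸ hC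
  · exact (hpq.1 B hB hS).1

lemma iple_antisymm {p q : INC n} (hpq : IPle p.1 q.1) (hqp : IPle q.1 p.1) : p = q := by
  have h1 : p.1.1 = q.1.1 :=
    Finset.Subset.antisymm (iple_blocks_subset hpq hqp) (iple_blocks_subset hqp hpq)
  have h2 : p.1.2 = q.1.2 := by
    ext B
    constructor
    · intro hS
      by_contra hBq2
      have hBq1 : B ∈ q.1.1 := h1 ▸ p.2.2.2.1 hS
      exact (hqp.1 B hBq1 hBq2).2 hS
    · intro hS
      by_contra hBp2
      have hBp1 : B ∈ p.1.1 := h1 ▸ q.2.2.2.1 hS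
      exact (hpq.1 B hBp1 hBp2).2 hS
  exact Subtype.ext (Prod.ext h1 h2)

end Antisymm

section Psi
variable {n : ℕ}

def relP (P : Finset (Finset (Fin (2 * n)))) (x y : Fin n) : Prop :=
  ∃ C ∈ P, (lo x ∈ C ∨ hi x ∈ C) ∧ (lo y ∈ C ∨ hi y ∈ C)

def reqP (P : Finset (Finset (Fin (2 * n)))) : Fin n → Fin n → Prop :=
  Relation.EqvGen (relP P)

lemma relP_symm {P : Finset (Finset (Fin (2 * n)))} {x y : Fin n} (h : relP P x y) :
    relP P y x := by
  obtain ⟨C, hC, h1, h2⟩ := h; exact ⟨C, hC, h2, h1⟩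

lemma reqP_refl (P : Finset (Finset (Fin (2 * n)))) (x : Fin n) : reqP P x x :=
  Relation.EqvGen.refl x

lemma reqP_symm {P : Finset (Finset (Fin (2 * n)))} {x y : Fin n} (h : reqP P x y) :
    reqP P y x := Relation.EqvGen.symm x y h

lemma reqP_trans {P : Finset (Finset (Fin (2 * n)))} {x y z : Fin n} (h1 : reqP P x y)
    (h2 : reqP P y z) : reqP P x z := Relation.EqvGen.trans x y z h1 h2

lemma reqP_rel {P : Finset (Finset (Fin (2 * n)))} {x y : Fin n} (h : relP P x y) :
    reqP P x y := Relation.EqvGen.rel x y h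

noncomputable def clsP (P : Finset (Finset (Fin (2 * n)))) (x : Fin n) : Finset (Fin n) :=
  Finset.univ.filter (reqP P x)

lemma mem_clsP {P : Finset (Finset (Fin (2 * n)))} {x y : Fin n} :
    y ∈ clsP P x ↔ reqP P x y := by simp [clsP]

lemma clsP_eq {P : Finset (Finset (Fin (2 * n)))} {x y : Fin n} (h : reqP P x y) :
    clsP P x = clsP P y := by
  ext z
  simp only [mem_clsP]
  exact ⟨fun hz => reqP_trans (reqP_symm h) hz, fun hz => reqP_trans h hz⟩

noncomputable def psiPi (P : Finset (Finset (Fin (2 * n)))) : Finset (Finset (Fin n)) :=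
  Finset.univ.image (clsP P)

noncomputable def psiS (P : Finset (Finset (Fin (2 * n)))) : Finset (Finset (Fin n)) :=
  (psiPi P).filter
    (fun B => ∃ z ∈ B, ({lo z} : Finset (Fin (2 * n))) ∈ P ∨ ({hi z} : Finset (Fin (2 * n))) ∈ P)

lemma psi_partition (P : Finset (Finset (Fin (2 * n)))) : IsPartition (psiPi P) := by
  constructor
  · intro B hB
    obtain ⟨x, -, rfl⟩ := Finset.mem_image.1 hB
    exact ⟨x, mem_clsP.2 (reqP_refl P x)⟩
  · intro x
    refine ⟨clsP P x, ⟨Finset.mem_image.2 ⟨x, Finset.mem_univ x, rfl⟩,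
      mem_clsP.2 (reqP_refl P x)⟩, ?_⟩
    rintro D ⟨hD, hxD⟩
    obtain ⟨z, -, rfl⟩ := Finset.mem_image.1 hD
    exact clsP_eq (mem_clsP.1 hxD)

/-- A singleton block of `P` cannot be strictly straddled by another block. -/
lemma sing_out {P : Finset (Finset (Fin (2 * n)))}
    (hout : ∀ B ∈ P, B.card = 1 → IsOuter P B) {ρ : Fin (2 * n)}
    (hρ : ({ρ} : Finset (Fin (2 * n))) ∈ P) {C : Finset (Fin (2 * n))} (hC : C ∈ P)
    {a b : Fin (2 * n)} (ha : a ∈ C) (hb : b ∈ C) (h1 : a < ρ) (h2 : ρ < b) : False := by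
  have hne : C ≠ {ρ} := by
    rintro rfl
    exact absurd (Finset.mem_singleton.1 ha) (ne_of_lt h1)
  exact hout {ρ} hρ (Finset.card_singleton ρ) ⟨C, hC, hne, a, ha, b, hb, by
    intro z hz
    obtain rfl := Finset.mem_singleton.1 hz
    exact ⟨h1, h2⟩⟩

/-- Noncrossing: a block strictly straddled at one point is entirely inside. -/
lemma fine_pair_nc {P : Finset (Finset (Fin (2 * n)))} (hpart : IsPartition P)
    (hnc : IsNoncrossing P) {C D : Finset (Fin (2 * n))} (hC : C ∈ P) (hD : D ∈ P)
    (hCD : C ≠ D) {a b w : Fin (2 * n)} (ha : a ∈ C) (hb : b ∈ C) (hw : w ∈ D)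
    (h1 : a < w) (h2 : w < b) : ∀ z ∈ D, a < z ∧ z < b := by
  intro z hz
  constructor
  · by_contra hza
    have hzne : z ≠ a := fun he => hCD (part_disj hpart hC hD ha (he ▸ hz))
    have hza' : z < a := lt_of_le_of_ne (not_lt.1 hza) hzne
    exact hnc ⟨D, hD, C, hC, fun he => hCD he.symm, z, hz, w, hw, a, ha, b, hb, hza', h1, h2⟩
  · by_contra hzb
    have hzne : z ≠ b := fun he => hCD (part_disj hpart hC hD hb (he ▸ hz))
    have hzb' : b < z := lt_of_le_of_ne (not_lt.1 hzb) (Ne.symm hzne)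
    exact hnc ⟨C, hC, D, hD, hCD, a, ha, b, hb, w, hw, z, hz, h1, h2, hzb'⟩

lemma repSpec {P : Finset (Finset (Fin (2 * n)))} {C : Finset (Fin (2 * n))} {a : Fin n}
    (h : lo a ∈ C ∨ hi a ∈ C) :
    ∃ ρ ∈ C, 2 * a.val ≤ ρ.val ∧ ρ.val ≤ 2 * a.val + 1 := by
  rcases h with h | h
  · exact ⟨lo a, h, by simp [lo_val], by simp [lo_val]⟩
  · exact ⟨hi a, h, by simp [hi_val], by simp [hi_val]⟩

end Psi

section PsiNC
variable {n : ℕ} {P : Finset (Finset (Fin (2 * n)))}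

lemma blk_step (hpart : IsPartition P) (hnc : IsNoncrossing P)
    (hcard : ∀ B ∈ P, B.card = 1 ∨ B.card = 2)
    {C : Finset (Fin (2 * n))} (hC : C ∈ P) {a b : Fin n}
    (ha : lo a ∈ C ∨ hi a ∈ C) (hb : lo b ∈ C ∨ hi b ∈ C) (hab : a < b)
    {u v : Fin n} (huv : relP P u v) (hua : ¬ reqP P u a)
    (h1 : a < u) (h2 : u < b) : a < v ∧ v < b := by
  obtain ⟨D, hD, hru, hrv⟩ := huv
  obtain ⟨α, hαC, hα1, hα2⟩ := repSpec (P := P) ha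
  obtain ⟨β, hβC, hβ1, hβ2⟩ := repSpec (P := P) hb
  obtain ⟨ρu, hρuD, hu1, hu2⟩ := repSpec (P := P) hru
  obtain ⟨ρv, hρvD, hv1, hv2⟩ := repSpec (P := P) hrv
  have hab' : a.val < b.val := hab
  have h1' : a.val < u.val := h1
  have h2' : u.val < b.val := h2
  have hαβ : α ≠ β := by
    intro he
    have : α.val = β.val := congrArg Fin.val he
    omega
  have hCcard : C.card ≤ 2 := by rcases hcard C hC with h | h <;> omega
  have hCpair : C = {α, β} := pair_eq_of_subset hαβ
    (Finset.insert_subset_iff.2 ⟨hαC, Finset.singleton_subset_iff.2 hβC⟩) hCcard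
  have hαρu : α < ρu := by rw [Fin.lt_def]; omega
  have hρuβ : ρu < β := by rw [Fin.lt_def]; omega
  have hDC : D ≠ C := by
    rintro rfl
    rw [hCpair] at hρuD
    rcases Finset.mem_insert.1 hρuD with he | he
    · rw [he] at hαρu; exact lt_irrefl _ hαρu
    · rw [Finset.mem_singleton.1 he] at hρuβ; exact lt_irrefl _ hρuβ
  by_cases hρeq : ρu = ρv
  · have huv' : u = v := by
      apply Fin.ext
      have : ρu.val = ρv.val := congrArg Fin.val hρeq
      omega
    exact huv' ▸ ⟨h1, h2⟩
  · obtain ⟨hv3, hv4⟩ := fine_pair_nc hpart hnc hC hD (fun he => hDC he.symm)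
      hαC hβC hρuD hαρu hρuβ ρv hρvD
    have hv3' : α.val < ρv.val := hv3
    have hv4' : ρv.val < β.val := hv4
    have hav : a.val ≤ v.val := by omega
    have hvb : v.val ≤ b.val := by omega
    have hva : v ≠ a := fun he => hua (reqP_rel ⟨D, hD, hru, he ▸ hrv⟩)
    have hvb' : v ≠ b := fun he => hua (reqP_trans (reqP_rel ⟨D, hD, hru, he ▸ hrv⟩)
      (reqP_symm (reqP_rel ⟨C, hC, ha, hb⟩)))
    constructor
    · rw [Fin.lt_def]
      rcases Nat.lt_or_ge a.val v.val with h | h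
      · exact h
      · exact absurd (Fin.ext (le_antisymm h hav) : v = a) hva
    · rw [Fin.lt_def]
      rcases Nat.lt_or_ge v.val b.val with h | h
      · exact h
      · exact absurd (Fin.ext (le_antisymm hvb h) : v = b) hvb'

lemma blk (hpart : IsPartition P) (hnc : IsNoncrossing P)
    (hcard : ∀ B ∈ P, B.card = 1 ∨ B.card = 2)
    {C : Finset (Fin (2 * n))} (hC : C ∈ P) {a b : Fin n}
    (ha : lo a ∈ C ∨ hi a ∈ C) (hb : lo b ∈ C ∨ hi b ∈ C) (hab : a < b)
    {x y : Fin n} (hxy : reqP P x y) (hxa : ¬ reqP P x a) (hx1 : a < x) (hx2 : x < b) :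
    a < y ∧ y < b := by
  have main : ∀ x y : Fin n, Relation.EqvGen (relP P) x y →
      ((¬reqP P x a → a < x → x < b → a < y ∧ y < b) ∧
        (¬reqP P y a → a < y → y < b → a < x ∧ x < b)) := by
    intro x y hxy
    induction hxy with
    | rel u v h => exact ⟨fun p1 p2 p3 => blk_step hpart hnc hcard hC ha hb hab h p1 p2 p3,
        fun p1 p2 p3 => blk_step hpart hnc hcard hC ha hb hab (relP_symm h) p1 p2 p3⟩
    | refl u => exact ⟨fun _ p2 p3 => ⟨p2, p3⟩, fun _ p2 p3 => ⟨p2, p3⟩⟩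
    | symm u v h ih => exact ⟨ih.2, ih.1⟩
    | trans u v w h1 h2 ih1 ih2 =>
      constructor
      · intro hu q1 q2
        have hva : ¬ reqP P v a := fun hv => hu (reqP_trans h1 hv)
        obtain ⟨c1, c2⟩ := ih1.1 hu q1 q2
        exact ih2.1 hva c1 c2
      · intro hw q1 q2
        have hva : ¬ reqP P v a := fun hv => hw (reqP_trans (reqP_symm h2) hv)
        obtain ⟨c1, c2⟩ := ih2.2 hw q1 q2
        exact ih1.2 hva c1 c2
  exact (main x y hxy).1 hxa hx1 hx2

lemma classNC (hpart : IsPartition P) (hnc : IsNoncrossing P)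
    (hcard : ∀ B ∈ P, B.card = 1 ∨ B.card = 2) :
    ∀ {j l : Fin n}, reqP P j l → ∀ i k : Fin n, i < k → reqP P i k → ¬ reqP P i j →
    ¬((i < j ∧ j < k ∧ (l < i ∨ k < l)) ∨ (i < l ∧ l < k ∧ (j < i ∨ k < j))) := by
  intro j l hjl
  have hjl' : Relation.EqvGen (relP P) j l := hjl
  clear hjl
  induction hjl' with
  | rel j l h =>
    rintro i k hik hikr hij (⟨p1, p2, p3 | p3⟩ | ⟨p1, p2, p3 | p3⟩)
    · obtain ⟨D, hD, hrj, hrl⟩ := h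
      have hxa : ¬ reqP P i l := fun hh =>
        hij (reqP_trans hh (reqP_symm (reqP_rel ⟨D, hD, hrj, hrl⟩)))
      exact absurd (blk hpart hnc hcard hD hrl hrj (lt_trans p3 p1) hikr hxa p3 p1).2
        (lt_asymm p2)
    · obtain ⟨D, hD, hrj, hrl⟩ := h
      have hxa : ¬ reqP P k j := fun hh => hij (reqP_trans hikr hh)
      exact absurd (blk hpart hnc hcard hD hrj hrl (lt_trans p2 p3) (reqP_symm hikr)
        hxa p2 p3).1 (lt_asymm p1)
    · obtain ⟨D, hD, hrj, hrl⟩ := h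
      exact absurd (blk hpart hnc hcard hD hrj hrl (lt_trans p3 p1) hikr hij p3 p1).2
        (lt_asymm p2)
    · obtain ⟨D, hD, hrj, hrl⟩ := h
      have hxa : ¬ reqP P k l := fun hh =>
        hij (reqP_trans (reqP_trans hikr hh) (reqP_symm (reqP_rel ⟨D, hD, hrj, hrl⟩)))
      exact absurd (blk hpart hnc hcard hD hrl hrj (lt_trans p2 p3) (reqP_symm hikr)
        hxa p2 p3).1 (lt_asymm p1)
  | refl j =>
    rintro i k hik hikr hij (⟨p1, p2, p3 | p3⟩ | ⟨p1, p2, p3 | p3⟩) <;>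
      first
        | exact absurd p3 (lt_asymm p1)
        | exact absurd p3 (lt_asymm p2)
  | symm j l h ih =>
    intro i k hik hikr hij hpat
    have hij' : ¬ reqP P i j := fun hh => hij (reqP_trans hh h)
    exact ih i k hik hikr hij' (hpat.elim Or.inr Or.inl)
  | trans j m l h1 h2 ih1 ih2 =>
    rintro i k hik hikr hij hpat
    have hijm : ¬ reqP P i m := fun hh => hij (reqP_trans hh (reqP_symm h1))
    have hmi : m ≠ i := fun he => hij (reqP_symm (he ▸ h1))
    have hmk : m ≠ k := fun he => hij (reqP_trans hikr (reqP_symm (he ▸ h1)))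
    have htri : m < i ∨ (i < m ∧ m < k) ∨ k < m := by
      rcases lt_trichotomy m i with h | h | h
      · exact Or.inl h
      · exact absurd h hmi
      · rcases lt_trichotomy m k with h' | h' | h'
        · exact Or.inr (Or.inl ⟨h, h'⟩)
        · exact absurd h' hmk
        · exact Or.inr (Or.inr h')
    rcases hpat with ⟨p1, p2, p3⟩ | ⟨p1, p2, p3⟩
    · rcases htri with hm | hm | hm
      · exact ih1 i k hik hikr hij (Or.inl ⟨p1, p2, Or.inl hm⟩)
      · exact ih2 i k hik hikr hijm (Or.inl ⟨hm.1, hm.2, p3⟩)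
      · exact ih1 i k hik hikr hij (Or.inl ⟨p1, p2, Or.inr hm⟩)
    · rcases htri with hm | hm | hm
      · exact ih2 i k hik hikr hijm (Or.inr ⟨p1, p2, Or.inl hm⟩)
      · exact ih1 i k hik hikr hij (Or.inr ⟨hm.1, hm.2, p3⟩)
      · exact ih2 i k hik hikr hijm (Or.inr ⟨p1, p2, Or.inr hm⟩)

lemma psi_nc (hpart : IsPartition P) (hnc : IsNoncrossing P)
    (hcard : ∀ B ∈ P, B.card = 1 ∨ B.card = 2) : IsNoncrossing (psiPi P) := by
  rintro ⟨U, hU, V, hV, hUV, i, hiU, k, hkU, j, hjV, l, hlV, hij, hjk, hkl⟩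
  obtain ⟨u, -, rfl⟩ := Finset.mem_image.1 hU
  obtain ⟨v, -, rfl⟩ := Finset.mem_image.1 hV
  have hik : reqP P i k := reqP_trans (reqP_symm (mem_clsP.1 hiU)) (mem_clsP.1 hkU)
  have hjl : reqP P j l := reqP_trans (reqP_symm (mem_clsP.1 hjV)) (mem_clsP.1 hlV)
  have hnij : ¬ reqP P i j := by
    intro hh
    apply hUV
    calc clsP P u = clsP P i := clsP_eq (mem_clsP.1 hiU)
      _ = clsP P j := clsP_eq hh
      _ = clsP P v := (clsP_eq (mem_clsP.1 hjV)).symm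
  exact classNC hpart hnc hcard hjl i k (lt_trans hij hjk) hik hnij
    (Or.inl ⟨hij, hjk, Or.inr hkl⟩)

end PsiNC

section PsiOuter
variable {n : ℕ} {P : Finset (Finset (Fin (2 * n)))}

lemma singleCl (hout : ∀ B ∈ P, B.card = 1 → IsOuter P B) :
    ∀ {i j : Fin n}, reqP P i j → ∀ x : Fin n, ¬ reqP P i x →
    (({lo x} : Finset (Fin (2 * n))) ∈ P ∨ ({hi x} : Finset (Fin (2 * n))) ∈ P) →
    ¬(i < x ∧ x < j) ∧ ¬(j < x ∧ x < i) := by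
  intro i j hij
  have hij' : Relation.EqvGen (relP P) i j := hij
  clear hij
  induction hij' with
  | rel i j h =>
    intro x hnix hsing
    obtain ⟨D, hD, hri, hrj⟩ := h
    obtain ⟨ρi, hρiD, hi1, hi2⟩ := repSpec (P := P) hri
    obtain ⟨ρj, hρjD, hj1, hj2⟩ := repSpec (P := P) hrj
    have hρx : ∃ ρ : Fin (2 * n), ({ρ} : Finset (Fin (2 * n))) ∈ P ∧
        2 * x.val ≤ ρ.val ∧ ρ.val ≤ 2 * x.val + 1 := by
      rcases hsing with h | h
      · exact ⟨lo x, h, by simp [lo_val], by simp [lo_val]⟩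
      · exact ⟨hi x, h, by simp [hi_val], by simp [hi_val]⟩
    obtain ⟨ρ, hρP, hx1, hx2⟩ := hρx
    constructor
    · rintro ⟨q1, q2⟩
      have q1' : i.val < x.val := q1
      have q2' : x.val < j.val := q2
      exact sing_out hout hρP hD hρiD hρjD (by rw [Fin.lt_def]; omega)
        (by rw [Fin.lt_def]; omega)
    · rintro ⟨q1, q2⟩
      have q1' : j.val < x.val := q1
      have q2' : x.val < i.val := q2
      exact sing_out hout hρP hD hρjD hρiD (by rw [Fin.lt_def]; omega)
        (by rw [Fin.lt_def]; omega)
  | refl i =>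
    intro x _ _
    exact ⟨fun q => lt_asymm q.1 q.2, fun q => lt_asymm q.1 q.2⟩
  | symm i j h ih =>
    intro x hnjx hsing
    have hnix : ¬ reqP P i x := fun hh => hnjx (reqP_trans (reqP_symm h) hh)
    exact (ih x hnix hsing).symm
  | trans i m j h1 h2 ih1 ih2 =>
    intro x hnix hsing
    have hnmx : ¬ reqP P m x := fun hh => hnix (reqP_trans h1 hh)
    have hmx : m ≠ x := fun he => hnix (he ▸ h1)
    constructor
    · rintro ⟨q1, q2⟩
      rcases lt_or_gt_of_ne hmx with hm | hm
      · exact (ih2 x hnmx hsing).1 ⟨hm, q2⟩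
      · exact (ih1 x hnix hsing).1 ⟨q1, hm⟩
    · rintro ⟨q1, q2⟩
      rcases lt_or_gt_of_ne hmx with hm | hm
      · exact (ih1 x hnix hsing).2 ⟨hm, q2⟩
      · exact (ih2 x hnmx hsing).2 ⟨q1, hm⟩

lemma psi_outer (hout : ∀ B ∈ P, B.card = 1 → IsOuter P B) :
    ∀ B ∈ psiS P, IsOuter (psiPi P) B := by
  intro B hB
  obtain ⟨hBpi, z, hzB, hsing⟩ := Finset.mem_filter.1 hB
  rintro ⟨U, hU, hUB, i, hiU, j, hjU, hstrad⟩
  obtain ⟨u, -, rfl⟩ := Finset.mem_image.1 hU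
  obtain ⟨b0, -, rfl⟩ := Finset.mem_image.1 hBpi
  have hij : reqP P i j := reqP_trans (reqP_symm (mem_clsP.1 hiU)) (mem_clsP.1 hjU)
  have hniz : ¬ reqP P i z := by
    intro hh
    apply hUB
    calc clsP P u = clsP P i := clsP_eq (mem_clsP.1 hiU)
      _ = clsP P z := clsP_eq hh
      _ = clsP P b0 := (clsP_eq (mem_clsP.1 hzB)).symm
  exact (singleCl hout hij z hniz hsing).1 (hstrad z hzB)

lemma min_cls (hpart : IsPartition P) (hout : ∀ B ∈ P, B.card = 1 → IsOuter P B)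
    {x : Fin n} (hx : ({lo x} : Finset (Fin (2 * n))) ∈ P) {y : Fin n}
    (hxy : reqP P x y) : x ≤ y := by
  have step : ∀ u v : Fin n, relP P u v → x ≤ u → x ≤ v := by
    rintro u v ⟨D, hD, hru, hrv⟩ hxu
    by_contra hvx
    rw [not_le] at hvx
    obtain ⟨ρu, hρuD, hu1, hu2⟩ := repSpec (P := P) hru
    obtain ⟨ρv, hρvD, hv1, hv2⟩ := repSpec (P := P) hrv
    have hvx' : v.val < x.val := hvx
    have hxu' : x.val ≤ u.val := hxu
    by_cases hρu : ρu = lo x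
    · have hDx : D = {lo x} := part_disj hpart hD hx (hρu ▸ hρuD) (Finset.mem_singleton_self _)
      have : ρv = lo x := Finset.mem_singleton.1 (hDx ▸ hρvD)
      have : ρv.val = 2 * x.val := by rw [this, lo_val]
      omega
    · have hρune : ρu.val ≠ 2 * x.val := fun he => hρu (Fin.ext (by rw [lo_val]; exact he))
      exact sing_out hout hx hD hρvD hρuD (by rw [Fin.lt_def, lo_val]; omega)
        (by rw [Fin.lt_def, lo_val]; omega)
  have main : ∀ u v : Fin n, Relation.EqvGen (relP P) u v → (x ≤ u ↔ x ≤ v) := by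
    intro u v huv
    induction huv with
    | rel u v h => exact ⟨step u v h, step v u (relP_symm h)⟩
    | refl u => exact Iff.rfl
    | symm u v h ih => exact ih.symm
    | trans u v w h1 h2 ih1 ih2 => exact ih1.trans ih2
  exact (main x y hxy).1 le_rfl

lemma max_cls (hpart : IsPartition P) (hout : ∀ B ∈ P, B.card = 1 → IsOuter P B)
    {x : Fin n} (hx : ({hi x} : Finset (Fin (2 * n))) ∈ P) {y : Fin n}
    (hxy : reqP P x y) : y ≤ x := by
  have step : ∀ u v : Fin n, relP P u v → u ≤ x → v ≤ x := by
    rintro u v ⟨D, hD, hru, hrv⟩ hxu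
    by_contra hvx
    rw [not_le] at hvx
    obtain ⟨ρu, hρuD, hu1, hu2⟩ := repSpec (P := P) hru
    obtain ⟨ρv, hρvD, hv1, hv2⟩ := repSpec (P := P) hrv
    have hvx' : x.val < v.val := hvx
    have hxu' : u.val ≤ x.val := hxu
    by_cases hρu : ρu = hi x
    · have hDx : D = {hi x} := part_disj hpart hD hx (hρu ▸ hρuD) (Finset.mem_singleton_self _)
      have : ρv = hi x := Finset.mem_singleton.1 (hDx ▸ hρvD)
      have : ρv.val = 2 * x.val + 1 := by rw [this, hi_val]
      omega
    · have hρune : ρu.val ≠ 2 * x.val + 1 := fun he => hρu (Fin.ext (by rw [hi_val]; exact he))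
      exact sing_out hout hx hD hρuD hρvD (by rw [Fin.lt_def, hi_val]; omega)
        (by rw [Fin.lt_def, hi_val]; omega)
  have main : ∀ u v : Fin n, Relation.EqvGen (relP P) u v → (u ≤ x ↔ v ≤ x) := by
    intro u v huv
    induction huv with
    | rel u v h => exact ⟨step u v h, step v u (relP_symm h)⟩
    | refl u => exact Iff.rfl
    | symm u v h ih => exact ih.symm
    | trans u v w h1 h2 ih1 ih2 => exact ih1.trans ih2
  exact (main x y hxy).1 le_rfl

lemma wrap_cls (hpart : IsPartition P) (hnc : IsNoncrossing P)
    (hcard : ∀ B ∈ P, B.card = 1 ∨ B.card = 2) {C : Finset (Fin (2 * n))} (hC : C ∈ P)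
    {m M : Fin n} (hlo : lo m ∈ C) (hhi : hi M ∈ C) (hmM : m ≤ M) {y : Fin n}
    (hxy : reqP P m y) : m ≤ y ∧ y ≤ M := by
  have hmM' : m.val ≤ M.val := hmM
  have hCcard : C.card ≤ 2 := by rcases hcard C hC with h | h <;> omega
  have hCpair : C = {lo m, hi M} := pair_eq_of_subset lo_ne_hi
    (Finset.insert_subset_iff.2 ⟨hlo, Finset.singleton_subset_iff.2 hhi⟩) hCcard
  have step : ∀ u v : Fin n, relP P u v → m ≤ u ∧ u ≤ M → m ≤ v ∧ v ≤ M := by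
    rintro u v ⟨D, hD, hru, hrv⟩ ⟨hu1, hu2⟩
    obtain ⟨ρu, hρuD, hρu1, hρu2⟩ := repSpec (P := P) hru
    obtain ⟨ρv, hρvD, hρv1, hρv2⟩ := repSpec (P := P) hrv
    have hu1' : m.val ≤ u.val := hu1
    have hu2' : u.val ≤ M.val := hu2
    by_cases hDC : D = C
    · rw [hDC, hCpair] at hρvD
      rcases Finset.mem_insert.1 hρvD with he | he
      · have : ρv.val = 2 * m.val := by rw [he, lo_val]
        constructor <;> rw [Fin.le_def] <;> omega
      · have : ρv.val = 2 * M.val + 1 := by rw [Finset.mem_singleton.1 he, hi_val]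
        constructor <;> rw [Fin.le_def] <;> omega
    · have hρuC : ρu ∉ C := fun hh => hDC (part_disj hpart hD hC hρuD hh)
      have hne1 : ρu.val ≠ 2 * m.val := by
        intro he
        exact hρuC (by rw [show ρu = lo m from Fin.ext (by rw [lo_val]; exact he)]; exact hlo)
      have hne2 : ρu.val ≠ 2 * M.val + 1 := by
        intro he
        exact hρuC (by rw [show ρu = hi M from Fin.ext (by rw [hi_val]; exact he)]; exact hhi)
      obtain ⟨hq1, hq2⟩ := fine_pair_nc hpart hnc hC hD (fun he => hDC he.symm) hlo hhi hρuD
        (by rw [Fin.lt_def, lo_val]; omega) (by rw [Fin.lt_def, hi_val]; omega) ρv hρvD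
      have hq1' : 2 * m.val < ρv.val := by
        have := Fin.lt_def.1 hq1; rw [lo_val] at this; exact this
      have hq2' : ρv.val < 2 * M.val + 1 := by
        have := Fin.lt_def.1 hq2; rw [hi_val] at this; exact this
      constructor <;> rw [Fin.le_def] <;> omega
  have main : ∀ u v : Fin n, Relation.EqvGen (relP P) u v →
      ((m ≤ u ∧ u ≤ M) ↔ (m ≤ v ∧ v ≤ M)) := by
    intro u v huv
    induction huv with
    | rel u v h => exact ⟨step u v h, step v u (relP_symm h)⟩
    | refl u => exact Iff.rfl
    | symm u v h ih => exact ih.symm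
    | trans u v w h1 h2 ih1 ih2 => exact ih1.trans ih2
  exact (main m y hxy).1 ⟨le_rfl, hmM⟩

lemma link_cls (hpart : IsPartition P) (hnc : IsNoncrossing P)
    (hcard : ∀ B ∈ P, B.card = 1 ∨ B.card = 2) {C : Finset (Fin (2 * n))} (hC : C ∈ P)
    {a b : Fin n} (hhiC : hi a ∈ C) (hloC : lo b ∈ C) (hab : a < b) {x y : Fin n}
    (hxy : reqP P x y) (h1 : a < x) (h2 : x < b) : a < y ∧ y < b := by
  have hab' : a.val < b.val := hab
  have hCcard : C.card ≤ 2 := by rcases hcard C hC with h | h <;> omega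
  have hCpair : C = {hi a, lo b} := pair_eq_of_subset hi_ne_lo
    (Finset.insert_subset_iff.2 ⟨hhiC, Finset.singleton_subset_iff.2 hloC⟩) hCcard
  have step : ∀ u v : Fin n, relP P u v → a < u ∧ u < b → a < v ∧ v < b := by
    rintro u v ⟨D, hD, hru, hrv⟩ ⟨hu1, hu2⟩
    obtain ⟨ρu, hρuD, hρu1, hρu2⟩ := repSpec (P := P) hru
    obtain ⟨ρv, hρvD, hρv1, hρv2⟩ := repSpec (P := P) hrv
    have hu1' : a.val < u.val := hu1
    have hu2' : u.val < b.val := hu2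
    have hDC : D ≠ C := by
      rintro rfl
      rw [hCpair] at hρuD
      rcases Finset.mem_insert.1 hρuD with he | he
      · have : ρu.val = 2 * a.val + 1 := by rw [he, hi_val]
        omega
      · have : ρu.val = 2 * b.val := by rw [Finset.mem_singleton.1 he, lo_val]
        omega
    obtain ⟨hq1, hq2⟩ := fine_pair_nc hpart hnc hC hD (fun he => hDC he.symm) hhiC hloC hρuD
      (by rw [Fin.lt_def, hi_val]; omega) (by rw [Fin.lt_def, lo_val]; omega) ρv hρvD
    have hq1' : 2 * a.val + 1 < ρv.val := by
      have := Fin.lt_def.1 hq1; rw [hi_val] at this; exact this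
    have hq2' : ρv.val < 2 * b.val := by
      have := Fin.lt_def.1 hq2; rw [lo_val] at this; exact this
    constructor <;> rw [Fin.lt_def] <;> omega
  have main : ∀ u v : Fin n, Relation.EqvGen (relP P) u v →
      ((a < u ∧ u < b) ↔ (a < v ∧ v < b)) := by
    intro u v huv
    induction huv with
    | rel u v h => exact ⟨step u v h, step v u (relP_symm h)⟩
    | refl u => exact Iff.rfl
    | symm u v h ih => exact ih.symm
    | trans u v w h1 h2 ih1 ih2 => exact ih1.trans ih2
  obtain ⟨c1, c2⟩ := (main x y hxy).1 ⟨h1, h2⟩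
  exact ⟨c1, c2⟩

end PsiOuter

section Parity
variable {n : ℕ} {P : Finset (Finset (Fin (2 * n)))}

lemma pair_inter_empty {I : Finset (Fin (2 * n))} {τ κ : Fin (2 * n)} (h1 : τ ∉ I)
    (h2 : κ ∉ I) : ({τ, κ} : Finset (Fin (2 * n))) ∩ I = ∅ := by
  rw [Finset.eq_empty_iff_forall_notMem]
  intro z hz
  obtain ⟨hz1, hz2⟩ := Finset.mem_inter.1 hz
  rcases Finset.mem_insert.1 hz1 with rfl | hz1
  · exact h1 hz2
  · obtain rfl := Finset.mem_singleton.1 hz1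
    exact h2 hz2

lemma parity (hpart : IsPartition P) (hnc : IsNoncrossing P)
    (hcard : ∀ B ∈ P, B.card = 1 ∨ B.card = 2) (hout : ∀ B ∈ P, B.card = 1 → IsOuter P B)
    {C : Finset (Fin (2 * n))} (hC : C ∈ P) {u v : Fin (2 * n)} (hu : u ∈ C) (hv : v ∈ C)
    (huv : u < v) : u.val % 2 ≠ v.val % 2 := by
  intro hmod
  set I := Finset.Ioo u v with hIdef
  have hIcard : I.card = v.val - u.val - 1 := by
    rw [hIdef]; rw [Fin.card_Ioo]
  have hdisj : ∀ D1 ∈ P, ∀ D2 ∈ P, D1 ≠ D2 → Disjoint (D1 ∩ I) (D2 ∩ I) := by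
    intro D1 h1 D2 h2 hne
    rw [Finset.disjoint_left]
    rintro z hz1 hz2
    exact hne (part_disj hpart h1 h2 (Finset.mem_inter.1 hz1).1 (Finset.mem_inter.1 hz2).1)
  have hI : I = P.biUnion (fun D => D ∩ I) := by
    ext z
    simp only [Finset.mem_biUnion, Finset.mem_inter]
    constructor
    · intro hz
      obtain ⟨D, ⟨hD, hzD⟩, -⟩ := hpart.2 z
      exact ⟨D, hD, hzD, hz⟩
    · rintro ⟨D, hD, hzD, hz⟩
      exact hz
  have hsum : I.card = ∑ D ∈ P, (D ∩ I).card := by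
    conv_lhs => rw [hI]
    exact Finset.card_biUnion hdisj
  have heven : ∀ D ∈ P, (D ∩ I).card % 2 = 0 := by
    intro D hD
    rcases hcard D hD with h1 | h2
    · obtain ⟨ρ, rfl⟩ := Finset.card_eq_one.1 h1
      have hρI : ρ ∉ I := by
        intro hρ
        obtain ⟨hz1, hz2⟩ := Finset.mem_Ioo.1 hρ
        exact sing_out hout hD hC hu hv hz1 hz2
      have : ({ρ} : Finset (Fin (2 * n))) ∩ I = ∅ := by
        rw [Finset.eq_empty_iff_forall_notMem]
        intro z hz
        obtain ⟨hz1, hz2⟩ := Finset.mem_inter.1 hz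
        obtain rfl := Finset.mem_singleton.1 hz1
        exact hρI hz2
      rw [this]; simp
    · obtain ⟨ρ, σ, hρσ, rfl⟩ := Finset.card_eq_two.1 h2
      by_cases hDC : ({ρ, σ} : Finset (Fin (2 * n))) = C
      · have hCcard : C.card ≤ 2 := by rw [← hDC, Finset.card_pair hρσ]
        have hCuv : C = {u, v} := pair_eq_of_subset (ne_of_lt huv)
          (Finset.insert_subset_iff.2 ⟨hu, Finset.singleton_subset_iff.2 hv⟩) hCcard
        have huI : u ∉ I := by
          intro h; exact absurd (Finset.mem_Ioo.1 h).1 (lt_irrefl u)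
        have hvI : v ∉ I := by
          intro h; exact absurd (Finset.mem_Ioo.1 h).2 (lt_irrefl v)
        have : ({ρ, σ} : Finset (Fin (2 * n))) ∩ I = ∅ := by
          rw [hDC, hCuv]; exact pair_inter_empty huI hvI
        rw [this]; simp
      · have hCD : C ≠ ({ρ, σ} : Finset (Fin (2 * n))) := fun he => hDC he.symm
        by_cases hρI : ρ ∈ I
        · have hσI : σ ∈ I := by
            obtain ⟨hq1, hq2⟩ := Finset.mem_Ioo.1 hρI
            exact Finset.mem_Ioo.2 (fine_pair_nc hpart hnc hC hD hCD hu hv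
              (Finset.mem_insert_self ρ {σ}) hq1 hq2 σ (by simp))
          have : ({ρ, σ} : Finset (Fin (2 * n))) ∩ I = {ρ, σ} := by
            rw [Finset.inter_eq_left]
            exact Finset.insert_subset_iff.2 ⟨hρI, Finset.singleton_subset_iff.2 hσI⟩
          rw [this, Finset.card_pair hρσ]
        · have hσI : σ ∉ I := by
            intro hσ
            obtain ⟨hq1, hq2⟩ := Finset.mem_Ioo.1 hσ
            exact hρI (Finset.mem_Ioo.2 (fine_pair_nc hpart hnc hC hD hCD hu hv
              (by simp) hq1 hq2 ρ (Finset.mem_insert_self ρ {σ})))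
          have : ({ρ, σ} : Finset (Fin (2 * n))) ∩ I = ∅ := pair_inter_empty hρI hσI
          rw [this]; simp
  have hdvd : 2 ∣ ∑ D ∈ P, (D ∩ I).card :=
    Finset.dvd_sum (fun D hD => by have := heven D hD; omega)
  have huv' : u.val < v.val := huv
  rw [← hsum, hIcard] at hdvd
  omega

lemma block_shape (hpart : IsPartition P) (hnc : IsNoncrossing P)
    (hcard : ∀ B ∈ P, B.card = 1 ∨ B.card = 2) (hout : ∀ B ∈ P, B.card = 1 → IsOuter P B)
    {C : Finset (Fin (2 * n))} (hC : C ∈ P) :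
    (∃ x, C = {lo x}) ∨ (∃ x, C = {hi x}) ∨
      (∃ a b : Fin n, a < b ∧ C = {hi a, lo b}) ∨
      (∃ m M : Fin n, m ≤ M ∧ C = {lo m, hi M}) := by
  have aux : ∀ ρ σ : Fin (2 * n), ρ < σ → ({ρ, σ} : Finset (Fin (2 * n))) ∈ P →
      (∃ a b : Fin n, a < b ∧ ({ρ, σ} : Finset (Fin (2 * n))) = {hi a, lo b}) ∨
      (∃ m M : Fin n, m ≤ M ∧ ({ρ, σ} : Finset (Fin (2 * n))) = {lo m, hi M}) := by
    intro ρ σ hlt hmem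
    have hpar := parity hpart hnc hcard hout hmem (Finset.mem_insert_self ρ {σ})
      (by simp) hlt
    have hlt' : ρ.val < σ.val := hlt
    obtain ⟨x, hx | hx⟩ := fine_cases ρ <;> obtain ⟨y, hy | hy⟩ := fine_cases σ
    · exfalso
      have e1 : ρ.val = 2 * x.val := by rw [hx, lo_val]
      have e2 : σ.val = 2 * y.val := by rw [hy, lo_val]
      omega
    · refine Or.inr ⟨x, y, ?_, by rw [hx, hy]⟩
      have e1 : ρ.val = 2 * x.val := by rw [hx, lo_val]
      have e2 : σ.val = 2 * y.val + 1 := by rw [hy, hi_val]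
      rw [Fin.le_def]; omega
    · refine Or.inl ⟨x, y, ?_, by rw [hx, hy]⟩
      have e1 : ρ.val = 2 * x.val + 1 := by rw [hx, hi_val]
      have e2 : σ.val = 2 * y.val := by rw [hy, lo_val]
      rw [Fin.lt_def]; omega
    · exfalso
      have e1 : ρ.val = 2 * x.val + 1 := by rw [hx, hi_val]
      have e2 : σ.val = 2 * y.val + 1 := by rw [hy, hi_val]
      omega
  rcases hcard C hC with h1 | h2
  · obtain ⟨ρ, rfl⟩ := Finset.card_eq_one.1 h1
    obtain ⟨x, hx | hx⟩ := fine_cases ρ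
    · exact Or.inl ⟨x, by rw [hx]⟩
    · exact Or.inr (Or.inl ⟨x, by rw [hx]⟩)
  · obtain ⟨ρ, σ, hne, rfl⟩ := Finset.card_eq_two.1 h2
    rcases lt_or_gt_of_ne hne with hlt | hgt
    · rcases aux ρ σ hlt hC with h | h
      · exact Or.inr (Or.inr (Or.inl h))
      · exact Or.inr (Or.inr (Or.inr h))
    · rw [Finset.pair_comm] at hC ⊢
      rcases aux σ ρ hgt hC with h | h
      · exact Or.inr (Or.inr (Or.inl h))
      · exact Or.inr (Or.inr (Or.inr h))

end Parity

section Final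
variable {n : ℕ}

lemma part_eq_of_sub {m : ℕ} {P Q : Finset (Finset (Fin m))} (hP : IsPartition P)
    (hQ : IsPartition Q) (hsub : P ⊆ Q) : P = Q := by
  apply Finset.Subset.antisymm hsub
  intro C hC
  obtain ⟨y, hy⟩ := hQ.1 C hC
  obtain ⟨D, ⟨hD, hyD⟩, -⟩ := hP.2 y
  have hCD : C = D := part_disj hQ hC (hsub hD) hy hyD
  exact hCD ▸ hD

noncomputable def psiINC (Q : INC12 (2 * n)) : INC n :=
  ⟨(psiPi Q.1, psiS Q.1), psi_partition Q.1, psi_nc Q.2.1 Q.2.2.1 Q.2.2.2.1,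
    Finset.filter_subset _ _, psi_outer Q.2.2.2.2⟩

lemma psi_phi (Q : INC12 (2 * n)) : phiSet (psiINC Q) = Q.1 := by
  obtain ⟨hpart, hnc, hcard, hout⟩ := Q.2
  symm
  apply part_eq_of_sub hpart (phi_partition (psiINC Q))
  intro C hC
  apply mem_phiSet.2
  rcases block_shape hpart hnc hcard hout hC with ⟨x, rfl⟩ | ⟨x, rfl⟩ |
      ⟨a, b, hab, rfl⟩ | ⟨m, M, hmM, rfl⟩
  · refine ⟨clsP Q.1 x, Finset.mem_image.2 ⟨x, Finset.mem_univ x, rfl⟩,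
      Or.inr (Or.inr (Or.inl ⟨?_, x, mem_clsP.2 (reqP_refl _ x), ?_, rfl⟩))⟩
    · exact Finset.mem_filter.2 ⟨Finset.mem_image.2 ⟨x, Finset.mem_univ x, rfl⟩,
        x, mem_clsP.2 (reqP_refl _ x), Or.inl hC⟩
    · intro z hz
      exact min_cls hpart hout hC (mem_clsP.1 hz)
  · refine ⟨clsP Q.1 x, Finset.mem_image.2 ⟨x, Finset.mem_univ x, rfl⟩,
      Or.inr (Or.inr (Or.inr ⟨?_, x, mem_clsP.2 (reqP_refl _ x), ?_, rfl⟩))⟩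
    · exact Finset.mem_filter.2 ⟨Finset.mem_image.2 ⟨x, Finset.mem_univ x, rfl⟩,
        x, mem_clsP.2 (reqP_refl _ x), Or.inr hC⟩
    · intro z hz
      exact max_cls hpart hout hC (mem_clsP.1 hz)
  · have hhiC : hi a ∈ ({hi a, lo b} : Finset (Fin (2 * n))) := Finset.mem_insert_self _ _
    have hloC : lo b ∈ ({hi a, lo b} : Finset (Fin (2 * n))) := by simp
    have hrel : reqP Q.1 a b := reqP_rel ⟨_, hC, Or.inr hhiC, Or.inl hloC⟩
    refine ⟨clsP Q.1 a, Finset.mem_image.2 ⟨a, Finset.mem_univ a, rfl⟩,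
      Or.inl ⟨a, mem_clsP.2 (reqP_refl _ a), b, mem_clsP.2 hrel, hab, ?_, rfl⟩⟩
    rintro k hk ⟨hk1, hk2⟩
    exact absurd (link_cls hpart hnc hcard hC hhiC hloC hab
      (reqP_symm (mem_clsP.1 hk)) hk1 hk2).1 (lt_irrefl a)
  · have hloC : lo m ∈ ({lo m, hi M} : Finset (Fin (2 * n))) := Finset.mem_insert_self _ _
    have hhiC : hi M ∈ ({lo m, hi M} : Finset (Fin (2 * n))) := by simp
    have hrel : reqP Q.1 m M := reqP_rel ⟨_, hC, Or.inl hloC, Or.inr hhiC⟩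
    refine ⟨clsP Q.1 m, Finset.mem_image.2 ⟨m, Finset.mem_univ m, rfl⟩,
      Or.inr (Or.inl ⟨?_, m, mem_clsP.2 (reqP_refl _ m), M, mem_clsP.2 hrel,
        fun x hx => wrap_cls hpart hnc hcard hC hloC hhiC hmM (mem_clsP.1 hx), rfl⟩)⟩
    intro hS
    obtain ⟨-, z, hz, hzs⟩ := Finset.mem_filter.1 hS
    obtain ⟨hzb1, hzb2⟩ := wrap_cls hpart hnc hcard hC hloC hhiC hmM (mem_clsP.1 hz)
    rcases hzs with hzlo | hzhi
    · by_cases hzm : z = m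
      · subst hzm
        have heq := part_disj hpart hzlo hC (Finset.mem_singleton_self _) hloC
        have : hi M ∈ ({lo z} : Finset (Fin (2 * n))) := heq ▸ hhiC
        exact hi_ne_lo (Finset.mem_singleton.1 this)
      · have hzm' : m < z := lt_of_le_of_ne hzb1 (Ne.symm hzm)
        exact sing_out hout hzlo hC hloC hhiC (lo_lt_lo.2 hzm') (lo_lt_hi.2 hzb2)
    · by_cases hzM : z = M
      · subst hzM
        have heq := part_disj hpart hzhi hC (Finset.mem_singleton_self _) hhiC
        have : lo m ∈ ({hi z} : Finset (Fin (2 * n))) := heq ▸ hloC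
        exact lo_ne_hi (Finset.mem_singleton.1 this)
      · have hzM' : z < M := lt_of_le_of_ne hzb2 hzM
        exact sing_out hout hzhi hC hloC hhiC (lo_lt_hi.2 hzb1) (hi_lt_hi.2 hzM')

end Final

theorem stmt4 (n : ℕ) :
    ∃ Φ : INC n → INC12 (2 * n),
      (∀ p : INC n, ∀ C : Finset (Fin (2 * n)),
        C ∈ (Φ p).1 ↔ ∃ B ∈ p.1.1,
          ((∃ i ∈ B, ∃ j ∈ B, i < j ∧ (∀ k ∈ B, ¬(i < k ∧ k < j)) ∧ C = {hi i, lo j})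
            ∨ (B ∉ p.1.2 ∧ ∃ m ∈ B, ∃ M ∈ B, (∀ x ∈ B, m ≤ x ∧ x ≤ M) ∧ C = {lo m, hi M})
            ∨ (B ∈ p.1.2 ∧ ∃ m ∈ B, (∀ x ∈ B, m ≤ x) ∧ C = {lo m})
            ∨ (B ∈ p.1.2 ∧ ∃ M ∈ B, (∀ x ∈ B, x ≤ M) ∧ C = {hi M})))
      ∧ Function.Bijective Φ
      ∧ (∀ p q : INC n, IPle p.1 q.1 ↔ Refines (Φ p).1 (Φ q).1)
      ∧ (∀ p : INC n, ((Φ p).1.filter fun B => B.card = 1).card = 2 * p.1.2.card) := by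
  refine ⟨PhiFun, fun p C => mem_phiSet, ⟨?_, ?_⟩, fun p q => ⟨ord_fwd p q, ord_bwd p q⟩,
    fun p => phi_count p⟩
  · intro p q h
    have h' : phiSet p = phiSet q := congrArg Subtype.val h
    have r1 : Refines (phiSet p) (phiSet q) := by
      rw [h']; exact fun B hB => ⟨B, hB, subset_rfl⟩
    have r2 : Refines (phiSet q) (phiSet p) := by
      rw [h']; exact fun B hB => ⟨B, hB, subset_rfl⟩
    exact iple_antisymm (ord_bwd p q r1) (ord_bwd q p r2)
  · intro Q
    exact ⟨psiINC Q, Subtype.ext (psi_phi Q)⟩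
end
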